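/- arXiv:2412.19930 — 8 statements merged into one kernel-verified Lean document; each statement's English description precedes it below -/
import Mathlib

section
/- Let u = (u₁,…,u₉) be a solution of the SEIR-like system on [0,S) with 0 < S ≤ T. Then u₁(t) > 0 for every t ∈ [0,S). -/
/-!
The susceptible class obeys the scalar linear equation `u₁' = g(t) u₁` with the continuous
coefficient `g = -(β (c u₄ + u₅ + a u₆ + b u₇) + ν)`. If `u₁` had a zero at some time, uniqueness
for this Lipschitz equation, run backwards from that zero, would force `u₁ ≡ 0` up to time `0`,
contradicting `u₁(0) > 0`.
-/

open Set

/-- Right-hand side of the SEIR-like system. Components are indexed `0,…,8`,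
corresponding to `x₁,…,x₉` (S, V, E, I_A, I_M, I_S, I_C, R, D). -/
noncomputable def seirRHS (a b c sigma p : ℝ) (beta nu gA gM gS gC aS aC dD : ℝ → ℝ)
    (t : ℝ) (x : Fin 9 → ℝ) : Fin 9 → ℝ :=
  ![-(x 0) * beta t * (c * x 3 + x 4 + a * x 5 + b * x 6) - nu t * x 0,
    nu t * x 0,
    x 0 * beta t * (c * x 3 + x 4 + a * x 5 + b * x 6) - sigma * x 2,
    (1 - p) * sigma * x 2 - gA t * x 3,
    p * sigma * x 2 - (gM t + aS t) * x 4,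
    aS t * x 4 - (gS t + aC t) * x 5,
    aC t * x 5 - (gC t + dD t) * x 6,
    gA t * x 3 + gM t * x 4 + gS t * x 5 + gC t * x 6,
    dD t * x 6]

/-- `u` is a (C¹) solution of the SEIR-like system on the set `J` with initial value `x₀`. -/
noncomputable def IsSEIRSolOn (a b c sigma p : ℝ) (beta nu gA gM gS gC aS aC dD : ℝ → ℝ)
    (x₀ : Fin 9 → ℝ) (u : ℝ → Fin 9 → ℝ) (J : Set ℝ) : Prop :=
  u 0 = x₀ ∧
  ∀ i : Fin 9, ∀ t ∈ J,
    HasDerivWithinAt (fun s => u s i)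
      (seirRHS a b c sigma p beta nu gA gM gS gC aS aC dD t (u t) i) J t

theorem eqOn_zero_of_hasDerivWithinAt_mul_self {f g : ℝ → ℝ} {a b : ℝ}
    (hg : ContinuousOn g (Icc a b))
    (hf : ∀ t ∈ Icc a b, HasDerivWithinAt f (g t * f t) (Icc a b) t) (hb : f b = 0) :
    EqOn f 0 (Icc a b) := by
  obtain ⟨C, hC⟩ := isCompact_Icc.exists_bound_of_continuousOn hg
  have hlip : ∀ t ∈ Ioc a b, LipschitzOnWith C.toNNReal (g t * ·) univ := by
    refine fun t ht ↦ (LipschitzWith.of_dist_le_mul fun x y ↦ ?_).lipschitzOnWith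
    rw [Real.dist_eq, Real.dist_eq, ← mul_sub, abs_mul]
    exact mul_le_mul_of_nonneg_right ((hC t (Ioc_subset_Icc_self ht)).trans (le_max_left _ _))
      (abs_nonneg _)
  have hf' : ∀ t ∈ Ioc a b, HasDerivWithinAt f (g t * f t) (Iic t) t := fun t ht ↦
    (hf t (Ioc_subset_Icc_self ht)).mono_of_mem_nhdsWithin
      (Icc_mem_nhdsLE_of_mem ht)
  refine ODE_solution_unique_of_mem_Icc_left hlip (HasDerivWithinAt.continuousOn hf) hf'
    (fun _ _ ↦ mem_univ _) continuousOn_const (fun t _ ↦ ?_) (fun _ _ ↦ mem_univ _) hb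
  exact (mul_zero (g t)).symm ▸ hasDerivWithinAt_const t (Iic t) (0 : ℝ)

theorem pos_of_hasDerivWithinAt_mul_self {f g : ℝ → ℝ} {a b : ℝ}
    (hg : ContinuousOn g (Ico a b))
    (hf : ∀ t ∈ Ico a b, HasDerivWithinAt f (g t * f t) (Ico a b) t) (ha : 0 < f a) :
    ∀ t ∈ Ico a b, 0 < f t := by
  intro t ht
  by_contra! hft
  have hsub : Icc a t ⊆ Ico a b := Icc_subset_Ico_right ht.2
  have hfc : ContinuousOn f (Icc a t) := (HasDerivWithinAt.continuousOn hf).mono hsub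
  obtain ⟨t₁, ht₁, hft₁⟩ := intermediate_value_Icc' ht.1 hfc ⟨hft, ha.le⟩
  have hsub₁ : Icc a t₁ ⊆ Ico a b := (Icc_subset_Icc_right ht₁.2).trans hsub
  have hfa : f a = 0 := eqOn_zero_of_hasDerivWithinAt_mul_self (hg.mono hsub₁)
    (fun s hs ↦ (hf s (hsub₁ hs)).mono hsub₁) hft₁ (left_mem_Icc.2 ht₁.1)
  exact ha.ne' hfa

theorem seirRHS_zero (a b c sigma p : ℝ) (beta nu gA gM gS gC aS aC dD : ℝ → ℝ) (t : ℝ)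
    (x : Fin 9 → ℝ) :
    seirRHS a b c sigma p beta nu gA gM gS gC aS aC dD t x 0 =
      -(beta t * (c * x 3 + x 4 + a * x 5 + b * x 6) + nu t) * x 0 := by
  simp only [seirRHS, Matrix.cons_val_zero]
  ring

theorem IsSEIRSolOn.continuousOn {a b c sigma p : ℝ} {beta nu gA gM gS gC aS aC dD : ℝ → ℝ}
    {x₀ : Fin 9 → ℝ} {u : ℝ → Fin 9 → ℝ} {J : Set ℝ}
    (hu : IsSEIRSolOn a b c sigma p beta nu gA gM gS gC aS aC dD x₀ u J) (i : Fin 9) :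
    ContinuousOn (fun s ↦ u s i) J :=
  HasDerivWithinAt.continuousOn (hu.2 i)

theorem seir_u1_pos_general
    (T a b c sigma p : ℝ)
    (beta nu gA gM gS gC aS aC dD : ℝ → ℝ)
    (hcont : ∀ f ∈ [beta, nu, gA, gM, gS, gC, aS, aC, dD], ContinuousOn f (Icc 0 T))
    (x₀ : Fin 9 → ℝ) (hx₀1 : 0 < x₀ 0)
    (S : ℝ) (hST : S ≤ T)
    (u : ℝ → Fin 9 → ℝ)
    (hu : IsSEIRSolOn a b c sigma p beta nu gA gM gS gC aS aC dD x₀ u (Ico 0 S))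
 :
    ∀ t ∈ Ico (0:ℝ) S, 0 < u t 0 := by
  have hsub : Ico 0 S ⊆ Icc 0 T := Ico_subset_Icc_self.trans (Icc_subset_Icc_right hST)
  have hβ := (hcont beta (by simp)).mono hsub
  have hν := (hcont nu (by simp)).mono hsub
  have hg : ContinuousOn
      (fun t ↦ -(beta t * (c * u t 3 + u t 4 + a * u t 5 + b * u t 6) + nu t)) (Ico 0 S) := by
    have := hu.continuousOn
    fun_prop
  refine pos_of_hasDerivWithinAt_mul_self hg (fun t ht ↦ ?_) (by rwa [hu.1])
  simpa only [seirRHS_zero] using hu.2 0 t ht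

/-- any solution of the SEIR-like system on `[0,S)` has `u₁ > 0` there. -/
theorem seir_u1_pos
    (T a b c sigma p : ℝ) (hT : 0 < T) (ha : 0 < a) (hb : 0 < b) (hc : 0 < c)
    (hsigma : 0 < sigma) (hp0 : 0 < p) (hp1 : p < 1)
    (beta nu gA gM gS gC aS aC dD : ℝ → ℝ)
    (hcont : ∀ f ∈ [beta, nu, gA, gM, gS, gC, aS, aC, dD], ContinuousOn f (Icc 0 T))
    (hpos : ∀ f ∈ [beta, nu, gA, gM, gS, gC, aS, aC, dD], ∀ t ∈ Icc (0:ℝ) T, 0 < f t)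
    (x₀ : Fin 9 → ℝ) (hx₀ : ∀ i, 0 ≤ x₀ i) (hx₀1 : 0 < x₀ 0) (hx₀3 : 0 < x₀ 2)
    (S : ℝ) (hS : 0 < S) (hST : S ≤ T)
    (u : ℝ → Fin 9 → ℝ)
    (hu : IsSEIRSolOn a b c sigma p beta nu gA gM gS gC aS aC dD x₀ u (Ico 0 S))
 :
    ∀ t ∈ Ico (0:ℝ) S, 0 < u t 0 :=
  seir_u1_pos_general T a b c sigma p beta nu gA gM gS gC aS aC dD hcont x₀ hx₀1 S hST u hu
end

section
/- Let u = (u₁,…,u₉) be a solution of the SEIR-like system on [0,S) with 0 < S ≤ T, let i ∈ {4,5,6,7}, and let s ∈ (0,S] be such that u₃(t) > 0 for all t ∈ [0,s). If there exists s₀ ∈ [0,s) with u_i(s₀) > 0, then u_i(t) > 0 for all t ∈ [s₀, s). -/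
open Set Filter MeasureTheory

lemma seir_aux (T S s : ℝ) (hST : S ≤ T) (h0T : (0:ℝ) ≤ T) (hs : s ≤ S)
    (g f v : ℝ → ℝ) (hg : ContinuousOn g (Icc 0 T))
    (hv : ∀ t ∈ Ico (0:ℝ) S, HasDerivWithinAt v (f t - g t * v t) (Ico 0 S) t)
    (hf : ∀ t ∈ Ico (0:ℝ) s, 0 ≤ f t)
    (s₀ : ℝ) (hs₀ : s₀ ∈ Ico (0:ℝ) s) :
    (0 < v s₀ → ∀ t ∈ Ico s₀ s, 0 < v t) ∧ (0 ≤ v s₀ → ∀ t ∈ Ico s₀ s, 0 ≤ v t) := by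
  set gc : ℝ → ℝ := IccExtend h0T ((Icc 0 T).restrict g) with hgc_def
  have hgc : Continuous gc := (continuousOn_iff_continuous_restrict.mp hg).Icc_extend'
  have hgeq : ∀ t ∈ Icc (0:ℝ) T, gc t = g t := fun t ht => IccExtend_of_mem h0T _ ht
  set G : ℝ → ℝ := fun t => ∫ x in (0:ℝ)..t, gc x with hG_def
  have hG : ∀ t, HasDerivAt G (gc t) t := fun t =>
    (hgc.integral_hasStrictDerivAt 0 t).hasDerivAt
  set w : ℝ → ℝ := fun t => v t * Real.exp (G t) with hw_def
  have hw : ∀ t ∈ Ico (0:ℝ) S, HasDerivWithinAt w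
      ((f t - g t * v t) * Real.exp (G t) + v t * (Real.exp (G t) * gc t)) (Ico 0 S) t := by
    intro t ht
    exact (hv t ht).mul ((hG t).exp.hasDerivWithinAt)
  -- key monotonicity
  have key : ∀ t ∈ Ico s₀ s, w s₀ ≤ w t := by
    intro t ht
    rcases eq_or_lt_of_le ht.1 with h | h
    · rw [h]
    have hsubIcoS : Icc s₀ t ⊆ Ico 0 S := fun x hx =>
      ⟨le_trans hs₀.1 hx.1, lt_of_le_of_lt hx.2 (lt_of_lt_of_le ht.2 hs)⟩
    have hsubIcos : Icc s₀ t ⊆ Ico 0 s := fun x hx =>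
      ⟨le_trans hs₀.1 hx.1, lt_of_le_of_lt hx.2 ht.2⟩
    have hmono : MonotoneOn w (Icc s₀ t) := by
      apply monotoneOn_of_hasDerivWithinAt_nonneg (convex_Icc s₀ t)
        (f' := fun x => f x * Real.exp (G x))
      · intro x hx
        exact ((hw x (hsubIcoS hx)).continuousWithinAt).mono hsubIcoS
      · intro x hx
        rw [interior_Icc] at hx
        have hx' : x ∈ Icc s₀ t := Ioo_subset_Icc_self hx
        have hxT : x ∈ Icc (0:ℝ) T := ⟨(hsubIcoS hx').1,
          le_trans (le_of_lt (hsubIcoS hx').2) hST⟩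
        have h2 := (hw x (hsubIcoS hx')).mono (Ioo_subset_Icc_self.trans hsubIcoS)
        rw [interior_Icc]
        refine h2.congr_deriv ?_
        rw [hgeq x hxT]; ring
      · intro x hx
        rw [interior_Icc] at hx
        exact mul_nonneg (hf x (hsubIcos (Ioo_subset_Icc_self hx))) (Real.exp_pos _).le
    exact hmono ⟨le_refl s₀, h.le⟩ ⟨h.le, le_refl t⟩ h.le
  constructor
  · intro hpos t ht
    have h1 : 0 < w s₀ := mul_pos hpos (Real.exp_pos _)
    have h2 : 0 < v t * Real.exp (G t) := lt_of_lt_of_le h1 (key t ht)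
    nlinarith [Real.exp_pos (G t)]
  · intro hpos t ht
    have h1 : 0 ≤ w s₀ := mul_nonneg hpos (Real.exp_pos _).le
    have h2 : 0 ≤ v t * Real.exp (G t) := le_trans h1 (key t ht)
    nlinarith [Real.exp_pos (G t)]

/-- if `u₃ > 0` on `[0,s)` and `u_i(s₀) > 0` for some `s₀ ∈ [0,s)` with
`i ∈ {4,5,6,7}` (indices `3,4,5,6`), then `u_i > 0` on `[s₀,s)`. -/
theorem seir_infectious_stay_pos
    (T a b c sigma p : ℝ) (hT : 0 < T) (ha : 0 < a) (hb : 0 < b) (hc : 0 < c)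
    (hsigma : 0 < sigma) (hp0 : 0 < p) (hp1 : p < 1)
    (beta nu gA gM gS gC aS aC dD : ℝ → ℝ)
    (hcont : ∀ f ∈ [beta, nu, gA, gM, gS, gC, aS, aC, dD], ContinuousOn f (Icc 0 T))
    (hpos : ∀ f ∈ [beta, nu, gA, gM, gS, gC, aS, aC, dD], ∀ t ∈ Icc (0:ℝ) T, 0 < f t)
    (x₀ : Fin 9 → ℝ) (hx₀ : ∀ i, 0 ≤ x₀ i) (hx₀1 : 0 < x₀ 0) (hx₀3 : 0 < x₀ 2)
    (S : ℝ) (hS : 0 < S) (hST : S ≤ T)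
    (u : ℝ → Fin 9 → ℝ)
    (hu : IsSEIRSolOn a b c sigma p beta nu gA gM gS gC aS aC dD x₀ u (Ico 0 S))
    (i : Fin 9) (hi : i ∈ ({3, 4, 5, 6} : Set (Fin 9)))
    (s : ℝ) (hs : s ∈ Ioc 0 S) (hu3 : ∀ t ∈ Ico (0:ℝ) s, 0 < u t 2)
    (s₀ : ℝ) (hs₀ : s₀ ∈ Ico (0:ℝ) s) (hpos₀ : 0 < u s₀ i) :
    ∀ t ∈ Ico s₀ s, 0 < u t i := by
  obtain ⟨hu0, hud⟩ := hu
  have h0T : (0:ℝ) ≤ T := hT.le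
  have hsS : s ≤ S := hs.2
  have hmemT : ∀ t ∈ Ico (0:ℝ) s, t ∈ Icc (0:ℝ) T := fun t ht =>
    ⟨ht.1, le_trans (le_of_lt (lt_of_lt_of_le ht.2 hsS)) hST⟩
  have h0s : (0:ℝ) ∈ Ico (0:ℝ) s := ⟨le_refl 0, hs.1⟩
  -- derivative forms
  have hd3 : ∀ t ∈ Ico (0:ℝ) S, HasDerivWithinAt (fun τ => u τ 3)
      ((1 - p) * sigma * u t 2 - gA t * u t 3) (Ico 0 S) t := by
    intro t ht; simpa [seirRHS] using hud 3 t ht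
  have hd4 : ∀ t ∈ Ico (0:ℝ) S, HasDerivWithinAt (fun τ => u τ 4)
      (p * sigma * u t 2 - (gM t + aS t) * u t 4) (Ico 0 S) t := by
    intro t ht; simpa [seirRHS] using hud 4 t ht
  have hd5 : ∀ t ∈ Ico (0:ℝ) S, HasDerivWithinAt (fun τ => u τ 5)
      (aS t * u t 4 - (gS t + aC t) * u t 5) (Ico 0 S) t := by
    intro t ht; simpa [seirRHS] using hud 5 t ht
  have hd6 : ∀ t ∈ Ico (0:ℝ) S, HasDerivWithinAt (fun τ => u τ 6)
      (aC t * u t 5 - (gC t + dD t) * u t 6) (Ico 0 S) t := by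
    intro t ht; simpa [seirRHS] using hud 6 t ht
  have hf3 : ∀ t ∈ Ico (0:ℝ) s, 0 ≤ (1 - p) * sigma * u t 2 := fun t ht =>
    mul_nonneg (mul_nonneg (by linarith) hsigma.le) (hu3 t ht).le
  have hf4 : ∀ t ∈ Ico (0:ℝ) s, 0 ≤ p * sigma * u t 2 := fun t ht =>
    mul_nonneg (mul_nonneg hp0.le hsigma.le) (hu3 t ht).le
  have aux3 := seir_aux T S s hST h0T hsS gA (fun t => (1 - p) * sigma * u t 2)
    (fun t => u t 3) (hcont gA (by simp)) hd3 hf3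
  have aux4 := seir_aux T S s hST h0T hsS (fun t => gM t + aS t)
    (fun t => p * sigma * u t 2) (fun t => u t 4)
    ((hcont gM (by simp)).add (hcont aS (by simp))) hd4 hf4
  have hnn4 : ∀ t ∈ Ico (0:ℝ) s, 0 ≤ u t 4 :=
    (aux4 0 h0s).2 (by show 0 ≤ u 0 4; rw [hu0]; exact hx₀ 4)
  have hf5 : ∀ t ∈ Ico (0:ℝ) s, 0 ≤ aS t * u t 4 := fun t ht =>
    mul_nonneg (hpos aS (by simp) t (hmemT t ht)).le (hnn4 t ht)
  have aux5 := seir_aux T S s hST h0T hsS (fun t => gS t + aC t)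
    (fun t => aS t * u t 4) (fun t => u t 5)
    ((hcont gS (by simp)).add (hcont aC (by simp))) hd5 hf5
  have hnn5 : ∀ t ∈ Ico (0:ℝ) s, 0 ≤ u t 5 :=
    (aux5 0 h0s).2 (by show 0 ≤ u 0 5; rw [hu0]; exact hx₀ 5)
  have hf6 : ∀ t ∈ Ico (0:ℝ) s, 0 ≤ aC t * u t 5 := fun t ht =>
    mul_nonneg (hpos aC (by simp) t (hmemT t ht)).le (hnn5 t ht)
  have aux6 := seir_aux T S s hST h0T hsS (fun t => gC t + dD t)
    (fun t => aC t * u t 5) (fun t => u t 6)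
    ((hcont gC (by simp)).add (hcont dD (by simp))) hd6 hf6
  simp only [Set.mem_insert_iff, Set.mem_singleton_iff] at hi
  rcases hi with h | h | h | h <;> subst h
  · exact (aux3 s₀ hs₀).1 hpos₀
  · exact (aux4 s₀ hs₀).1 hpos₀
  · exact (aux5 s₀ hs₀).1 hpos₀
  · exact (aux6 s₀ hs₀).1 hpos₀
end

section
/- Let u = (u₁,…,u₉) be a solution of the SEIR-like system on [0,S) with 0 < S ≤ T. (i) If u_i(0) = 0 for i ∈ {4,5}, then there exists ε > 0 such that u_i(t) > 0 for all t ∈ (0,ε). (ii) If u_i(0) = 0 for i ∈ {6,7}, then there exists ε > 0 such that u_i(t) ≥ 0 for all t ∈ (0,ε). -/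
/-!
(i) If `I_A(0) = 0` (resp. `I_M(0) = 0`), the equation gives the right derivative
`(1 - p) σ E(0)` (resp. `p σ E(0)`) at `0`, which is positive because `E(0) > 0`.

(ii) By continuity `E > 0` on some `[0, ε]`. Each of `I_M, I_S, I_C` satisfies a linear equation
`f' = g - k f` with positive rate `k` and a source `g` that is `p σ E`, `α_S I_M`, `α_C I_S`
respectively; so, going down the chain, each source is nonnegative on `[0, ε]` and a barrier
argument keeps `f ≥ 0` there.
-/

open Set Filter MeasureTheory

open Topology

theorem HasDerivWithinAt.eventually_lt_of_deriv_pos {f : ℝ → ℝ} {f' a : ℝ}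
    (hf : HasDerivWithinAt f f' (Ici a) a) (hf' : 0 < f') : ∀ᶠ t in 𝓝[>] a, f a < f t := by
  have hslope := (hasDerivWithinAt_iff_tendsto_slope' self_notMem_Ioi).mp hf.Ioi_of_Ici
  filter_upwards [hslope.eventually_const_lt hf', self_mem_nhdsWithin] with t hpos hat
  exact (slope_pos_iff hat).mp hpos

/-- `f` cannot cross below `-ε` for any `ε > 0`, since at such a crossing `f < 0`, so `f` would
be increasing. -/
theorem image_nonneg_of_deriv_right_pos_of_neg {f f' : ℝ → ℝ} {a b : ℝ}
    (hf : ContinuousOn f (Icc a b)) (hf' : ∀ x ∈ Ico a b, HasDerivWithinAt f (f' x) (Ici x) x)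
    (ha : 0 ≤ f a) (bound : ∀ x ∈ Ico a b, f x < 0 → 0 < f' x) :
    ∀ ⦃x⦄, x ∈ Icc a b → 0 ≤ f x := by
  intro x hx
  refine le_of_forall_pos_le_add fun ε hε => ?_
  have hbarrier := image_le_of_deriv_right_lt_deriv_boundary' hf.neg (fun y hy => (hf' y hy).neg)
    (B := fun _ => ε) (show -f a ≤ ε by linarith) continuousOn_const
    (fun _ _ => hasDerivWithinAt_const _ _ _)
    (fun y hy hy_eq => neg_neg_iff_pos.mpr (bound y hy (by linarith [show -f y = ε from hy_eq])))
  linarith [show -f x ≤ ε from hbarrier hx]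

theorem image_nonneg_of_deriv_right_eq_sub_mul {f g k : ℝ → ℝ} {a b : ℝ}
    (hf : ContinuousOn f (Icc a b))
    (hf' : ∀ x ∈ Ico a b, HasDerivWithinAt f (g x - k x * f x) (Ici x) x)
    (ha : 0 ≤ f a) (hg : ∀ x ∈ Ico a b, 0 ≤ g x) (hk : ∀ x ∈ Ico a b, 0 < k x) :
    ∀ ⦃x⦄, x ∈ Icc a b → 0 ≤ f x :=
  image_nonneg_of_deriv_right_pos_of_neg hf hf' ha fun x hx hneg => by
    nlinarith [hg x hx, mul_neg_of_pos_of_neg (hk x hx) hneg]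

theorem exists_Icc_subset_of_mem_nhdsGE {s : Set ℝ} {a : ℝ} (hs : s ∈ 𝓝[≥] a) :
    ∃ b > a, Icc a b ⊆ s := by
  obtain ⟨c, hac : a < c, hcs⟩ := mem_nhdsGE_iff_exists_Ico_subset.mp hs
  exact ⟨(a + c) / 2, by linarith, (Icc_subset_Ico_right (by linarith)).trans hcs⟩

namespace IsSEIRSolOn

variable {a b c sigma p : ℝ} {beta nu gA gM gS gC aS aC dD : ℝ → ℝ} {x₀ : Fin 9 → ℝ}
  {u : ℝ → Fin 9 → ℝ} {S : ℝ}

theorem hasDerivWithinAt_Ici (hu : IsSEIRSolOn a b c sigma p beta nu gA gM gS gC aS aC dD x₀ u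
    (Ico 0 S)) (i : Fin 9) {t : ℝ} (ht : t ∈ Ico 0 S) :
    HasDerivWithinAt (fun s => u s i)
      (seirRHS a b c sigma p beta nu gA gM gS gC aS aC dD t (u t) i) (Ici t) t :=
  (hu.2 i t ht).mono_of_mem_nhdsWithin (Ico_mem_nhdsGE_of_mem ht)

theorem exists_forall_Ioo_pos_of_eq_zero
    (hu : IsSEIRSolOn a b c sigma p beta nu gA gM gS gC aS aC dD x₀ u (Ico 0 S)) (hS : 0 < S)
    {i : Fin 9} (hi : u 0 i = 0)
    (hrhs : 0 < seirRHS a b c sigma p beta nu gA gM gS gC aS aC dD 0 x₀ i) :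
    ∃ ε > 0, ∀ t ∈ Ioo 0 ε, 0 < u t i := by
  have hderiv := hu.hasDerivWithinAt_Ici i ⟨le_rfl, hS⟩
  rw [hu.1] at hderiv
  obtain ⟨ε, hε, hpos⟩ :=
    mem_nhdsGT_iff_exists_Ioo_subset.mp (hderiv.eventually_lt_of_deriv_pos hrhs)
  exact ⟨ε, hε, fun t ht => hi ▸ hpos ht⟩

theorem exists_forall_Icc_nonneg
    (hu : IsSEIRSolOn a b c sigma p beta nu gA gM gS gC aS aC dD x₀ u (Ico 0 S)) (hS : 0 < S)
    (hpσ : 0 ≤ p * sigma) (hgM : ∀ t ∈ Ico 0 S, 0 < gM t) (hgS : ∀ t ∈ Ico 0 S, 0 < gS t)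
    (hgC : ∀ t ∈ Ico 0 S, 0 < gC t) (haS : ∀ t ∈ Ico 0 S, 0 < aS t)
    (haC : ∀ t ∈ Ico 0 S, 0 < aC t) (hdD : ∀ t ∈ Ico 0 S, 0 < dD t)
    (hE : 0 < x₀ 2) (hIM : 0 ≤ x₀ 4) (hIS : 0 ≤ x₀ 5) (hIC : 0 ≤ x₀ 6) :
    ∃ ε > 0, ∀ t ∈ Icc 0 ε, 0 ≤ u t 4 ∧ 0 ≤ u t 5 ∧ 0 ≤ u t 6 := by
  have hE_near : ∀ᶠ t in 𝓝[≥] 0, 0 < u t 2 ∧ t < S := by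
    have hcont : Tendsto (fun t => u t 2) (𝓝[≥] 0) (𝓝 (x₀ 2)) := by
      rw [← nhdsWithin_Ico_eq_nhdsGE hS, ← hu.1]
      exact (hu.2 2 0 ⟨le_rfl, hS⟩).continuousWithinAt
    filter_upwards [hcont.eventually_const_lt hE, Ico_mem_nhdsGE hS] with t hpos ht
    exact ⟨hpos, ht.2⟩
  obtain ⟨ε, hε, hsub⟩ := exists_Icc_subset_of_mem_nhdsGE hE_near
  have hmem {t : ℝ} (ht : t ∈ Ico 0 ε) : t ∈ Ico 0 S := ⟨ht.1, (hsub (Ico_subset_Icc_self ht)).2⟩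
  have hcont (i : Fin 9) : ContinuousOn (fun s => u s i) (Icc 0 ε) := fun t ht =>
    (hu.2 i t ⟨ht.1, (hsub ht).2⟩).continuousWithinAt.mono fun s hs => ⟨hs.1, (hsub hs).2⟩
  have hderiv (i : Fin 9) (t : ℝ) (ht : t ∈ Ico 0 ε) := hu.hasDerivWithinAt_Ici i (hmem ht)
  have hIM_nonneg := image_nonneg_of_deriv_right_eq_sub_mul (hcont 4) (hderiv 4) (hu.1 ▸ hIM)
    (fun t ht => mul_nonneg hpσ (hsub (Ico_subset_Icc_self ht)).1.le)
    (fun t ht => add_pos (hgM t (hmem ht)) (haS t (hmem ht)))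
  have hIS_nonneg := image_nonneg_of_deriv_right_eq_sub_mul (hcont 5) (hderiv 5) (hu.1 ▸ hIS)
    (fun t ht => mul_nonneg (haS t (hmem ht)).le (hIM_nonneg (Ico_subset_Icc_self ht)))
    (fun t ht => add_pos (hgS t (hmem ht)) (haC t (hmem ht)))
  have hIC_nonneg := image_nonneg_of_deriv_right_eq_sub_mul (hcont 6) (hderiv 6) (hu.1 ▸ hIC)
    (fun t ht => mul_nonneg (haC t (hmem ht)).le (hIS_nonneg (Ico_subset_Icc_self ht)))
    (fun t ht => add_pos (hgC t (hmem ht)) (hdD t (hmem ht)))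
  exact ⟨ε, hε, fun t ht => ⟨hIM_nonneg ht, hIS_nonneg ht, hIC_nonneg ht⟩⟩

end IsSEIRSolOn

theorem seir_initial_zero_becomes_nonneg_general
    (T a b c sigma p : ℝ) (hsigma : 0 < sigma) (hp0 : 0 < p) (hp1 : p < 1)
    (beta nu gA gM gS gC aS aC dD : ℝ → ℝ)
    (hpos : ∀ f ∈ [beta, nu, gA, gM, gS, gC, aS, aC, dD], ∀ t ∈ Icc (0:ℝ) T, 0 < f t)
    (x₀ : Fin 9 → ℝ) (hx₀ : ∀ i, 0 ≤ x₀ i) (hx₀3 : 0 < x₀ 2)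
    (S : ℝ) (hS : 0 < S) (hST : S ≤ T)
    (u : ℝ → Fin 9 → ℝ)
    (hu : IsSEIRSolOn a b c sigma p beta nu gA gM gS gC aS aC dD x₀ u (Ico 0 S))
 :
    (∀ i ∈ ({3, 4} : Set (Fin 9)), u 0 i = 0 →
      ∃ ε > 0, ∀ t ∈ Ioo (0:ℝ) ε, 0 < u t i) ∧
    (∀ i ∈ ({5, 6} : Set (Fin 9)), u 0 i = 0 →
      ∃ ε > 0, ∀ t ∈ Ioo (0:ℝ) ε, 0 ≤ u t i) := by
  have hrate {f : ℝ → ℝ} (hf : f ∈ [beta, nu, gA, gM, gS, gC, aS, aC, dD]) :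
      ∀ t ∈ Ico 0 S, 0 < f t := fun t ht => hpos f hf t ⟨ht.1, (ht.2.trans_le hST).le⟩
  refine ⟨fun i hi hi0 => hu.exists_forall_Ioo_pos_of_eq_zero hS hi0 ?_, fun i hi _ => ?_⟩
  · have hx₀i : x₀ i = 0 := hu.1 ▸ hi0
    rcases hi with rfl | rfl
    · simpa [seirRHS, hx₀i] using mul_pos (mul_pos (sub_pos.mpr hp1) hsigma) hx₀3
    · simpa [seirRHS, hx₀i] using mul_pos (mul_pos hp0 hsigma) hx₀3
  · obtain ⟨ε, hε, hnonneg⟩ := hu.exists_forall_Icc_nonneg hS (mul_pos hp0 hsigma).le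
      (hrate (by simp)) (hrate (by simp)) (hrate (by simp)) (hrate (by simp)) (hrate (by simp))
      (hrate (by simp)) hx₀3 (hx₀ 4) (hx₀ 5) (hx₀ 6)
    refine ⟨ε, hε, fun t ht => ?_⟩
    rcases hi with rfl | rfl
    exacts [(hnonneg t (Ioo_subset_Icc_self ht)).2.1, (hnonneg t (Ioo_subset_Icc_self ht)).2.2]

/-- (i) if `u_i(0) = 0` for `i ∈ {4,5}` (indices `3,4`), then `u_i > 0` on some
`(0,ε)`; (ii) if `u_i(0) = 0` for `i ∈ {6,7}` (indices `5,6`), then `u_i ≥ 0` on some `(0,ε)`. -/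
theorem seir_initial_zero_becomes_nonneg
    (T a b c sigma p : ℝ) (hT : 0 < T) (ha : 0 < a) (hb : 0 < b) (hc : 0 < c)
    (hsigma : 0 < sigma) (hp0 : 0 < p) (hp1 : p < 1)
    (beta nu gA gM gS gC aS aC dD : ℝ → ℝ)
    (hcont : ∀ f ∈ [beta, nu, gA, gM, gS, gC, aS, aC, dD], ContinuousOn f (Icc 0 T))
    (hpos : ∀ f ∈ [beta, nu, gA, gM, gS, gC, aS, aC, dD], ∀ t ∈ Icc (0:ℝ) T, 0 < f t)
    (x₀ : Fin 9 → ℝ) (hx₀ : ∀ i, 0 ≤ x₀ i) (hx₀1 : 0 < x₀ 0) (hx₀3 : 0 < x₀ 2)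
    (S : ℝ) (hS : 0 < S) (hST : S ≤ T)
    (u : ℝ → Fin 9 → ℝ)
    (hu : IsSEIRSolOn a b c sigma p beta nu gA gM gS gC aS aC dD x₀ u (Ico 0 S))
 :
    (∀ i ∈ ({3, 4} : Set (Fin 9)), u 0 i = 0 →
      ∃ ε > 0, ∀ t ∈ Ioo (0:ℝ) ε, 0 < u t i) ∧
    (∀ i ∈ ({5, 6} : Set (Fin 9)), u 0 i = 0 →
      ∃ ε > 0, ∀ t ∈ Ioo (0:ℝ) ε, 0 ≤ u t i) :=
  seir_initial_zero_becomes_nonneg_general T a b c sigma p hsigma hp0 hp1 beta nu gA gM gS gC aS aC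
    dD hpos x₀ hx₀ hx₀3 S hS hST u hu
end

section
/- Let u = (u₁,…,u₉) be a solution of the SEIR-like system on [0,S) with 0 < S ≤ T, and let s ∈ (0,S] be such that u₃(t) > 0 for all t ∈ [0,s). Then for each i ∈ {4,5,6,7}, u_i(t) ≥ 0 for all t ∈ [0,s). -/
open Set Filter MeasureTheory

lemma seir_key (s : ℝ) (g h f : ℝ → ℝ) (hg : Continuous g)
    (hf : ContinuousOn f (Ico 0 s))
    (hd : ∀ t ∈ Ioo (0:ℝ) s, HasDerivAt f (h t - g t * f t) t)
    (hh : ∀ t ∈ Ioo (0:ℝ) s, 0 ≤ h t)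
    (hf0 : 0 ≤ f 0) : ∀ t ∈ Ico (0:ℝ) s, 0 ≤ f t := by
  intro t ht
  set G : ℝ → ℝ := fun τ => ∫ x in (0:ℝ)..τ, g x with hGdef
  have hGd : ∀ τ : ℝ, HasDerivAt G (g τ) τ := fun τ =>
    intervalIntegral.integral_hasDerivAt_right (hg.intervalIntegrable _ _)
      (hg.stronglyMeasurableAtFilter _ _) hg.continuousAt
  have hGc : Continuous G :=
    Differentiable.continuous (fun τ => (hGd τ).differentiableAt)
  set w : ℝ → ℝ := fun τ => f τ * Real.exp (G τ) with hwdef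
  have hwd : ∀ τ ∈ Ioo (0:ℝ) s, HasDerivAt w (h τ * Real.exp (G τ)) τ := by
    intro τ hτ
    have h1 := (hd τ hτ).mul ((hGd τ).exp)
    exact h1.congr_deriv (by ring)
  have hwc : ContinuousOn w (Ico 0 s) :=
    hf.mul (Real.continuous_exp.comp hGc).continuousOn
  have hmono : MonotoneOn w (Ico 0 s) := by
    apply monotoneOn_of_deriv_nonneg (convex_Ico 0 s) hwc
    · intro x hx
      rw [interior_Ico] at hx
      exact (hwd x hx).differentiableAt.differentiableWithinAt
    · intro x hx
      rw [interior_Ico] at hx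
      rw [(hwd x hx).deriv]
      exact mul_nonneg (hh x hx) (Real.exp_pos _).le
  have h0mem : (0:ℝ) ∈ Ico 0 s := ⟨le_rfl, lt_of_le_of_lt ht.1 ht.2⟩
  have hle := hmono h0mem ht ht.1
  have hw0 : w 0 = f 0 := by simp [hwdef, hGdef]
  have hwt : 0 ≤ f t * Real.exp (G t) := by
    rw [hw0] at hle; exact hf0.trans hle
  nlinarith [Real.exp_pos (G t)]

lemma seir_ext {T : ℝ} (hT : 0 < T) (d : ℝ → ℝ) (hd : ContinuousOn d (Icc 0 T)) :
    ∃ d' : ℝ → ℝ, Continuous d' ∧ ∀ t ∈ Icc (0:ℝ) T, d' t = d t := by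
  refine ⟨Set.IccExtend hT.le ((Icc (0:ℝ) T).restrict d),
    hd.restrict.Icc_extend', fun t ht => ?_⟩
  rw [Set.IccExtend_of_mem hT.le _ ht]
  rfl

/-- if `u₃ > 0` on `[0,s)`, then `u_i ≥ 0` on `[0,s)` for each
`i ∈ {4,5,6,7}` (indices `3,4,5,6`). -/
theorem seir_infectious_nonneg
    (T a b c sigma p : ℝ) (hT : 0 < T) (ha : 0 < a) (hb : 0 < b) (hc : 0 < c)
    (hsigma : 0 < sigma) (hp0 : 0 < p) (hp1 : p < 1)
    (beta nu gA gM gS gC aS aC dD : ℝ → ℝ)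
    (hcont : ∀ f ∈ [beta, nu, gA, gM, gS, gC, aS, aC, dD], ContinuousOn f (Icc 0 T))
    (hpos : ∀ f ∈ [beta, nu, gA, gM, gS, gC, aS, aC, dD], ∀ t ∈ Icc (0:ℝ) T, 0 < f t)
    (x₀ : Fin 9 → ℝ) (hx₀ : ∀ i, 0 ≤ x₀ i) (hx₀1 : 0 < x₀ 0) (hx₀3 : 0 < x₀ 2)
    (S : ℝ) (hS : 0 < S) (hST : S ≤ T)
    (u : ℝ → Fin 9 → ℝ)
    (hu : IsSEIRSolOn a b c sigma p beta nu gA gM gS gC aS aC dD x₀ u (Ico 0 S))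
    (s : ℝ) (hs : s ∈ Ioc 0 S) (hu3 : ∀ t ∈ Ico (0:ℝ) s, 0 < u t 2) :
    ∀ i ∈ ({3, 4, 5, 6} : Set (Fin 9)), ∀ t ∈ Ico (0:ℝ) s, 0 ≤ u t i := by
  obtain ⟨hu0, hud⟩ := hu
  have hsub : Ico (0:ℝ) s ⊆ Ico 0 S := Ico_subset_Ico le_rfl hs.2
  have hIccT : ∀ t ∈ Ico (0:ℝ) s, t ∈ Icc (0:ℝ) T :=
    fun t ht => ⟨ht.1, ((ht.2.trans_le hs.2).le).trans hST⟩
  have hcontu : ∀ i : Fin 9, ContinuousOn (fun τ => u τ i) (Ico 0 s) :=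
    fun i t ht => ((hud i t (hsub ht)).continuousWithinAt).mono hsub
  have hder : ∀ i : Fin 9, ∀ t ∈ Ioo (0:ℝ) s,
      HasDerivAt (fun τ => u τ i)
        (seirRHS a b c sigma p beta nu gA gM gS gC aS aC dD t (u t) i) t := by
    intro i t ht
    have htS : t ∈ Ioo 0 S := ⟨ht.1, ht.2.trans_le hs.2⟩
    exact (hud i t (Ioo_subset_Ico_self htS)).hasDerivAt
      (mem_of_superset (isOpen_Ioo.mem_nhds htS) Ioo_subset_Ico_self)
  have hIooT : ∀ t ∈ Ioo (0:ℝ) s, t ∈ Icc (0:ℝ) T :=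
    fun t ht => hIccT t (Ioo_subset_Ico_self ht)
  -- component 3
  obtain ⟨g3, hg3c, hg3⟩ := seir_ext hT gA (hcont gA (by simp))
  have h3 : ∀ t ∈ Ico (0:ℝ) s, 0 ≤ u t 3 := by
    apply seir_key s g3 (fun t => (1 - p) * sigma * u t 2) _ hg3c (hcontu 3)
    · intro t ht
      have := hder 3 t ht
      rw [show seirRHS a b c sigma p beta nu gA gM gS gC aS aC dD t (u t) 3
          = (1 - p) * sigma * u t 2 - gA t * u t 3 from rfl, ← hg3 t (hIooT t ht)] at this
      exact this
    · intro t ht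
      exact mul_nonneg (mul_nonneg (by linarith) hsigma.le)
        (hu3 t (Ioo_subset_Ico_self ht)).le
    · show 0 ≤ u 0 3
      rw [hu0]; exact hx₀ 3
  -- component 4
  obtain ⟨g4, hg4c, hg4⟩ := seir_ext hT (fun t => gM t + aS t)
    ((hcont gM (by simp)).add (hcont aS (by simp)))
  have h4 : ∀ t ∈ Ico (0:ℝ) s, 0 ≤ u t 4 := by
    apply seir_key s g4 (fun t => p * sigma * u t 2) _ hg4c (hcontu 4)
    · intro t ht
      have := hder 4 t ht
      rw [show seirRHS a b c sigma p beta nu gA gM gS gC aS aC dD t (u t) 4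
          = p * sigma * u t 2 - (gM t + aS t) * u t 4 from rfl, ← hg4 t (hIooT t ht)] at this
      exact this
    · intro t ht
      exact mul_nonneg (mul_nonneg hp0.le hsigma.le) (hu3 t (Ioo_subset_Ico_self ht)).le
    · show 0 ≤ u 0 4
      rw [hu0]; exact hx₀ 4
  -- component 5
  obtain ⟨g5, hg5c, hg5⟩ := seir_ext hT (fun t => gS t + aC t)
    ((hcont gS (by simp)).add (hcont aC (by simp)))
  have h5 : ∀ t ∈ Ico (0:ℝ) s, 0 ≤ u t 5 := by
    apply seir_key s g5 (fun t => aS t * u t 4) _ hg5c (hcontu 5)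
    · intro t ht
      have := hder 5 t ht
      rw [show seirRHS a b c sigma p beta nu gA gM gS gC aS aC dD t (u t) 5
          = aS t * u t 4 - (gS t + aC t) * u t 5 from rfl, ← hg5 t (hIooT t ht)] at this
      exact this
    · intro t ht
      exact mul_nonneg (hpos aS (by simp) t (hIooT t ht)).le
        (h4 t (Ioo_subset_Ico_self ht))
    · show 0 ≤ u 0 5
      rw [hu0]; exact hx₀ 5
  -- component 6
  obtain ⟨g6, hg6c, hg6⟩ := seir_ext hT (fun t => gC t + dD t)
    ((hcont gC (by simp)).add (hcont dD (by simp)))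
  have h6 : ∀ t ∈ Ico (0:ℝ) s, 0 ≤ u t 6 := by
    apply seir_key s g6 (fun t => aC t * u t 5) _ hg6c (hcontu 6)
    · intro t ht
      have := hder 6 t ht
      rw [show seirRHS a b c sigma p beta nu gA gM gS gC aS aC dD t (u t) 6
          = aC t * u t 5 - (gC t + dD t) * u t 6 from rfl, ← hg6 t (hIooT t ht)] at this
      exact this
    · intro t ht
      exact mul_nonneg (hpos aC (by simp) t (hIooT t ht)).le
        (h5 t (Ioo_subset_Ico_self ht))
    · show 0 ≤ u 0 6
      rw [hu0]; exact hx₀ 6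
  intro i hi
  simp only [mem_insert_iff, mem_singleton_iff] at hi
  rcases hi with rfl | rfl | rfl | rfl
  · exact h3
  · exact h4
  · exact h5
  · exact h6
end

section
/- Let u = (u₁,…,u₉) be a solution of the SEIR-like system on [0,S) with 0 < S ≤ T. Then u₃(t) > 0 for every t ∈ [0,S). -/
open Set Filter MeasureTheory

open Real Topology


private lemma leftLim_nonneg {f : ℝ → ℝ} {τ s : ℝ} (hτ : 0 < τ) (hτs : τ ≤ s)
    (hc : ContinuousWithinAt f (Icc 0 s) τ)
    (hpos : ∀ t ∈ Ico (0:ℝ) τ, 0 < f t) : 0 ≤ f τ := by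
  have hsub : Ioo (0:ℝ) τ ⊆ Icc 0 s := fun x hx => ⟨hx.1.le, hx.2.le.trans hτs⟩
  have hne : (𝓝[Ioo (0:ℝ) τ] τ).NeBot := right_nhdsWithin_Ioo_neBot hτ
  exact ge_of_tendsto (hc.mono hsub)
    (eventually_mem_nhdsWithin.mono fun x hx => (hpos x ⟨hx.1.le, hx.2⟩).le)

private lemma quasipos {n : ℕ} (y d : Fin n → ℝ → ℝ) {s : ℝ}
    (hcy : ∀ i, ContinuousOn (y i) (Icc 0 s))
    (hd : ∀ i, ∀ t ∈ Ioc (0:ℝ) s, HasDerivAt (y i) (d i t) t)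
    (h0 : ∀ i, 0 < y i 0)
    (hkey : ∀ i, ∀ t ∈ Ioc (0:ℝ) s, (∀ j, 0 ≤ y j t) → y i t ≤ 0 → 0 < d i t) :
    ∀ t ∈ Icc (0:ℝ) s, ∀ i, 0 < y i t := by
  by_contra hcon
  push_neg at hcon
  obtain ⟨t0, ht0, i0, hi0⟩ := hcon
  set B : Set ℝ := ⋃ i, (Icc (0:ℝ) s ∩ (y i) ⁻¹' Iic 0) with hB
  have hBclosed : IsClosed B :=
    isClosed_iUnion_of_finite fun i =>
      (hcy i).preimage_isClosed_of_isClosed isClosed_Icc isClosed_Iic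
  have hBsub : B ⊆ Icc (0:ℝ) s := by
    intro x hx; rw [hB, mem_iUnion] at hx; obtain ⟨i, hi⟩ := hx; exact hi.1
  have hBcomp : IsCompact B := isCompact_Icc.of_isClosed_subset hBclosed hBsub
  have hBne : B.Nonempty := ⟨t0, mem_iUnion.2 ⟨i0, ht0, hi0⟩⟩
  set τ := sInf B with hτdef
  have hτB : τ ∈ B := hBcomp.sInf_mem hBne
  rw [hB, mem_iUnion] at hτB
  obtain ⟨i, ⟨hτ0, hτs⟩, hyiτ⟩ := hτB
  have hyiτ' : y i τ ≤ 0 := hyiτ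
  have hpos : ∀ t ∈ Ico (0:ℝ) τ, ∀ j, 0 < y j t := by
    intro t htI j
    by_contra hle
    push_neg at hle
    have : t ∈ B := mem_iUnion.2 ⟨j, ⟨htI.1, htI.2.le.trans hτs⟩, hle⟩
    exact absurd (csInf_le hBcomp.bddBelow this) (not_le.2 htI.2)
  have hτpos : 0 < τ := lt_of_le_of_ne hτ0 fun h => (h0 i).not_ge (h ▸ hyiτ')
  have hnonneg : ∀ j, 0 ≤ y j τ := fun j =>
    leftLim_nonneg hτpos hτs ((hcy j).continuousWithinAt ⟨hτ0, hτs⟩)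
      (fun t htI => hpos t htI j)
  have hdpos : 0 < d i τ := hkey i τ ⟨hτpos, hτs⟩ hnonneg hyiτ'
  have hslope : Tendsto (slope (y i) τ) (𝓝[≠] τ) (𝓝 (d i τ)) :=
    hasDerivAt_iff_tendsto_slope.1 (hd i τ ⟨hτpos, hτs⟩)
  have hmono : 𝓝[Ioo (0:ℝ) τ] τ ≤ 𝓝[≠] τ :=
    nhdsWithin_mono τ (fun x hx => ne_of_lt hx.2)
  have hne : (𝓝[Ioo (0:ℝ) τ] τ).NeBot := right_nhdsWithin_Ioo_neBot hτpos
  have hle : d i τ ≤ 0 := by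
    refine le_of_tendsto (hslope.mono_left hmono)
      (eventually_mem_nhdsWithin.mono fun x hx => ?_)
    rw [slope_def_field]
    apply div_nonpos_of_nonneg_of_nonpos
    · have := hpos x ⟨hx.1.le, hx.2⟩ i
      linarith [hyiτ']
    · linarith [hx.2]
  linarith

private lemma pos_of_linear {f F : ℝ → ℝ} {s : ℝ}
    (hf : ContinuousOn f (Icc 0 s))
    (hF : ContinuousOn F (Icc 0 s))
    (hd : ∀ t ∈ Ioc (0:ℝ) s, HasDerivAt f (-(F t * f t)) t)
    (h0 : 0 < f 0) : ∀ t ∈ Icc (0:ℝ) s, 0 < f t := by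
  by_contra hcon
  push_neg at hcon
  obtain ⟨t0, ht0, h0t⟩ := hcon
  set B : Set ℝ := Icc (0:ℝ) s ∩ f ⁻¹' Iic 0 with hB
  have hBclosed : IsClosed B := hf.preimage_isClosed_of_isClosed isClosed_Icc isClosed_Iic
  have hBcomp : IsCompact B := isCompact_Icc.of_isClosed_subset hBclosed inter_subset_left
  have hBne : B.Nonempty := ⟨t0, ht0, h0t⟩
  set τ := sInf B with hτdef
  have hτB : τ ∈ B := hBcomp.sInf_mem hBne
  obtain ⟨⟨hτ0, hτs⟩, hfτ⟩ := hτB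
  have hfτ' : f τ ≤ 0 := hfτ
  have hpos : ∀ t ∈ Ico (0:ℝ) τ, 0 < f t := by
    intro t htI
    by_contra hle
    push_neg at hle
    exact absurd (csInf_le hBcomp.bddBelow ⟨⟨htI.1, htI.2.le.trans hτs⟩, hle⟩)
      (not_le.2 htI.2)
  have hτpos : 0 < τ := lt_of_le_of_ne hτ0 fun h => h0.not_ge (h ▸ hfτ')
  have hfτ0 : f τ = 0 :=
    le_antisymm hfτ' (leftLim_nonneg hτpos hτs (hf.continuousWithinAt ⟨hτ0, hτs⟩) hpos)
  obtain ⟨M, hM⟩ := isCompact_Icc.exists_bound_of_continuousOn hF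
  set g : ℝ → ℝ := fun t => f (τ - t) with hg
  have hmapsto : ∀ t ∈ Icc (0:ℝ) τ, τ - t ∈ Icc (0:ℝ) s := fun t htI =>
    ⟨by linarith [htI.2], by linarith [htI.1, hτs]⟩
  have hgc : ContinuousOn g (Icc 0 τ) :=
    hf.comp ((continuous_const.sub continuous_id).continuousOn) hmapsto
  have hgd : ∀ t ∈ Ico (0:ℝ) τ, HasDerivWithinAt g (F (τ - t) * f (τ - t)) (Ici t) t := by
    intro t htI
    have hin : τ - t ∈ Ioc (0:ℝ) s := ⟨by linarith [htI.2], by linarith [htI.1, hτs]⟩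
    have h1 : HasDerivAt (fun x : ℝ => τ - x) (-1) t := by
      simpa using (hasDerivAt_id t).const_sub τ
    have h2 := (hd _ hin).comp t h1
    have h3 : HasDerivAt g (F (τ - t) * f (τ - t)) t := by
      simpa [Function.comp_def, hg] using h2
    exact h3.hasDerivWithinAt
  have hga : ‖g 0‖ ≤ 0 := by simp [hg, hfτ0]
  have hbound : ∀ x ∈ Ico (0:ℝ) τ, ‖F (τ - x) * f (τ - x)‖ ≤ M * ‖g x‖ + 0 := by
    intro x hx
    rw [norm_mul, add_zero]
    exact mul_le_mul_of_nonneg_right (hM _ (hmapsto x ⟨hx.1, hx.2.le⟩)) (norm_nonneg _)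
  have hgr := norm_le_gronwallBound_of_norm_deriv_right_le hgc hgd hga hbound τ
    ⟨hτpos.le, le_rfl⟩
  rw [gronwallBound_ε0] at hgr
  simp only [zero_mul] at hgr
  have : g τ = f 0 := by simp [hg]
  rw [this, Real.norm_eq_abs] at hgr
  have := abs_nonneg (f 0)
  have := le_antisymm hgr this
  rw [abs_eq_zero] at *
  · linarith [h0, abs_eq_zero.1 (le_antisymm hgr (abs_nonneg (f 0)))]


set_option maxHeartbeats 2000000

/-- any solution of the SEIR-like system on `[0,S)` has `u₃ > 0` there. -/
theorem seir_u3_pos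
    (T a b c sigma p : ℝ) (hT : 0 < T) (ha : 0 < a) (hb : 0 < b) (hc : 0 < c)
    (hsigma : 0 < sigma) (hp0 : 0 < p) (hp1 : p < 1)
    (beta nu gA gM gS gC aS aC dD : ℝ → ℝ)
    (hcont : ∀ f ∈ [beta, nu, gA, gM, gS, gC, aS, aC, dD], ContinuousOn f (Icc 0 T))
    (hpos : ∀ f ∈ [beta, nu, gA, gM, gS, gC, aS, aC, dD], ∀ t ∈ Icc (0:ℝ) T, 0 < f t)
    (x₀ : Fin 9 → ℝ) (hx₀ : ∀ i, 0 ≤ x₀ i) (hx₀1 : 0 < x₀ 0) (hx₀3 : 0 < x₀ 2)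
    (S : ℝ) (hS : 0 < S) (hST : S ≤ T)
    (u : ℝ → Fin 9 → ℝ)
    (hu : IsSEIRSolOn a b c sigma p beta nu gA gM gS gC aS aC dD x₀ u (Ico 0 S))
 :
    ∀ t ∈ Ico (0:ℝ) S, 0 < u t 2 := by
  obtain ⟨hinit, hud⟩ := hu
  have hbeta : ContinuousOn beta (Icc 0 T) := hcont beta (by simp)
  have hnu : ContinuousOn nu (Icc 0 T) := hcont nu (by simp)
  have haS : ContinuousOn aS (Icc 0 T) := hcont aS (by simp)
  have haC : ContinuousOn aC (Icc 0 T) := hcont aC (by simp)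
  have hβp : ∀ t ∈ Icc (0:ℝ) T, 0 < beta t := hpos beta (by simp)
  have hνp : ∀ t ∈ Icc (0:ℝ) T, 0 < nu t := hpos nu (by simp)
  have hgAp : ∀ t ∈ Icc (0:ℝ) T, 0 < gA t := hpos gA (by simp)
  have hgMp : ∀ t ∈ Icc (0:ℝ) T, 0 < gM t := hpos gM (by simp)
  have hgSp : ∀ t ∈ Icc (0:ℝ) T, 0 < gS t := hpos gS (by simp)
  have hgCp : ∀ t ∈ Icc (0:ℝ) T, 0 < gC t := hpos gC (by simp)
  have haSp : ∀ t ∈ Icc (0:ℝ) T, 0 < aS t := hpos aS (by simp)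
  have haCp : ∀ t ∈ Icc (0:ℝ) T, 0 < aC t := hpos aC (by simp)
  have hdDp : ∀ t ∈ Icc (0:ℝ) T, 0 < dD t := hpos dD (by simp)
  have hUc : ∀ i, ContinuousOn (fun r => u r i) (Ico 0 S) :=
    fun i t ht => (hud i t ht).continuousWithinAt
  have hUd : ∀ i, ∀ t ∈ Ioo (0:ℝ) S,
      HasDerivAt (fun r => u r i)
        (seirRHS a b c sigma p beta nu gA gM gS gC aS aC dD t (u t) i) t := by
    intro i t ht
    exact (hud i t ⟨ht.1.le, ht.2⟩).hasDerivAt (Ico_mem_nhds ht.1 ht.2)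
  -- Step 1 : positivity of u·0
  have hu0 : ∀ t ∈ Ico (0:ℝ) S, 0 < u t 0 := by
    intro t ht
    have h00 : 0 < u 0 0 := by rw [hinit]; exact hx₀1
    rcases eq_or_lt_of_le ht.1 with h | h
    · rwa [← h]
    have hts : Icc (0:ℝ) t ⊆ Ico 0 S := fun x hx => ⟨hx.1, lt_of_le_of_lt hx.2 ht.2⟩
    have htT : Icc (0:ℝ) t ⊆ Icc 0 T := fun x hx =>
      ⟨hx.1, hx.2.trans (le_trans ht.2.le hST)⟩
    refine pos_of_linear
      (F := fun r => beta r * (c * u r 3 + u r 4 + a * u r 5 + b * u r 6) + nu r)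
      ((hUc 0).mono hts) ?_ ?_ h00 t ⟨ht.1, le_rfl⟩
    · apply ContinuousOn.add _ (hnu.mono htT)
      apply (hbeta.mono htT).mul
      exact (((continuousOn_const.mul ((hUc 3).mono hts)).add ((hUc 4).mono hts)).add
        (continuousOn_const.mul ((hUc 5).mono hts))).add
        (continuousOn_const.mul ((hUc 6).mono hts))
    · intro r hr
      have hD := hUd 0 r ⟨hr.1, lt_of_le_of_lt hr.2 ht.2⟩
      convert hD using 1
      show _ = -(u r 0) * beta r * (c * u r 3 + u r 4 + a * u r 5 + b * u r 6) - nu r * u r 0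
      ring
  -- Step 2 : nonnegativity of components 2..6
  have key : ∀ s ∈ Ico (0:ℝ) S, ∀ i : Fin 5, 0 ≤ u s ((![2,3,4,5,6] : Fin 5 → Fin 9) i) := by
    intro s hs i
    rcases eq_or_lt_of_le hs.1 with h | h
    · rw [← h, hinit]; exact hx₀ _
    have hts : Icc (0:ℝ) s ⊆ Ico 0 S := fun x hx => ⟨hx.1, lt_of_le_of_lt hx.2 hs.2⟩
    have htT : Icc (0:ℝ) s ⊆ Icc 0 T := fun x hx =>
      ⟨hx.1, hx.2.trans (le_trans hs.2.le hST)⟩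
    obtain ⟨C1, hC1⟩ := isCompact_Icc.exists_bound_of_continuousOn
      (f := fun r => u r 0 * beta r) (((hUc 0).mono hts).mul (hbeta.mono htT))
    obtain ⟨C2, hC2⟩ := isCompact_Icc.exists_bound_of_continuousOn haS
    obtain ⟨C3, hC3⟩ := isCompact_Icc.exists_bound_of_continuousOn haC
    have hC1n : 0 ≤ C1 := le_trans (norm_nonneg _) (hC1 0 ⟨le_rfl, h.le⟩)
    have hC2n : 0 ≤ C2 := le_trans (norm_nonneg _) (hC2 0 ⟨le_rfl, hT.le⟩)
    have hC3n : 0 ≤ C3 := le_trans (norm_nonneg _) (hC3 0 ⟨le_rfl, hT.le⟩)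
    set K : ℝ := C1 * (c + 1 + a + b) + sigma + C2 + C3 + 1 with hK
    have hmain : ∀ ε > (0:ℝ), ∀ t ∈ Icc (0:ℝ) s, ∀ j : Fin 5,
        0 < u t ((![2,3,4,5,6] : Fin 5 → Fin 9) j) + ε * exp (K * t) := by
      intro ε hε
      have H := quasipos
        (y := fun (j : Fin 5) t => u t ((![2,3,4,5,6] : Fin 5 → Fin 9) j) + ε * exp (K * t))
        (d := fun (j : Fin 5) t =>
          seirRHS a b c sigma p beta nu gA gM gS gC aS aC dD t (u t)
            ((![2,3,4,5,6] : Fin 5 → Fin 9) j) + ε * (exp (K * t) * K))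
        (s := s) ?_ ?_ ?_ ?_
      · exact fun t ht j => H t ht j
      · intro j
        exact ((hUc _).mono hts).add (continuous_const.mul (Real.continuous_exp.comp (continuous_const.mul continuous_id))).continuousOn
      · intro j t htI
        exact (hUd _ t ⟨htI.1, lt_of_le_of_lt htI.2 hs.2⟩).add
          (by simpa using (((hasDerivAt_id t).const_mul K).exp.const_mul ε))
      · intro j
        simp only [mul_zero, Real.exp_zero, mul_one]
        have : u 0 ((![2,3,4,5,6] : Fin 5 → Fin 9) j) = x₀ ((![2,3,4,5,6] : Fin 5 → Fin 9) j) := by rw [hinit]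
        rw [this]
        exact add_pos_of_nonneg_of_pos (hx₀ _) hε
      · intro j t htI hall hyj
        have htT' : t ∈ Icc (0:ℝ) T := ⟨htI.1.le, (htI.2.trans hs.2.le).trans hST⟩
        have hts' : t ∈ Icc (0:ℝ) s := ⟨htI.1.le, htI.2⟩
        set E : ℝ := ε * exp (K * t) with hE
        have hEpos : 0 < E := by positivity
        have h2 : -E ≤ u t 2 := by have := hall 0; simp at this; linarith
        have h3 : -E ≤ u t 3 := by have := hall 1; simp at this; linarith
        have h4 : -E ≤ u t 4 := by have := hall 2; simp at this; linarith
        have h5 : -E ≤ u t 5 := by have := hall 3; simp at this; linarith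
        have h6 : -E ≤ u t 6 := by have := hall 4; simp at this; linarith
        have hKE : E * K = E * (C1 * (c + 1 + a + b)) + E * sigma + E * C2 + E * C3 + E := by
          rw [hK]; ring
        have hLnn : (0:ℝ) ≤ c + 1 + a + b := by linarith
        have n1 : 0 ≤ E * (C1 * (c + 1 + a + b)) :=
          mul_nonneg hEpos.le (mul_nonneg hC1n hLnn)
        have n2 : 0 ≤ E * sigma := mul_nonneg hEpos.le hsigma.le
        have n3 : 0 ≤ E * C2 := mul_nonneg hEpos.le hC2n
        have n4 : 0 ≤ E * C3 := mul_nonneg hEpos.le hC3n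
        have hub : u t 0 * beta t ≤ C1 := by
          have := hC1 t hts'; rw [Real.norm_eq_abs] at this
          exact le_trans (le_abs_self _) this
        have hu0b : 0 < u t 0 * beta t :=
          mul_pos (hu0 t ⟨htI.1.le, lt_of_le_of_lt htI.2 hs.2⟩) (hβp t htT')
        have hj5 : j = 0 ∨ j = 1 ∨ j = 2 ∨ j = 3 ∨ j = 4 := by omega
        have hEK : ε * (exp (K * t) * K) = E * K := by rw [hE]; ring
        rcases hj5 with rfl | rfl | rfl | rfl | rfl
        · -- component 2
          simp only [Matrix.cons_val_zero] at hyj ⊢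
          have hyj' : u t 2 ≤ -E := by linarith
          show 0 < seirRHS a b c sigma p beta nu gA gM gS gC aS aC dD t (u t) 2
            + ε * (exp (K * t) * K)
          have e2 : seirRHS a b c sigma p beta nu gA gM gS gC aS aC dD t (u t) 2
              = u t 0 * beta t * (c * u t 3 + u t 4 + a * u t 5 + b * u t 6)
                - sigma * u t 2 := rfl
          rw [e2, hEK]
          have l3 := mul_le_mul_of_nonneg_left h3 hc.le
          have l5 := mul_le_mul_of_nonneg_left h5 ha.le
          have l6 := mul_le_mul_of_nonneg_left h6 hb.le
          have hQ : -((c + 1 + a + b) * E) ≤ c * u t 3 + u t 4 + a * u t 5 + b * u t 6 := by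
            linarith
          have hPB : -(C1 * ((c + 1 + a + b) * E))
              ≤ u t 0 * beta t * (c * u t 3 + u t 4 + a * u t 5 + b * u t 6) := by
            rcases le_or_gt 0 (c * u t 3 + u t 4 + a * u t 5 + b * u t 6) with hq | hq
            · have g1 : 0 ≤ u t 0 * beta t * (c * u t 3 + u t 4 + a * u t 5 + b * u t 6) :=
                mul_nonneg hu0b.le hq
              have g2 : 0 ≤ C1 * ((c + 1 + a + b) * E) :=
                mul_nonneg hC1n (mul_nonneg hLnn hEpos.le)
              linarith
            · have l1 : C1 * (c * u t 3 + u t 4 + a * u t 5 + b * u t 6)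
                  ≤ u t 0 * beta t * (c * u t 3 + u t 4 + a * u t 5 + b * u t 6) :=
                mul_le_mul_of_nonpos_right hub hq.le
              have l2 : C1 * (-((c + 1 + a + b) * E))
                  ≤ C1 * (c * u t 3 + u t 4 + a * u t 5 + b * u t 6) :=
                mul_le_mul_of_nonneg_left hQ hC1n
              linarith
          have hsu : sigma * u t 2 ≤ sigma * (-E) :=
            mul_le_mul_of_nonneg_left hyj' hsigma.le
          linarith
        · -- component 3
          simp only [Matrix.cons_val_one, Matrix.head_cons, Matrix.cons_val_zero] at hyj ⊢
          have hyj' : u t 3 ≤ -E := by linarith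
          show 0 < seirRHS a b c sigma p beta nu gA gM gS gC aS aC dD t (u t) 3
            + ε * (exp (K * t) * K)
          have e3 : seirRHS a b c sigma p beta nu gA gM gS gC aS aC dD t (u t) 3
              = (1 - p) * sigma * u t 2 - gA t * u t 3 := rfl
          rw [e3, hEK]
          have f1 : ((1 - p) * sigma) * (-E) ≤ (1 - p) * sigma * u t 2 :=
            mul_le_mul_of_nonneg_left h2 (mul_nonneg (by linarith) hsigma.le)
          have f2 : gA t * u t 3 ≤ gA t * (-E) :=
            mul_le_mul_of_nonneg_left hyj' (hgAp t htT').le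
          have f3 : 0 < gA t * E := mul_pos (hgAp t htT') hEpos
          have f4 : 0 ≤ p * sigma * E :=
            mul_nonneg (mul_nonneg hp0.le hsigma.le) hEpos.le
          linarith
        · -- component 4
          simp only [Matrix.cons_val_two, Matrix.tail_cons, Matrix.head_cons, Matrix.cons_val_zero] at hyj ⊢
          have hyj' : u t 4 ≤ -E := by linarith
          show 0 < seirRHS a b c sigma p beta nu gA gM gS gC aS aC dD t (u t) 4
            + ε * (exp (K * t) * K)
          have e4 : seirRHS a b c sigma p beta nu gA gM gS gC aS aC dD t (u t) 4
              = p * sigma * u t 2 - (gM t + aS t) * u t 4 := rfl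
          rw [e4, hEK]
          have f1 : (p * sigma) * (-E) ≤ p * sigma * u t 2 :=
            mul_le_mul_of_nonneg_left h2 (mul_nonneg hp0.le hsigma.le)
          have f2 : (gM t + aS t) * u t 4 ≤ (gM t + aS t) * (-E) :=
            mul_le_mul_of_nonneg_left hyj'
              (by linarith [hgMp t htT', haSp t htT'])
          have f3 : 0 ≤ (gM t + aS t) * E :=
            mul_nonneg (by linarith [hgMp t htT', haSp t htT']) hEpos.le
          have g1 : p * sigma * E ≤ sigma * E :=
            mul_le_mul_of_nonneg_right (by nlinarith) hEpos.le
          linarith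
        · -- component 5
          simp only [Matrix.cons_val_three, Matrix.tail_cons, Matrix.head_cons, Matrix.cons_val_zero] at hyj ⊢
          have hyj' : u t 5 ≤ -E := by linarith
          show 0 < seirRHS a b c sigma p beta nu gA gM gS gC aS aC dD t (u t) 5
            + ε * (exp (K * t) * K)
          have e5 : seirRHS a b c sigma p beta nu gA gM gS gC aS aC dD t (u t) 5
              = aS t * u t 4 - (gS t + aC t) * u t 5 := rfl
          rw [e5, hEK]
          have haSle : aS t ≤ C2 := by
            have := hC2 t htT'; rw [Real.norm_eq_abs] at this
            exact le_trans (le_abs_self _) this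
          have f1 : aS t * (-E) ≤ aS t * u t 4 :=
            mul_le_mul_of_nonneg_left h4 (haSp t htT').le
          have f1b : aS t * E ≤ C2 * E := mul_le_mul_of_nonneg_right haSle hEpos.le
          have f2 : (gS t + aC t) * u t 5 ≤ (gS t + aC t) * (-E) :=
            mul_le_mul_of_nonneg_left hyj'
              (by linarith [hgSp t htT', haCp t htT'])
          have f3 : 0 ≤ (gS t + aC t) * E :=
            mul_nonneg (by linarith [hgSp t htT', haCp t htT']) hEpos.le
          linarith
        · -- component 6
          simp only [Matrix.cons_val_four, Matrix.tail_cons, Matrix.head_cons, Matrix.cons_val_zero] at hyj ⊢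
          have hyj' : u t 6 ≤ -E := by linarith
          show 0 < seirRHS a b c sigma p beta nu gA gM gS gC aS aC dD t (u t) 6
            + ε * (exp (K * t) * K)
          have e6 : seirRHS a b c sigma p beta nu gA gM gS gC aS aC dD t (u t) 6
              = aC t * u t 5 - (gC t + dD t) * u t 6 := rfl
          rw [e6, hEK]
          have haCle : aC t ≤ C3 := by
            have := hC3 t htT'; rw [Real.norm_eq_abs] at this
            exact le_trans (le_abs_self _) this
          have f1 : aC t * (-E) ≤ aC t * u t 5 :=
            mul_le_mul_of_nonneg_left h5 (haCp t htT').le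
          have f1b : aC t * E ≤ C3 * E := mul_le_mul_of_nonneg_right haCle hEpos.le
          have f2 : (gC t + dD t) * u t 6 ≤ (gC t + dD t) * (-E) :=
            mul_le_mul_of_nonneg_left hyj'
              (by linarith [hgCp t htT', hdDp t htT'])
          have f3 : 0 ≤ (gC t + dD t) * E :=
            mul_nonneg (by linarith [hgCp t htT', hdDp t htT']) hEpos.le
          linarith
    -- ε → 0
    by_contra hneg
    push_neg at hneg
    have hεp : 0 < -(u s ((![2,3,4,5,6] : Fin 5 → Fin 9) i)) / (2 * exp (K * s)) := by
      apply div_pos (by linarith) (by positivity)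
    have hgt := hmain _ hεp s ⟨hs.1, le_rfl⟩ i
    have hexp : exp (K * s) ≠ 0 := (exp_pos _).ne'
    have heq : -(u s ((![2,3,4,5,6] : Fin 5 → Fin 9) i)) / (2 * exp (K * s)) * exp (K * s)
        = -(u s ((![2,3,4,5,6] : Fin 5 → Fin 9) i)) / 2 := by
      field_simp
    rw [heq] at hgt
    linarith
  -- Step 3 : strict positivity of u·2
  intro t ht
  rcases eq_or_lt_of_le ht.1 with h | h
  · rw [← h]; show 0 < u 0 2; rw [hinit]; exact hx₀3
  have hts : Icc (0:ℝ) t ⊆ Ico 0 S := fun x hx => ⟨hx.1, lt_of_le_of_lt hx.2 ht.2⟩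
  have htT : Icc (0:ℝ) t ⊆ Icc 0 T := fun x hx =>
    ⟨hx.1, hx.2.trans (le_trans ht.2.le hST)⟩
  set w : ℝ → ℝ := fun r => u r 2 * exp (sigma * r) with hw
  have hwd : ∀ r ∈ Ioo (0:ℝ) t, HasDerivAt w
      (seirRHS a b c sigma p beta nu gA gM gS gC aS aC dD r (u r) 2 * exp (sigma * r)
        + u r 2 * (exp (sigma * r) * sigma)) r := by
    intro r hr
    exact (hUd 2 r ⟨hr.1, hr.2.trans ht.2⟩).mul
      (by simpa using ((hasDerivAt_id r).const_mul sigma).exp)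
  have hmono : MonotoneOn w (Icc 0 t) := by
    apply monotoneOn_of_deriv_nonneg (convex_Icc 0 t)
    · exact ((hUc 2).mono hts).mul (Real.continuous_exp.comp (continuous_const.mul continuous_id)).continuousOn
    · intro r hr
      rw [interior_Icc] at hr
      exact ((hwd r hr).differentiableAt).differentiableWithinAt
    · intro r hr
      rw [interior_Icc] at hr
      rw [(hwd r hr).deriv]
      have hrS : r ∈ Ico (0:ℝ) S := ⟨hr.1.le, hr.2.trans ht.2⟩
      have k3 : 0 ≤ u r 3 := by have := key r hrS 1; simpa using this
      have k4 : 0 ≤ u r 4 := by have := key r hrS 2; simpa using this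
      have k5 : 0 ≤ u r 5 := by have := key r hrS 3; simpa using this
      have k6 : 0 ≤ u r 6 := by have := key r hrS 4; simpa using this
      have e2 : seirRHS a b c sigma p beta nu gA gM gS gC aS aC dD r (u r) 2
          = u r 0 * beta r * (c * u r 3 + u r 4 + a * u r 5 + b * u r 6)
            - sigma * u r 2 := rfl
      rw [e2]
      have : (u r 0 * beta r * (c * u r 3 + u r 4 + a * u r 5 + b * u r 6)
          - sigma * u r 2) * exp (sigma * r) + u r 2 * (exp (sigma * r) * sigma)
          = u r 0 * beta r * (c * u r 3 + u r 4 + a * u r 5 + b * u r 6)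
            * exp (sigma * r) := by ring
      rw [this]
      have hQnn : 0 ≤ c * u r 3 + u r 4 + a * u r 5 + b * u r 6 := by
        nlinarith [mul_nonneg hc.le k3, mul_nonneg ha.le k5, mul_nonneg hb.le k6]
      exact mul_nonneg (mul_nonneg (mul_nonneg
        (hu0 r hrS).le (hβp r (htT ⟨hr.1.le, hr.2.le⟩)).le) hQnn) (exp_pos _).le
  have h1 : w 0 ≤ w t := hmono ⟨le_rfl, ht.1⟩ ⟨ht.1, le_rfl⟩ ht.1
  have hw0 : w 0 = x₀ 2 := by simp [hw, hinit]
  rw [hw0] at h1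
  have hwt : w t = u t 2 * exp (sigma * t) := rfl
  rw [hwt] at h1
  have het : 0 < exp (sigma * t) := exp_pos _
  nlinarith [h1, hx₀3, het]
end

section
/- Let u = (u₁,…,u₉) be a solution of the SEIR-like system on [0,S) with 0 < S ≤ T. Then u₁(t) > 0 and u₃(t) > 0 for all t ∈ [0,S), and u_i(t) ≥ 0 for all t ∈ [0,S) and all i ∈ {2,4,5,6,7,8,9}. -/
open Set Filter MeasureTheory

open Topology Real in
/-- Auxiliary: one-sided slope estimate for the negative part of a function having a
one-sided derivative. -/
lemma negPart_slope_event {g : ℝ → ℝ} {x d : ℝ}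
    (hd : Tendsto (fun z => (z - x)⁻¹ * (g z - g x)) (𝓝[>] x) (𝓝 d))
    {ε : ℝ} (hε : 0 < ε) :
    ∀ᶠ z in 𝓝[>] x, (z - x)⁻¹ * (max (-g z) 0 - max (-g x) 0)
      < (if g x ≤ 0 then max (-d) 0 else 0) + ε := by
  have hxz : ∀ᶠ z in 𝓝[>] x, x < z := eventually_mem_nhdsWithin
  have hgt : Tendsto g (𝓝[>] x) (𝓝 (g x)) := by
    have h1 : Tendsto (fun z => (z - x) * ((z - x)⁻¹ * (g z - g x)) + g x) (𝓝[>] x)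
        (𝓝 ((x - x) * d + g x)) :=
      (((tendsto_id.sub_const x).mono_left nhdsWithin_le_nhds).mul hd).add tendsto_const_nhds
    rw [sub_self, zero_mul, zero_add] at h1
    refine h1.congr' ?_
    filter_upwards [hxz] with z hz
    have hne : z - x ≠ 0 := sub_ne_zero.2 (ne_of_gt hz)
    field_simp
    ring
  have hdist := Metric.tendsto_nhds.mp hd ε hε
  have hmax0 : (0:ℝ) ≤ max (-d) 0 := le_max_right _ _
  rcases lt_trichotomy (g x) 0 with h | h | h
  · rw [if_pos h.le]
    have h1 : ∀ᶠ z in 𝓝[>] x, g z < 0 := hgt.eventually (eventually_lt_nhds h)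
    filter_upwards [h1, hdist, hxz] with z hz hdz hxz'
    have habs := abs_lt.mp (by simpa [Real.dist_eq] using hdz)
    rw [max_eq_left (by linarith : (0:ℝ) ≤ -g z), max_eq_left (by linarith : (0:ℝ) ≤ -g x)]
    have heq : (z - x)⁻¹ * (-g z - -g x) = -((z - x)⁻¹ * (g z - g x)) := by ring
    rw [heq]
    have : -((z - x)⁻¹ * (g z - g x)) < -d + ε := by linarith [habs.1]
    calc -((z - x)⁻¹ * (g z - g x)) < -d + ε := this
      _ ≤ max (-d) 0 + ε := by gcongr; exact le_max_left _ _
  · rw [if_pos h.le]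
    filter_upwards [hdist, hxz] with z hdz hxz'
    have habs := abs_lt.mp (by simpa [Real.dist_eq] using hdz)
    have h0 : max (-g x) 0 = 0 := by rw [h]; simp
    rw [h0, sub_zero]
    have hinv : (0:ℝ) ≤ (z - x)⁻¹ := inv_nonneg.mpr (by linarith)
    rw [mul_max_of_nonneg _ _ hinv, mul_zero]
    apply max_lt
    · have hs : (z - x)⁻¹ * (-g z) = -((z - x)⁻¹ * (g z - g x)) := by rw [h]; ring
      rw [hs]
      have : -((z - x)⁻¹ * (g z - g x)) < -d + ε := by linarith [habs.1]
      calc -((z - x)⁻¹ * (g z - g x)) < -d + ε := this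
        _ ≤ max (-d) 0 + ε := by gcongr; exact le_max_left _ _
    · linarith
  · rw [if_neg (not_le.2 h)]
    have h1 : ∀ᶠ z in 𝓝[>] x, 0 < g z := hgt.eventually (eventually_gt_nhds h)
    filter_upwards [h1] with z hz
    rw [max_eq_right (by linarith : -g z ≤ 0), max_eq_right (by linarith : -g x ≤ 0)]
    simpa using hε

set_option maxHeartbeats 3200000 in
open Topology Real in
/-- `u₁ > 0`, `u₃ > 0` and all other components are nonnegative on `[0,S)`. -/
theorem seir_nonneg
    (T a b c sigma p : ℝ) (hT : 0 < T) (ha : 0 < a) (hb : 0 < b) (hc : 0 < c)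
    (hsigma : 0 < sigma) (hp0 : 0 < p) (hp1 : p < 1)
    (beta nu gA gM gS gC aS aC dD : ℝ → ℝ)
    (hcont : ∀ f ∈ [beta, nu, gA, gM, gS, gC, aS, aC, dD], ContinuousOn f (Icc 0 T))
    (hpos : ∀ f ∈ [beta, nu, gA, gM, gS, gC, aS, aC, dD], ∀ t ∈ Icc (0:ℝ) T, 0 < f t)
    (x₀ : Fin 9 → ℝ) (hx₀ : ∀ i, 0 ≤ x₀ i) (hx₀1 : 0 < x₀ 0) (hx₀3 : 0 < x₀ 2)
    (S : ℝ) (hS : 0 < S) (hST : S ≤ T)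
    (u : ℝ → Fin 9 → ℝ)
    (hu : IsSEIRSolOn a b c sigma p beta nu gA gM gS gC aS aC dD x₀ u (Ico 0 S))
 :
    (∀ t ∈ Ico (0:ℝ) S, 0 < u t 0) ∧ (∀ t ∈ Ico (0:ℝ) S, 0 < u t 2) ∧
    (∀ i ∈ ({1, 3, 4, 5, 6, 7, 8} : Set (Fin 9)), ∀ t ∈ Ico (0:ℝ) S, 0 ≤ u t i) := by
  obtain ⟨hu0, hud⟩ := hu
  -- abbreviation for the right hand side along the solution
  set F : ℝ → Fin 9 → ℝ :=
    fun s => seirRHS a b c sigma p beta nu gA gM gS gC aS aC dD s (u s) with hF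
  -- positivity of coefficients
  have hβpos : ∀ s ∈ Icc (0:ℝ) T, 0 < beta s := hpos beta (by simp)
  have hνpos : ∀ s ∈ Icc (0:ℝ) T, 0 < nu s := hpos nu (by simp)
  have hgApos : ∀ s ∈ Icc (0:ℝ) T, 0 < gA s := hpos gA (by simp)
  have hgMpos : ∀ s ∈ Icc (0:ℝ) T, 0 < gM s := hpos gM (by simp)
  have hgSpos : ∀ s ∈ Icc (0:ℝ) T, 0 < gS s := hpos gS (by simp)
  have hgCpos : ∀ s ∈ Icc (0:ℝ) T, 0 < gC s := hpos gC (by simp)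
  have haSpos : ∀ s ∈ Icc (0:ℝ) T, 0 < aS s := hpos aS (by simp)
  have haCpos : ∀ s ∈ Icc (0:ℝ) T, 0 < aC s := hpos aC (by simp)
  have hdDpos : ∀ s ∈ Icc (0:ℝ) T, 0 < dD s := hpos dD (by simp)
  -- a common upper bound `C` for all coefficient functions on `[0,T]`
  have hbd : ∀ f ∈ [beta, nu, gA, gM, gS, gC, aS, aC, dD],
      ∃ C, ∀ s ∈ Icc (0:ℝ) T, f s ≤ C := by
    intro f hf
    obtain ⟨C, hC⟩ := isCompact_Icc.exists_bound_of_continuousOn (hcont f hf)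
    exact ⟨C, fun s hs => (le_abs_self _).trans (by simpa using hC s hs)⟩
  obtain ⟨C1, hC1⟩ := hbd beta (by simp)
  obtain ⟨C2, hC2⟩ := hbd nu (by simp)
  obtain ⟨C3, hC3⟩ := hbd gA (by simp)
  obtain ⟨C4, hC4⟩ := hbd gM (by simp)
  obtain ⟨C5, hC5⟩ := hbd gS (by simp)
  obtain ⟨C6, hC6⟩ := hbd gC (by simp)
  obtain ⟨C7, hC7⟩ := hbd aS (by simp)
  obtain ⟨C8, hC8⟩ := hbd aC (by simp)
  obtain ⟨C9, hC9⟩ := hbd dD (by simp)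
  set C : ℝ := 1 + (|C1| + |C2| + |C3| + |C4| + |C5| + |C6| + |C7| + |C8| + |C9|) with hCdef
  have habs : ∀ r : ℝ, r ≤ |r| := fun r => le_abs_self r
  have habs0 : ∀ r : ℝ, 0 ≤ |r| := fun r => abs_nonneg r
  have hC1' : (1:ℝ) ≤ C := by
    simp only [hCdef]
    linarith only [habs0 C1, habs0 C2, habs0 C3, habs0 C4, habs0 C5, habs0 C6, habs0 C7,
      habs0 C8, habs0 C9]
  have hC0 : (0:ℝ) < C := lt_of_lt_of_le one_pos hC1'
  have hβC : ∀ s ∈ Icc (0:ℝ) T, beta s ≤ C := fun s hs => by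
    simp only [hCdef]
    linarith only [hC1 s hs, habs C1, habs0 C2, habs0 C3, habs0 C4, habs0 C5, habs0 C6,
      habs0 C7, habs0 C8, habs0 C9]
  have hνC : ∀ s ∈ Icc (0:ℝ) T, nu s ≤ C := fun s hs => by
    simp only [hCdef]
    linarith only [hC2 s hs, habs0 C1, habs C2, habs0 C3, habs0 C4, habs0 C5, habs0 C6,
      habs0 C7, habs0 C8, habs0 C9]
  have hgAC : ∀ s ∈ Icc (0:ℝ) T, gA s ≤ C := fun s hs => by
    simp only [hCdef]
    linarith only [hC3 s hs, habs0 C1, habs0 C2, habs C3, habs0 C4, habs0 C5, habs0 C6,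
      habs0 C7, habs0 C8, habs0 C9]
  have hgMC : ∀ s ∈ Icc (0:ℝ) T, gM s ≤ C := fun s hs => by
    simp only [hCdef]
    linarith only [hC4 s hs, habs0 C1, habs0 C2, habs0 C3, habs C4, habs0 C5, habs0 C6,
      habs0 C7, habs0 C8, habs0 C9]
  have hgSC : ∀ s ∈ Icc (0:ℝ) T, gS s ≤ C := fun s hs => by
    simp only [hCdef]
    linarith only [hC5 s hs, habs0 C1, habs0 C2, habs0 C3, habs0 C4, habs C5, habs0 C6,
      habs0 C7, habs0 C8, habs0 C9]
  have hgCC : ∀ s ∈ Icc (0:ℝ) T, gC s ≤ C := fun s hs => by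
    simp only [hCdef]
    linarith only [hC6 s hs, habs0 C1, habs0 C2, habs0 C3, habs0 C4, habs0 C5, habs C6,
      habs0 C7, habs0 C8, habs0 C9]
  have haSC : ∀ s ∈ Icc (0:ℝ) T, aS s ≤ C := fun s hs => by
    simp only [hCdef]
    linarith only [hC7 s hs, habs0 C1, habs0 C2, habs0 C3, habs0 C4, habs0 C5, habs0 C6,
      habs C7, habs0 C8, habs0 C9]
  have haCC : ∀ s ∈ Icc (0:ℝ) T, aC s ≤ C := fun s hs => by
    simp only [hCdef]
    linarith only [hC8 s hs, habs0 C1, habs0 C2, habs0 C3, habs0 C4, habs0 C5, habs0 C6,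
      habs0 C7, habs C8, habs0 C9]
  have hdDC : ∀ s ∈ Icc (0:ℝ) T, dD s ≤ C := fun s hs => by
    simp only [hCdef]
    linarith only [hC9 s hs, habs0 C1, habs0 C2, habs0 C3, habs0 C4, habs0 C5, habs0 C6,
      habs0 C7, habs0 C8, habs C9]
  clear hC1 hC2 hC3 hC4 hC5 hC6 hC7 hC8 hC9
  -- continuity of the components of `u` on compact subintervals
  have hucontOn : ∀ τ : ℝ, τ < S → ∀ i : Fin 9, ContinuousOn (fun s => u s i) (Icc 0 τ) := by
    intro τ hτ i s hs
    exact ((hud i s ⟨hs.1, lt_of_le_of_lt hs.2 hτ⟩).continuousWithinAt).mono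
      (fun z hz => ⟨hz.1, lt_of_le_of_lt hz.2 hτ⟩)
  -- MAIN STEP: all components are nonnegative on [0, S)
  have key : ∀ t ∈ Ico (0:ℝ) S, ∀ i, 0 ≤ u t i := by
    intro t ht
    have ht0 : 0 ≤ t := ht.1
    have htS : t < S := ht.2
    set t₁ : ℝ := (t + S) / 2 with ht₁def
    have h1 : t < t₁ := by rw [ht₁def]; linarith
    have h2 : t₁ < S := by rw [ht₁def]; linarith
    have h3 : 0 ≤ t₁ := by rw [ht₁def]; linarith
    have hsub : Icc (0:ℝ) t₁ ⊆ Ico 0 S := fun s hs => ⟨hs.1, lt_of_le_of_lt hs.2 h2⟩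
    have hsubT : Icc (0:ℝ) t₁ ⊆ Icc 0 T :=
      fun s hs => ⟨hs.1, le_trans hs.2 (le_trans h2.le hST)⟩
    have hucont : ∀ i : Fin 9, ContinuousOn (fun s => u s i) (Icc 0 t₁) := hucontOn t₁ h2
    -- a common bound `B` for all components of `u` on `[0, t₁]`
    have hBex : ∀ i : Fin 9, ∃ B, ∀ s ∈ Icc (0:ℝ) t₁, |u s i| ≤ B := fun i =>
      (isCompact_Icc.exists_bound_of_continuousOn (hucont i)).imp
        (fun B hB s hs => by simpa using hB s hs)
    choose Bs hBs using hBex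
    set B : ℝ := 1 + ∑ i : Fin 9, |Bs i| with hBdef
    have hBsum : (0:ℝ) ≤ ∑ i : Fin 9, |Bs i| :=
      Finset.sum_nonneg (fun i _ => abs_nonneg _)
    have hB1 : (1:ℝ) ≤ B := by rw [hBdef]; linarith
    have hB0 : (0:ℝ) < B := lt_of_lt_of_le one_pos hB1
    have hB : ∀ i : Fin 9, ∀ s ∈ Icc (0:ℝ) t₁, |u s i| ≤ B := by
      intro i s hs
      refine (hBs i s hs).trans ?_
      rw [hBdef]
      have h := Finset.single_le_sum (f := fun j : Fin 9 => |Bs j|)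
        (fun j _ => abs_nonneg _) (Finset.mem_univ i)
      linarith only [h, le_abs_self (Bs i)]
    -- the Grönwall constant
    set M : ℝ := 2 * (C + sigma) * (a + b + c + 1) * (B + 1) with hMdef
    have hM0 : 0 < M := by
      rw [hMdef]
      have : (0:ℝ) < C + sigma := by linarith only [hC0, hsigma]
      have h2' : (0:ℝ) < a + b + c + 1 := by linarith only [ha, hb, hc]
      have h3' : (0:ℝ) < B + 1 := by linarith only [hB0]
      positivity
    set K : ℝ := 9 * M with hKdef
    -- some arithmetic preliminaries about M
    have hQ : (2:ℝ) ≤ (a + b + c + 1) * (B + 1) := by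
      nlinarith [mul_pos ha hB0, mul_pos hb hB0, mul_pos hc hB0, ha, hb, hc, hB1]
    have hM4 : 4 * (C + sigma) ≤ M := by
      rw [hMdef]
      nlinarith [mul_nonneg (by linarith only [hC0, hsigma] : (0:ℝ) ≤ C + sigma)
        (by linarith only [hQ] : (0:ℝ) ≤ (a + b + c + 1) * (B + 1) - 2)]
    have hσM : sigma ≤ M := by linarith only [hM4, hC0, hsigma]
    have hCM : C ≤ M := by linarith only [hM4, hC0, hsigma]
    have h4CM : 4 * C ≤ M := by linarith only [hM4, hsigma]
    have hCLM : C * ((c + 1 + a + b) * B) ≤ M := by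
      have hone : (0:ℝ) ≤ 2 * (C + sigma) * (B + 1) - C * B := by
        nlinarith [mul_pos hC0 hB0, mul_pos hsigma hB0, hC0, hsigma]
      rw [hMdef]
      nlinarith [mul_nonneg (by linarith only [ha, hb, hc] : (0:ℝ) ≤ a + b + c + 1) hone]
    have hC2BM : C * (2 * B * (c + 1 + a + b)) ≤ M := by
      have hone : (0:ℝ) ≤ 2 * (C + sigma) * (B + 1) - 2 * (C * B) := by
        nlinarith [mul_pos hsigma hB0, hC0, hsigma]
      rw [hMdef]
      nlinarith [mul_nonneg (by linarith only [ha, hb, hc] : (0:ℝ) ≤ a + b + c + 1) hone]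
    -- the sum of the negative parts
    set y : ℝ → ℝ := fun s => ∑ i : Fin 9, max (-(u s i)) 0 with hydef
    have hynn : ∀ s, 0 ≤ y s := fun s => Finset.sum_nonneg (fun i _ => le_max_right _ _)
    have hNy : ∀ s, ∀ i : Fin 9, max (-(u s i)) 0 ≤ y s := fun s i =>
      Finset.single_le_sum (f := fun j : Fin 9 => max (-(u s j)) 0)
        (fun j _ => le_max_right _ _) (Finset.mem_univ i)
    have hy0 : y 0 = 0 := by
      rw [hydef]
      refine Finset.sum_eq_zero (fun i _ => ?_)
      have : u 0 i = x₀ i := by rw [hu0]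
      rw [this, max_eq_right (neg_nonpos.2 (hx₀ i))]
    have hycont : ContinuousOn y (Icc 0 t₁) := by
      apply continuousOn_finset_sum
      intro i _
      exact fun z hz => ((hucont i z hz).neg).max continuousWithinAt_const
    -- quasipositivity estimate
    have quasi : ∀ x ∈ Icc (0:ℝ) t₁, ∀ i : Fin 9, u x i ≤ 0 → -(F x i) ≤ M * y x := by
      intro x hx i hle
      have hxT : x ∈ Icc (0:ℝ) T := hsubT hx
      have hN : ∀ j : Fin 9, 0 ≤ max (-(u x j)) 0 := fun j => le_max_right _ _
      have hNneg : ∀ j : Fin 9, -(u x j) ≤ max (-(u x j)) 0 := fun j => le_max_left _ _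
      have hNy' : ∀ j : Fin 9, max (-(u x j)) 0 ≤ y x := hNy x
      have hU : ∀ j : Fin 9, -B ≤ u x j ∧ u x j ≤ B := fun j => abs_le.mp (hB j x hx)
      have hyx : 0 ≤ y x := hynn x
      have hMy : 0 ≤ M * y x := mul_nonneg hM0.le hyx
      have hβ := hβpos x hxT; have hβC' := hβC x hxT
      have hν := hνpos x hxT; have hνC' := hνC x hxT
      have hgA' := hgApos x hxT; have hgAC' := hgAC x hxT
      have hgM' := hgMpos x hxT; have hgMC' := hgMC x hxT
      have hgS' := hgSpos x hxT; have hgSC' := hgSC x hxT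
      have hgC' := hgCpos x hxT; have hgCC' := hgCC x hxT
      have haS' := haSpos x hxT; have haSC' := haSC x hxT
      have haC' := haCpos x hxT; have haCC' := haCC x hxT
      have hdD' := hdDpos x hxT; have hdDC' := hdDC x hxT
      have hcab : (0:ℝ) ≤ c + 1 + a + b := by linarith only [ha, hb, hc]
      -- bound on the infection pressure L
      set L : ℝ := c * u x 3 + u x 4 + a * u x 5 + b * u x 6 with hLdef
      have hL1 : L ≤ (c + 1 + a + b) * B := by
        rw [hLdef]
        linarith only [mul_le_mul_of_nonneg_left (hU 3).2 hc.le,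
          mul_le_mul_of_nonneg_left (hU 5).2 ha.le,
          mul_le_mul_of_nonneg_left (hU 6).2 hb.le, (hU 4).2]
      have hL2 : -((c + 1 + a + b) * B) ≤ L := by
        rw [hLdef]
        linarith only [mul_le_mul_of_nonneg_left (hU 3).1 hc.le,
          mul_le_mul_of_nonneg_left (hU 5).1 ha.le,
          mul_le_mul_of_nonneg_left (hU 6).1 hb.le, (hU 4).1]
      have hnegL : -L ≤ c * max (-(u x 3)) 0 + max (-(u x 4)) 0 + a * max (-(u x 5)) 0
          + b * max (-(u x 6)) 0 := by
        rw [hLdef]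
        linarith only [mul_le_mul_of_nonneg_left (hNneg 3) hc.le,
          mul_le_mul_of_nonneg_left (hNneg 5) ha.le,
          mul_le_mul_of_nonneg_left (hNneg 6) hb.le, hNneg 4]
      have habsL : |L| ≤ (c + 1 + a + b) * B := abs_le.mpr ⟨hL2, hL1⟩
      fin_cases i
      -- component 0 : S
      · show -(F x 0) ≤ M * y x
        have hF0 : F x 0 = -(u x 0) * beta x * L - nu x * u x 0 := rfl
        rw [hF0]
        have hN0 : max (-(u x 0)) 0 = -(u x 0) := max_eq_left (neg_nonneg.2 hle)
        have hstep : u x 0 * beta x * L ≤ M * y x := by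
          calc u x 0 * beta x * L = (max (-(u x 0)) 0 * beta x) * (-L) := by rw [hN0]; ring
            _ ≤ (max (-(u x 0)) 0 * beta x) * |L| :=
                mul_le_mul_of_nonneg_left (neg_le_abs L) (mul_nonneg (hN 0) hβ.le)
            _ ≤ (y x * C) * ((c + 1 + a + b) * B) := by
                apply mul_le_mul _ habsL (abs_nonneg L) (mul_nonneg hyx hC0.le)
                exact mul_le_mul (hNy' 0) hβC' hβ.le hyx
            _ = (C * ((c + 1 + a + b) * B)) * y x := by ring
            _ ≤ M * y x := mul_le_mul_of_nonneg_right hCLM hyx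
        have hν0 : nu x * u x 0 ≤ 0 := mul_nonpos_of_nonneg_of_nonpos hν.le hle
        linarith only [hstep, hν0]
      -- component 1 : V
      · show -(F x 1) ≤ M * y x
        have hF1 : F x 1 = nu x * u x 0 := rfl
        rw [hF1]
        calc -(nu x * u x 0) = nu x * (-(u x 0)) := by ring
          _ ≤ nu x * max (-(u x 0)) 0 := mul_le_mul_of_nonneg_left (hNneg 0) hν.le
          _ ≤ C * y x := mul_le_mul hνC' (hNy' 0) (hN 0) hC0.le
          _ ≤ M * y x := mul_le_mul_of_nonneg_right hCM hyx
      -- component 2 : E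
      · show -(F x 2) ≤ M * y x
        have hF2 : F x 2 = u x 0 * beta x * L - sigma * u x 2 := rfl
        rw [hF2]
        have hσ2 : sigma * u x 2 ≤ 0 := mul_nonpos_of_nonneg_of_nonpos hsigma.le hle
        set R : ℝ := B * (c * max (-(u x 3)) 0 + max (-(u x 4)) 0 + a * max (-(u x 5)) 0
          + b * max (-(u x 6)) 0) + max (-(u x 0)) 0 * ((c + 1 + a + b) * B) with hRdef
        have hs4 : (0:ℝ) ≤ c * max (-(u x 3)) 0 + max (-(u x 4)) 0 + a * max (-(u x 5)) 0
            + b * max (-(u x 6)) 0 := by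
          linarith only [mul_nonneg hc.le (hN 3), hN 4, mul_nonneg ha.le (hN 5),
            mul_nonneg hb.le (hN 6)]
        have hR0 : 0 ≤ R := by
          rw [hRdef]
          linarith only [mul_nonneg hB0.le hs4,
            mul_nonneg (hN 0) (mul_nonneg hcab hB0.le)]
        have hmain : -(u x 0) * L ≤ R := by
          rcases le_or_gt 0 (u x 0) with h0 | h0
          · have heq : -(u x 0) * L = u x 0 * (-L) := by ring
            rw [heq, hRdef]
            have h1' : u x 0 * (-L) ≤ u x 0 * (c * max (-(u x 3)) 0 + max (-(u x 4)) 0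
                + a * max (-(u x 5)) 0 + b * max (-(u x 6)) 0) :=
              mul_le_mul_of_nonneg_left hnegL h0
            have h2' : u x 0 * (c * max (-(u x 3)) 0 + max (-(u x 4)) 0
                + a * max (-(u x 5)) 0 + b * max (-(u x 6)) 0) ≤ B * (c * max (-(u x 3)) 0
                + max (-(u x 4)) 0 + a * max (-(u x 5)) 0 + b * max (-(u x 6)) 0) :=
              mul_le_mul_of_nonneg_right (hU 0).2 hs4
            linarith only [h1', h2', mul_nonneg (hN 0) (mul_nonneg hcab hB0.le)]
          · have hN0 : max (-(u x 0)) 0 = -(u x 0) := max_eq_left (by linarith)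
            have h1' : -(u x 0) * L ≤ -(u x 0) * |L| :=
              mul_le_mul_of_nonneg_left (le_abs_self L) (by linarith)
            have h2' : -(u x 0) * |L| ≤ max (-(u x 0)) 0 * ((c + 1 + a + b) * B) := by
              rw [hN0]
              exact mul_le_mul_of_nonneg_left habsL (by linarith)
            rw [hRdef]
            linarith only [h1', h2', mul_nonneg hB0.le hs4]
        have hRy : R ≤ 2 * B * (c + 1 + a + b) * y x := by
          have s4y : c * max (-(u x 3)) 0 + max (-(u x 4)) 0 + a * max (-(u x 5)) 0
              + b * max (-(u x 6)) 0 ≤ (c + 1 + a + b) * y x := by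
            linarith only [mul_le_mul_of_nonneg_left (hNy' 3) hc.le, hNy' 4,
              mul_le_mul_of_nonneg_left (hNy' 5) ha.le,
              mul_le_mul_of_nonneg_left (hNy' 6) hb.le]
          rw [hRdef]
          linarith only [mul_le_mul_of_nonneg_left s4y hB0.le,
            mul_le_mul_of_nonneg_right (hNy' 0) (mul_nonneg hcab hB0.le)]
        have hstep : -(u x 0) * beta x * L ≤ M * y x := by
          calc -(u x 0) * beta x * L = beta x * (-(u x 0) * L) := by ring
            _ ≤ beta x * R := mul_le_mul_of_nonneg_left hmain hβ.le
            _ ≤ C * R := mul_le_mul_of_nonneg_right hβC' hR0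
            _ ≤ C * (2 * B * (c + 1 + a + b) * y x) := mul_le_mul_of_nonneg_left hRy hC0.le
            _ = (C * (2 * B * (c + 1 + a + b))) * y x := by ring
            _ ≤ M * y x := mul_le_mul_of_nonneg_right hC2BM hyx
        linarith only [hstep, hσ2]
      -- component 3 : I_A
      · show -(F x 3) ≤ M * y x
        have hF3 : F x 3 = (1 - p) * sigma * u x 2 - gA x * u x 3 := rfl
        rw [hF3]
        have h1' : gA x * u x 3 ≤ 0 := mul_nonpos_of_nonneg_of_nonpos hgA'.le hle
        have h2' : -((1 - p) * sigma * u x 2) ≤ (1 - p) * sigma * max (-(u x 2)) 0 := by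
          have hh := mul_le_mul_of_nonneg_left (hNneg 2)
            (mul_nonneg (by linarith only [hp1] : (0:ℝ) ≤ 1 - p) hsigma.le)
          linarith only [hh]
        have h3' : (1 - p) * sigma * max (-(u x 2)) 0 ≤ M * y x := by
          apply mul_le_mul _ (hNy' 2) (hN 2) hM0.le
          linarith only [hσM, mul_pos hp0 hsigma]
        linarith only [h1', h2', h3']
      -- component 4 : I_M
      · show -(F x 4) ≤ M * y x
        have hF4 : F x 4 = p * sigma * u x 2 - (gM x + aS x) * u x 4 := rfl
        rw [hF4]
        have h1' : (gM x + aS x) * u x 4 ≤ 0 :=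
          mul_nonpos_of_nonneg_of_nonpos (by linarith only [hgM', haS']) hle
        have h2' : -(p * sigma * u x 2) ≤ p * sigma * max (-(u x 2)) 0 := by
          have hh := mul_le_mul_of_nonneg_left (hNneg 2)
            (mul_nonneg hp0.le hsigma.le)
          linarith only [hh]
        have h3' : p * sigma * max (-(u x 2)) 0 ≤ M * y x := by
          apply mul_le_mul _ (hNy' 2) (hN 2) hM0.le
          linarith only [hσM, mul_pos (by linarith only [hp1] : (0:ℝ) < 1 - p) hsigma]
        linarith only [h1', h2', h3']
      -- component 5 : I_S
      · show -(F x 5) ≤ M * y x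
        have hF5 : F x 5 = aS x * u x 4 - (gS x + aC x) * u x 5 := rfl
        rw [hF5]
        have h1' : (gS x + aC x) * u x 5 ≤ 0 :=
          mul_nonpos_of_nonneg_of_nonpos (by linarith only [hgS', haC']) hle
        have h2' : -(aS x * u x 4) ≤ aS x * max (-(u x 4)) 0 := by
          have hh := mul_le_mul_of_nonneg_left (hNneg 4) haS'.le
          linarith only [hh]
        have h3' : aS x * max (-(u x 4)) 0 ≤ M * y x :=
          mul_le_mul (le_trans haSC' hCM) (hNy' 4) (hN 4) hM0.le
        linarith only [h1', h2', h3']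
      -- component 6 : I_C
      · show -(F x 6) ≤ M * y x
        have hF6 : F x 6 = aC x * u x 5 - (gC x + dD x) * u x 6 := rfl
        rw [hF6]
        have h1' : (gC x + dD x) * u x 6 ≤ 0 :=
          mul_nonpos_of_nonneg_of_nonpos (by linarith only [hgC', hdD']) hle
        have h2' : -(aC x * u x 5) ≤ aC x * max (-(u x 5)) 0 := by
          have hh := mul_le_mul_of_nonneg_left (hNneg 5) haC'.le
          linarith only [hh]
        have h3' : aC x * max (-(u x 5)) 0 ≤ M * y x :=
          mul_le_mul (le_trans haCC' hCM) (hNy' 5) (hN 5) hM0.le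
        linarith only [h1', h2', h3']
      -- component 7 : R
      · show -(F x 7) ≤ M * y x
        have hF7 : F x 7 = gA x * u x 3 + gM x * u x 4 + gS x * u x 5 + gC x * u x 6 := rfl
        rw [hF7]
        have e3 : -(gA x * u x 3) ≤ C * y x := by
          have h1' := mul_le_mul_of_nonneg_left (hNneg 3) hgA'.le
          have h2' : gA x * max (-(u x 3)) 0 ≤ C * y x :=
            mul_le_mul hgAC' (hNy' 3) (hN 3) hC0.le
          linarith only [h1', h2']
        have e4 : -(gM x * u x 4) ≤ C * y x := by
          have h1' := mul_le_mul_of_nonneg_left (hNneg 4) hgM'.le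
          have h2' : gM x * max (-(u x 4)) 0 ≤ C * y x :=
            mul_le_mul hgMC' (hNy' 4) (hN 4) hC0.le
          linarith only [h1', h2']
        have e5 : -(gS x * u x 5) ≤ C * y x := by
          have h1' := mul_le_mul_of_nonneg_left (hNneg 5) hgS'.le
          have h2' : gS x * max (-(u x 5)) 0 ≤ C * y x :=
            mul_le_mul hgSC' (hNy' 5) (hN 5) hC0.le
          linarith only [h1', h2']
        have e6 : -(gC x * u x 6) ≤ C * y x := by
          have h1' := mul_le_mul_of_nonneg_left (hNneg 6) hgC'.le
          have h2' : gC x * max (-(u x 6)) 0 ≤ C * y x :=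
            mul_le_mul hgCC' (hNy' 6) (hN 6) hC0.le
          linarith only [h1', h2']
        have h4' : 4 * C * y x ≤ M * y x :=
          mul_le_mul_of_nonneg_right (by linarith only [h4CM]) hyx
        linarith only [e3, e4, e5, e6, h4']
      -- component 8 : D
      · show -(F x 8) ≤ M * y x
        have hF8 : F x 8 = dD x * u x 6 := rfl
        rw [hF8]
        have h1' := mul_le_mul_of_nonneg_left (hNneg 6) hdD'.le
        have h2' : dD x * max (-(u x 6)) 0 ≤ M * y x :=
          mul_le_mul (le_trans hdDC' hCM) (hNy' 6) (hN 6) hM0.le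
        linarith only [h1', h2']
    -- the one-sided slope condition for Grönwall
    have hf' : ∀ x ∈ Ico (0:ℝ) t₁, ∀ r, K * y x < r →
        ∃ᶠ z in 𝓝[>] x, (z - x)⁻¹ * (y z - y x) < r := by
      intro x hx r hr
      have hx0 : 0 ≤ x := hx.1
      have hxS : x < S := lt_of_lt_of_le hx.2 h2.le
      have hmem : Ico (0:ℝ) S \ {x} ∈ 𝓝[>] x := by
        refine mem_of_superset (Ioo_mem_nhdsGT_of_mem ⟨le_refl x, hxS⟩) ?_
        intro z hz
        exact ⟨⟨le_trans hx0 hz.1.le, hz.2⟩, ne_of_gt hz.1⟩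
      have hslope : ∀ i : Fin 9, Tendsto (fun z => (z - x)⁻¹ * (u z i - u x i))
          (𝓝[>] x) (𝓝 (F x i)) := by
        intro i
        have h := (hasDerivWithinAt_iff_tendsto_slope.mp
          (hud i x ⟨hx0, hxS⟩)).mono_left (nhdsWithin_le_of_mem hmem)
        refine h.congr (fun z => ?_)
        rw [slope_def_field, div_eq_inv_mul]
      set ε' : ℝ := (r - K * y x) / 9 with hε'def
      have hε'pos : 0 < ε' := by rw [hε'def]; linarith only [hr]
      have hev : ∀ i : Fin 9, ∀ᶠ z in 𝓝[>] x,
          (z - x)⁻¹ * (max (-(u z i)) 0 - max (-(u x i)) 0)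
            < (if u x i ≤ 0 then max (-(F x i)) 0 else 0) + ε' :=
        fun i => negPart_slope_event (hslope i) hε'pos
      have hbnd : ∀ i : Fin 9, (if u x i ≤ 0 then max (-(F x i)) 0 else 0) ≤ M * y x := by
        intro i
        have hMy : 0 ≤ M * y x := mul_nonneg hM0.le (hynn x)
        split_ifs with h
        · exact max_le (quasi x ⟨hx.1, hx.2.le⟩ i h) hMy
        · exact hMy
      apply Filter.Eventually.frequently
      filter_upwards [eventually_all.2 hev] with z hz
      have hsum : (z - x)⁻¹ * (y z - y x)
          = ∑ i : Fin 9, (z - x)⁻¹ * (max (-(u z i)) 0 - max (-(u x i)) 0) := by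
        simp only [hydef]
        rw [← Finset.sum_sub_distrib, Finset.mul_sum]
      rw [hsum]
      have hlt : ∑ i : Fin 9, (z - x)⁻¹ * (max (-(u z i)) 0 - max (-(u x i)) 0)
          < ∑ i : Fin 9, ((if u x i ≤ 0 then max (-(F x i)) 0 else 0) + ε') :=
        Finset.sum_lt_sum_of_nonempty Finset.univ_nonempty (fun i _ => hz i)
      have hle2 : ∑ i : Fin 9, ((if u x i ≤ 0 then max (-(F x i)) 0 else 0) + ε')
          ≤ 9 * (M * y x) + 9 * ε' := by
        rw [Finset.sum_add_distrib, Finset.sum_const, Finset.card_univ, Fintype.card_fin]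
        have hs := Finset.sum_le_sum (fun i (_ : i ∈ Finset.univ) => hbnd i)
        rw [Finset.sum_const, Finset.card_univ, Fintype.card_fin] at hs
        simp only [nsmul_eq_mul] at hs ⊢
        push_cast at hs ⊢
        linarith only [hs]
      have hK9 : K * y x = 9 * (M * y x) := by rw [hKdef]; ring
      have h9ε : (9:ℝ) * ε' = r - K * y x := by rw [hε'def]; ring
      linarith only [hlt, hle2, hK9, h9ε]
    -- apply Grönwall's inequality
    have hgron := le_gronwallBound_of_liminf_deriv_right_le
      (f' := fun x => K * y x) (δ := 0) (K := K) (ε := 0) (a := 0) (b := t₁)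
      hycont hf' (le_of_eq hy0) (fun x _ => by rw [add_zero])
    have hyt := hgron t ⟨ht0, h1.le⟩
    rw [sub_zero, gronwallBound_ε0_δ0] at hyt
    have hyeq : y t = 0 := le_antisymm hyt (hynn t)
    intro i
    simp only [hydef] at hyeq
    have hterm := (Finset.sum_eq_zero_iff_of_nonneg
      (f := fun j : Fin 9 => max (-(u t j)) 0)
      (fun j _ => le_max_right _ _)).1 hyeq i (Finset.mem_univ i)
    have hterm' : max (-(u t i)) 0 = 0 := hterm
    have h := le_max_left (-(u t i)) 0
    rw [hterm'] at h
    linarith only [h]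
  -- STEP B : strict positivity of the first component
  have hpos0 : ∀ t ∈ Ico (0:ℝ) S, 0 < u t 0 := by
    intro t ht
    rcases eq_or_lt_of_le ht.1 with h0 | h0
    · rw [← h0, hu0]; exact hx₀1
    · have htS : t < S := ht.2
      have hsubT' : Icc (0:ℝ) t ⊆ Icc 0 T :=
        fun z hz => ⟨hz.1, le_trans hz.2 (le_trans htS.le hST)⟩
      have hgcont : ContinuousOn
          (fun s => beta s * (c * u s 3 + u s 4 + a * u s 5 + b * u s 6) + nu s)
          (Icc 0 t) := by
        refine ContinuousOn.add (ContinuousOn.mul ((hcont beta (by simp)).mono hsubT') ?_)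
          ((hcont nu (by simp)).mono hsubT')
        exact (((continuousOn_const.mul (hucontOn t htS 3)).add (hucontOn t htS 4)).add
          (continuousOn_const.mul (hucontOn t htS 5))).add
          (continuousOn_const.mul (hucontOn t htS 6))
      obtain ⟨M₀, hM₀⟩ := isCompact_Icc.exists_bound_of_continuousOn hgcont
      have hM₀' : ∀ s ∈ Icc (0:ℝ) t,
          beta s * (c * u s 3 + u s 4 + a * u s 5 + b * u s 6) + nu s ≤ M₀ :=
        fun s hs => (le_abs_self _).trans (by simpa using hM₀ s hs)
      have hder : ∀ s ∈ Ioo (0:ℝ) t, HasDerivAt (fun z => u z 0 * Real.exp (M₀ * z))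
          (F s 0 * Real.exp (M₀ * s) + u s 0 * (Real.exp (M₀ * s) * (M₀ * 1))) s := by
        intro s hs
        have hsS : s < S := lt_trans hs.2 htS
        have hnbd : Ico (0:ℝ) S ∈ 𝓝 s := Ico_mem_nhds hs.1 hsS
        have h1 : HasDerivAt (fun z => u z 0) (F s 0) s :=
          (hud 0 s ⟨hs.1.le, hsS⟩).hasDerivAt hnbd
        have h2 : HasDerivAt (fun z => Real.exp (M₀ * z))
            (Real.exp (M₀ * s) * (M₀ * 1)) s := ((hasDerivAt_id s).const_mul M₀).exp
        exact h1.mul h2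
      have hmono : MonotoneOn (fun z => u z 0 * Real.exp (M₀ * z)) (Icc 0 t) := by
        apply monotoneOn_of_deriv_nonneg (convex_Icc 0 t)
        · exact (hucontOn t htS 0).mul
            ((Real.continuous_exp.comp (continuous_const.mul continuous_id)).continuousOn)
        · intro s hs
          rw [interior_Icc] at hs
          exact (hder s hs).differentiableAt.differentiableWithinAt
        · intro s hs
          rw [interior_Icc] at hs
          rw [(hder s hs).deriv]
          have hsS : s < S := lt_trans hs.2 htS
          have hnn := key s ⟨hs.1.le, hsS⟩
          have hgle := hM₀' s ⟨hs.1.le, hs.2.le⟩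
          have hE := Real.exp_pos (M₀ * s)
          have hF0 : F s 0 = -(u s 0) * beta s
              * (c * u s 3 + u s 4 + a * u s 5 + b * u s 6) - nu s * u s 0 := rfl
          rw [hF0]
          have hkey : 0 ≤ (Real.exp (M₀ * s) * u s 0)
              * (M₀ - (beta s * (c * u s 3 + u s 4 + a * u s 5 + b * u s 6) + nu s)) :=
            mul_nonneg (mul_nonneg hE.le (hnn 0)) (by linarith only [hgle])
          nlinarith [hkey]
      have hmineq := hmono (left_mem_Icc.2 h0.le) (right_mem_Icc.2 h0.le) h0.le
      simp only [mul_zero, Real.exp_zero, mul_one] at hmineq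
      have hu00 : u 0 0 = x₀ 0 := by rw [hu0]
      by_contra hcon
      push_neg at hcon
      have hcon2 := mul_le_mul_of_nonneg_right hcon (Real.exp_pos (M₀ * t)).le
      rw [zero_mul] at hcon2
      rw [hu00] at hmineq
      linarith only [hmineq, hcon2, hx₀1]
  -- STEP C : strict positivity of the third component
  have hpos2 : ∀ t ∈ Ico (0:ℝ) S, 0 < u t 2 := by
    intro t ht
    rcases eq_or_lt_of_le ht.1 with h0 | h0
    · rw [← h0, hu0]; exact hx₀3
    · have htS : t < S := ht.2
      have hder : ∀ s ∈ Ioo (0:ℝ) t, HasDerivAt (fun z => u z 2 * Real.exp (sigma * z))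
          (F s 2 * Real.exp (sigma * s) + u s 2 * (Real.exp (sigma * s) * (sigma * 1))) s := by
        intro s hs
        have hsS : s < S := lt_trans hs.2 htS
        have hnbd : Ico (0:ℝ) S ∈ 𝓝 s := Ico_mem_nhds hs.1 hsS
        have h1 : HasDerivAt (fun z => u z 2) (F s 2) s :=
          (hud 2 s ⟨hs.1.le, hsS⟩).hasDerivAt hnbd
        have h2 : HasDerivAt (fun z => Real.exp (sigma * z))
            (Real.exp (sigma * s) * (sigma * 1)) s := ((hasDerivAt_id s).const_mul sigma).exp
        exact h1.mul h2
      have hmono : MonotoneOn (fun z => u z 2 * Real.exp (sigma * z)) (Icc 0 t) := by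
        apply monotoneOn_of_deriv_nonneg (convex_Icc 0 t)
        · exact (hucontOn t htS 2).mul
            ((Real.continuous_exp.comp (continuous_const.mul continuous_id)).continuousOn)
        · intro s hs
          rw [interior_Icc] at hs
          exact (hder s hs).differentiableAt.differentiableWithinAt
        · intro s hs
          rw [interior_Icc] at hs
          rw [(hder s hs).deriv]
          have hsS : s < S := lt_trans hs.2 htS
          have hsT : s ∈ Icc (0:ℝ) T := ⟨hs.1.le, le_trans (le_trans hs.2.le htS.le) hST⟩
          have hnn := key s ⟨hs.1.le, hsS⟩
          have hE := Real.exp_pos (sigma * s)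
          have hF2 : F s 2 = u s 0 * beta s
              * (c * u s 3 + u s 4 + a * u s 5 + b * u s 6) - sigma * u s 2 := rfl
          rw [hF2]
          have hL0 : (0:ℝ) ≤ c * u s 3 + u s 4 + a * u s 5 + b * u s 6 := by
            linarith only [mul_nonneg hc.le (hnn 3), hnn 4, mul_nonneg ha.le (hnn 5),
              mul_nonneg hb.le (hnn 6)]
          have hkey : 0 ≤ Real.exp (sigma * s)
              * (u s 0 * beta s * (c * u s 3 + u s 4 + a * u s 5 + b * u s 6)) :=
            mul_nonneg hE.le (mul_nonneg (mul_nonneg (hnn 0) (hβpos s hsT).le) hL0)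
          nlinarith [hkey]
      have hmineq := hmono (left_mem_Icc.2 h0.le) (right_mem_Icc.2 h0.le) h0.le
      simp only [mul_zero, Real.exp_zero, mul_one] at hmineq
      have hu02 : u 0 2 = x₀ 2 := by rw [hu0]
      by_contra hcon
      push_neg at hcon
      have hcon2 := mul_le_mul_of_nonneg_right hcon (Real.exp_pos (sigma * t)).le
      rw [zero_mul] at hcon2
      rw [hu02] at hmineq
      linarith only [hmineq, hcon2, hx₀3]
  exact ⟨hpos0, hpos2, fun i _ t ht => key t ht i⟩
end

section
/- Suppose the parameter functions β, ν, γ_A, γ_M, γ_S, γ_C, α_S, α_C, δ_D : [0,∞) → ℝ are continuous, strictly positive, and bounded on [0,∞). Then the initial value problem for the SEIR-like system has exactly one C¹ solution u : [0,∞) → ℝ⁹, and this solution is nonnegative: u₁(t) > 0, u₃(t) > 0 and u_i(t) ≥ 0 for i ∈ {2,4,5,6,7,8,9}, for all t ≥ 0. -/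
open Set Filter MeasureTheory

lemma amsm (u u' v v' : ℝ) : |u*v - u'*v'| ≤ |u - u'| * |v| + |u'| * |v - v'| := by
  have h : u*v - u'*v' = (u-u')*v + u'*(v-v') := by ring
  rw [h]
  exact (abs_add_le _ _).trans (by rw [abs_mul, abs_mul])

/-- one-step bound: `|k*u - k*u'| ≤ B*D`. -/
lemma est1 {k u u' D B : ℝ} (hk : |k| ≤ B) (hu : |u - u'| ≤ D) (hD : 0 ≤ D) :
    |k*u - k*u'| ≤ B*D := by
  rw [← mul_sub, abs_mul]
  exact mul_le_mul hk hu (abs_nonneg _) ((abs_nonneg k).trans hk)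

set_option maxHeartbeats 2000000 in
lemma seir_lip_core (a b c sigma p : ℝ) (ha : 0 ≤ a) (hb : 0 ≤ b) (hc : 0 ≤ c)
    (hσ : 0 ≤ sigma) (hp0 : 0 ≤ p) (hp1 : p ≤ 1)
    (beta nu gA gM gS gC aS aC dD : ℝ → ℝ) (t : ℝ) (B ρ D : ℝ)
    (hβ : |beta t| ≤ B) (hν : |nu t| ≤ B) (hgA : |gA t| ≤ B) (hgM : |gM t| ≤ B)
    (hgS : |gS t| ≤ B) (hgC : |gC t| ≤ B) (haS : |aS t| ≤ B) (haC : |aC t| ≤ B)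
    (hdD : |dD t| ≤ B)
    (x y : Fin 9 → ℝ) (hx : ∀ i, |x i| ≤ ρ) (hy : ∀ i, |y i| ≤ ρ)
    (hxy : ∀ i, |x i - y i| ≤ D) (hD : 0 ≤ D) :
    ∀ i, |seirRHS a b c sigma p beta nu gA gM gS gC aS aC dD t x i
        - seirRHS a b c sigma p beta nu gA gM gS gC aS aC dD t y i|
      ≤ (2*B*(c+1+a+b)*ρ + 4*B + sigma) * D := by
  have hB : 0 ≤ B := (abs_nonneg _).trans hβ
  have hρ : 0 ≤ ρ := (abs_nonneg _).trans (hx 0)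
  have hQ : 0 ≤ c + 1 + a + b := by positivity
  have hbig : 0 ≤ B * ((c+1+a+b) * ρ) * D := by positivity
  have hBD : 0 ≤ B * D := mul_nonneg hB hD
  have hsD : 0 ≤ sigma * D := mul_nonneg hσ hD
  -- bound on P
  have hPx : |c * x 3 + x 4 + a * x 5 + b * x 6| ≤ (c+1+a+b) * ρ := by
    have h3 : |c * x 3| ≤ c * ρ := by
      rw [abs_mul, abs_of_nonneg hc]; exact mul_le_mul_of_nonneg_left (hx 3) hc
    have h5 : |a * x 5| ≤ a * ρ := by
      rw [abs_mul, abs_of_nonneg ha]; exact mul_le_mul_of_nonneg_left (hx 5) ha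
    have h6 : |b * x 6| ≤ b * ρ := by
      rw [abs_mul, abs_of_nonneg hb]; exact mul_le_mul_of_nonneg_left (hx 6) hb
    calc |c * x 3 + x 4 + a * x 5 + b * x 6|
        ≤ |c * x 3 + x 4 + a * x 5| + |b * x 6| := abs_add_le _ _
      _ ≤ (|c * x 3 + x 4| + |a * x 5|) + |b * x 6| := by
          gcongr; exact abs_add_le _ _
      _ ≤ ((|c * x 3| + |x 4|) + |a * x 5|) + |b * x 6| := by
          gcongr; exact abs_add_le _ _
      _ ≤ ((c * ρ + ρ) + a * ρ) + b * ρ :=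
          add_le_add (add_le_add (add_le_add h3 (hx 4)) h5) h6
      _ = (c+1+a+b) * ρ := by ring
  have hy0 : |y 0| ≤ ρ := hy 0
  have hPxy : |(c * x 3 + x 4 + a * x 5 + b * x 6) - (c * y 3 + y 4 + a * y 5 + b * y 6)| ≤ (c+1+a+b) * D := by
    have e : (c * x 3 + x 4 + a * x 5 + b * x 6) - (c * y 3 + y 4 + a * y 5 + b * y 6)
        = c * (x 3 - y 3) + (x 4 - y 4) + a * (x 5 - y 5) + b * (x 6 - y 6) := by ring
    rw [e]
    have h3 : |c * (x 3 - y 3)| ≤ c * D := by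
      rw [abs_mul, abs_of_nonneg hc]; exact mul_le_mul_of_nonneg_left (hxy 3) hc
    have h5 : |a * (x 5 - y 5)| ≤ a * D := by
      rw [abs_mul, abs_of_nonneg ha]; exact mul_le_mul_of_nonneg_left (hxy 5) ha
    have h6 : |b * (x 6 - y 6)| ≤ b * D := by
      rw [abs_mul, abs_of_nonneg hb]; exact mul_le_mul_of_nonneg_left (hxy 6) hb
    calc |c * (x 3 - y 3) + (x 4 - y 4) + a * (x 5 - y 5) + b * (x 6 - y 6)|
        ≤ |c * (x 3 - y 3) + (x 4 - y 4) + a * (x 5 - y 5)| + |b * (x 6 - y 6)| := abs_add_le _ _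
      _ ≤ (|c * (x 3 - y 3) + (x 4 - y 4)| + |a * (x 5 - y 5)|) + |b * (x 6 - y 6)| := by
          gcongr; exact abs_add_le _ _
      _ ≤ ((|c * (x 3 - y 3)| + |x 4 - y 4|) + |a * (x 5 - y 5)|) + |b * (x 6 - y 6)| := by
          gcongr; exact abs_add_le _ _
      _ ≤ ((c * D + D) + a * D) + b * D :=
          add_le_add (add_le_add (add_le_add h3 (hxy 4)) h5) h6
      _ = (c+1+a+b) * D := by ring
  -- bilinear product bound
  have hW : |x 0 * (c * x 3 + x 4 + a * x 5 + b * x 6)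
      - y 0 * (c * y 3 + y 4 + a * y 5 + b * y 6)| ≤ 2 * ((c+1+a+b) * ρ) * D := by
    refine (amsm _ _ _ _).trans ?_
    have h1 : |x 0 - y 0| * |c * x 3 + x 4 + a * x 5 + b * x 6| ≤ D * ((c+1+a+b) * ρ) :=
      mul_le_mul (hxy 0) hPx (abs_nonneg _) hD
    have h2 : |y 0| * |(c * x 3 + x 4 + a * x 5 + b * x 6) - (c * y 3 + y 4 + a * y 5 + b * y 6)|
        ≤ ρ * ((c+1+a+b) * D) := mul_le_mul hy0 hPxy (abs_nonneg _) hρ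
    nlinarith [hbig, hBD, hsD]
  have hβW : |beta t * (x 0 * (c * x 3 + x 4 + a * x 5 + b * x 6))
      - beta t * (y 0 * (c * y 3 + y 4 + a * y 5 + b * y 6))| ≤ B * (2 * ((c+1+a+b) * ρ) * D) :=
    est1 hβ hW (by positivity)
  intro i
  fin_cases i
  · show |(-(x 0) * beta t * (c * x 3 + x 4 + a * x 5 + b * x 6) - nu t * x 0)
      - (-(y 0) * beta t * (c * y 3 + y 4 + a * y 5 + b * y 6) - nu t * y 0)| ≤ _
    have e : (-(x 0) * beta t * (c * x 3 + x 4 + a * x 5 + b * x 6) - nu t * x 0)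
      - (-(y 0) * beta t * (c * y 3 + y 4 + a * y 5 + b * y 6) - nu t * y 0)
      = -((beta t * (x 0 * (c * x 3 + x 4 + a * x 5 + b * x 6))
          - beta t * (y 0 * (c * y 3 + y 4 + a * y 5 + b * y 6)))
          + (nu t * x 0 - nu t * y 0)) := by ring
    rw [e, abs_neg]
    refine (abs_add_le _ _).trans ?_
    have h2 : |nu t * x 0 - nu t * y 0| ≤ B * D := est1 hν (hxy 0) hD
    nlinarith [hβW, h2, hbig, hBD, hsD]
  · show |nu t * x 0 - nu t * y 0| ≤ _
    have h2 : |nu t * x 0 - nu t * y 0| ≤ B * D := est1 hν (hxy 0) hD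
    nlinarith [h2, hbig, hBD, hsD]
  · show |(x 0 * beta t * (c * x 3 + x 4 + a * x 5 + b * x 6) - sigma * x 2)
      - (y 0 * beta t * (c * y 3 + y 4 + a * y 5 + b * y 6) - sigma * y 2)| ≤ _
    have e : (x 0 * beta t * (c * x 3 + x 4 + a * x 5 + b * x 6) - sigma * x 2)
      - (y 0 * beta t * (c * y 3 + y 4 + a * y 5 + b * y 6) - sigma * y 2)
      = (beta t * (x 0 * (c * x 3 + x 4 + a * x 5 + b * x 6))
          - beta t * (y 0 * (c * y 3 + y 4 + a * y 5 + b * y 6)))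
        + (sigma * y 2 - sigma * x 2) := by ring
    rw [e]
    refine (abs_add_le _ _).trans ?_
    have h2 : |sigma * y 2 - sigma * x 2| ≤ sigma * D := by
      refine est1 (k := sigma) ?_ ?_ hD
      · rw [abs_of_nonneg hσ]
      · rw [abs_sub_comm]; exact hxy 2
    nlinarith [hbig, hBD, hsD]
  · show |((1 - p) * sigma * x 2 - gA t * x 3) - ((1 - p) * sigma * y 2 - gA t * y 3)| ≤ _
    have e : ((1 - p) * sigma * x 2 - gA t * x 3) - ((1 - p) * sigma * y 2 - gA t * y 3)
      = (((1-p)*sigma) * x 2 - ((1-p)*sigma) * y 2) + (gA t * y 3 - gA t * x 3) := by ring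
    rw [e]
    refine (abs_add_le _ _).trans ?_
    have h1 : |((1-p)*sigma) * x 2 - ((1-p)*sigma) * y 2| ≤ sigma * D := by
      refine est1 (k := (1-p)*sigma) ?_ (hxy 2) hD
      rw [abs_of_nonneg (by nlinarith)]; nlinarith
    have h2 : |gA t * y 3 - gA t * x 3| ≤ B * D := est1 hgA (by rw [abs_sub_comm]; exact hxy 3) hD
    nlinarith [hbig, hBD, hsD]
  · show |(p * sigma * x 2 - (gM t + aS t) * x 4) - (p * sigma * y 2 - (gM t + aS t) * y 4)| ≤ _
    have e : (p * sigma * x 2 - (gM t + aS t) * x 4) - (p * sigma * y 2 - (gM t + aS t) * y 4)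
      = ((p*sigma) * x 2 - (p*sigma) * y 2) + ((gM t + aS t) * y 4 - (gM t + aS t) * x 4) := by ring
    rw [e]
    refine (abs_add_le _ _).trans ?_
    have h1 : |(p*sigma) * x 2 - (p*sigma) * y 2| ≤ sigma * D := by
      refine est1 (k := p*sigma) ?_ (hxy 2) hD
      rw [abs_of_nonneg (by positivity)]; nlinarith
    have h2 : |(gM t + aS t) * y 4 - (gM t + aS t) * x 4| ≤ (2*B) * D := by
      refine est1 ((abs_add_le _ _).trans (by nlinarith)) (by rw [abs_sub_comm]; exact hxy 4) hD
    nlinarith [hbig, hBD, hsD]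
  · show |(aS t * x 4 - (gS t + aC t) * x 5) - (aS t * y 4 - (gS t + aC t) * y 5)| ≤ _
    have e : (aS t * x 4 - (gS t + aC t) * x 5) - (aS t * y 4 - (gS t + aC t) * y 5)
      = (aS t * x 4 - aS t * y 4) + ((gS t + aC t) * y 5 - (gS t + aC t) * x 5) := by ring
    rw [e]
    refine (abs_add_le _ _).trans ?_
    have h1 : |aS t * x 4 - aS t * y 4| ≤ B * D := est1 haS (hxy 4) hD
    have h2 : |(gS t + aC t) * y 5 - (gS t + aC t) * x 5| ≤ (2*B) * D :=
      est1 ((abs_add_le _ _).trans (by nlinarith)) (by rw [abs_sub_comm]; exact hxy 5) hD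
    nlinarith [hbig, hBD, hsD]
  · show |(aC t * x 5 - (gC t + dD t) * x 6) - (aC t * y 5 - (gC t + dD t) * y 6)| ≤ _
    have e : (aC t * x 5 - (gC t + dD t) * x 6) - (aC t * y 5 - (gC t + dD t) * y 6)
      = (aC t * x 5 - aC t * y 5) + ((gC t + dD t) * y 6 - (gC t + dD t) * x 6) := by ring
    rw [e]
    refine (abs_add_le _ _).trans ?_
    have h1 : |aC t * x 5 - aC t * y 5| ≤ B * D := est1 haC (hxy 5) hD
    have h2 : |(gC t + dD t) * y 6 - (gC t + dD t) * x 6| ≤ (2*B) * D :=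
      est1 ((abs_add_le _ _).trans (by nlinarith)) (by rw [abs_sub_comm]; exact hxy 6) hD
    nlinarith [hbig, hBD, hsD]
  · show |(gA t * x 3 + gM t * x 4 + gS t * x 5 + gC t * x 6)
      - (gA t * y 3 + gM t * y 4 + gS t * y 5 + gC t * y 6)| ≤ _
    have e : (gA t * x 3 + gM t * x 4 + gS t * x 5 + gC t * x 6)
      - (gA t * y 3 + gM t * y 4 + gS t * y 5 + gC t * y 6)
      = ((gA t * x 3 - gA t * y 3) + (gM t * x 4 - gM t * y 4))
        + ((gS t * x 5 - gS t * y 5) + (gC t * x 6 - gC t * y 6)) := by ring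
    rw [e]
    refine (abs_add_le _ _).trans ?_
    have h1 := (abs_add_le (gA t * x 3 - gA t * y 3) (gM t * x 4 - gM t * y 4)).trans
      (add_le_add (est1 hgA (hxy 3) hD) (est1 hgM (hxy 4) hD))
    have h2 := (abs_add_le (gS t * x 5 - gS t * y 5) (gC t * x 6 - gC t * y 6)).trans
      (add_le_add (est1 hgS (hxy 5) hD) (est1 hgC (hxy 6) hD))
    nlinarith [hbig, hBD, hsD]
  · show |dD t * x 6 - dD t * y 6| ≤ _
    have h2 : |dD t * x 6 - dD t * y 6| ≤ B * D := est1 hdD (hxy 6) hD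
    nlinarith [hbig, hBD, hsD]

open Set

/-- extend a function on `[0,∞)` to `ℝ` by `f (max t 0)`. -/
noncomputable def ext0 (f : ℝ → ℝ) : ℝ → ℝ := fun t => f (max t 0)

lemma ext0_eq (f : ℝ → ℝ) {t : ℝ} (ht : 0 ≤ t) : ext0 f t = f t := by
  simp [ext0, max_eq_left ht]

lemma ext0_cont {f : ℝ → ℝ} (hf : ContinuousOn f (Ici 0)) : Continuous (ext0 f) :=
  hf.comp_continuous (continuous_id.max continuous_const) (fun x => le_max_right x 0)

lemma ext0_pos {f : ℝ → ℝ} (hf : ∀ s ∈ Ici (0:ℝ), 0 < f s) (t : ℝ) : 0 < ext0 f t :=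
  hf _ (le_max_right t 0)

lemma ext0_le {f : ℝ → ℝ} {M : ℝ} (hf : ∀ s ∈ Ici (0:ℝ), f s ≤ M) (t : ℝ) : ext0 f t ≤ M :=
  hf _ (le_max_right t 0)

lemma seirRHS_ext0_eq (a b c sigma p : ℝ) (beta nu gA gM gS gC aS aC dD : ℝ → ℝ)
    {t : ℝ} (ht : 0 ≤ t) (x : Fin 9 → ℝ) :
    seirRHS a b c sigma p (ext0 beta) (ext0 nu) (ext0 gA) (ext0 gM) (ext0 gS) (ext0 gC)
      (ext0 aS) (ext0 aC) (ext0 dD) t x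
    = seirRHS a b c sigma p beta nu gA gM gS gC aS aC dD t x := by
  unfold seirRHS
  rw [ext0_eq beta ht, ext0_eq nu ht, ext0_eq gA ht, ext0_eq gM ht, ext0_eq gS ht,
    ext0_eq gC ht, ext0_eq aS ht, ext0_eq aC ht, ext0_eq dD ht]

lemma abs_min_sub_min_le (hi u v : ℝ) : |min hi u - min hi v| ≤ |u - v| := by
  rcases le_total u hi with h1 | h1 <;> rcases le_total v hi with h2 | h2
  · rw [min_eq_right h1, min_eq_right h2]
  · rw [min_eq_right h1, min_eq_left h2, abs_of_nonpos (by linarith), abs_of_nonpos (by linarith)]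
    linarith
  · rw [min_eq_left h1, min_eq_right h2, abs_of_nonneg (by linarith), abs_of_nonneg (by linarith)]
    linarith
  · rw [min_eq_left h1, min_eq_left h2]; simp [abs_nonneg]
  
lemma clamp_sub_le (lo hi u v : ℝ) :
    |max lo (min hi u) - max lo (min hi v)| ≤ |u - v| := by
  calc |max lo (min hi u) - max lo (min hi v)|
      = |max (min hi u) lo - max (min hi v) lo| := by rw [max_comm lo, max_comm lo]
    _ ≤ |min hi u - min hi v| := abs_max_sub_max_le_abs _ _ _
    _ ≤ |u - v| := abs_min_sub_min_le hi u v

lemma clamp_mem {lo hi : ℝ} (h : lo ≤ hi) (u : ℝ) :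
    lo ≤ max lo (min hi u) ∧ max lo (min hi u) ≤ hi :=
  ⟨le_max_left _ _, max_le h (min_le_left _ _)⟩

lemma clamp_eq {lo hi u : ℝ} (h1 : lo ≤ u) (h2 : u ≤ hi) : max lo (min hi u) = u := by
  rw [min_eq_right h2, max_eq_right h1]

lemma clamp_eq_lo {lo hi u : ℝ} (h1 : u ≤ lo) (h2 : lo ≤ hi) : max lo (min hi u) = lo := by
  rcases le_total u hi with h | h
  · rw [min_eq_right h, max_eq_left h1]
  · have : hi = lo := le_antisymm (le_trans h h1) h2
    rw [min_eq_left h, this, max_self]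


lemma seir_zero (a b c sigma p : ℝ) (beta nu gA gM gS gC aS aC dD : ℝ → ℝ) (t : ℝ) (i : Fin 9) :
    seirRHS a b c sigma p beta nu gA gM gS gC aS aC dD t (fun _ => 0) i = 0 := by
  fin_cases i
  · show -(0:ℝ) * beta t * (c * 0 + 0 + a * 0 + b * 0) - nu t * 0 = 0; ring
  · show nu t * 0 = 0; ring
  · show (0:ℝ) * beta t * (c * 0 + 0 + a * 0 + b * 0) - sigma * 0 = 0; ring
  · show (1 - p) * sigma * 0 - gA t * 0 = 0; ring
  · show p * sigma * 0 - (gM t + aS t) * 0 = 0; ring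
  · show aS t * 0 - (gS t + aC t) * 0 = 0; ring
  · show aC t * 0 - (gC t + dD t) * 0 = 0; ring
  · show gA t * 0 + gM t * 0 + gS t * 0 + gC t * 0 = 0; ring
  · show dD t * 0 = 0; ring

lemma seir_sum_zero (a b c sigma p : ℝ) (beta nu gA gM gS gC aS aC dD : ℝ → ℝ) (t : ℝ)
    (x : Fin 9 → ℝ) :
    ∑ i, seirRHS a b c sigma p beta nu gA gM gS gC aS aC dD t x i = 0 := by
  simp [seirRHS, Fin.sum_univ_succ]; ring

set_option maxHeartbeats 1000000 in
lemma seir_quasipos (a b c sigma p : ℝ) (ha : 0 ≤ a) (hb : 0 ≤ b) (hc : 0 ≤ c)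
    (hσ : 0 ≤ sigma) (hp0 : 0 ≤ p) (hp1 : p ≤ 1)
    (beta nu gA gM gS gC aS aC dD : ℝ → ℝ) (t : ℝ)
    (hβ : 0 ≤ beta t) (hν : 0 ≤ nu t) (hgA : 0 ≤ gA t) (hgM : 0 ≤ gM t)
    (hgS : 0 ≤ gS t) (hgC : 0 ≤ gC t) (haS : 0 ≤ aS t) (haC : 0 ≤ aC t) (hdD : 0 ≤ dD t)
    (x : Fin 9 → ℝ) (hx : ∀ i, 0 ≤ x i) :
    ∀ i, x i = 0 → 0 ≤ seirRHS a b c sigma p beta nu gA gM gS gC aS aC dD t x i := by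
  have hP : 0 ≤ c * x 3 + x 4 + a * x 5 + b * x 6 :=
    add_nonneg (add_nonneg (add_nonneg (mul_nonneg hc (hx 3)) (hx 4))
      (mul_nonneg ha (hx 5))) (mul_nonneg hb (hx 6))
  intro i
  fin_cases i <;> intro h
  · show 0 ≤ -(x 0) * beta t * (c * x 3 + x 4 + a * x 5 + b * x 6) - nu t * x 0
    rw [show x 0 = 0 from h]; simp
  · show 0 ≤ nu t * x 0
    exact mul_nonneg hν (hx 0)
  · show 0 ≤ x 0 * beta t * (c * x 3 + x 4 + a * x 5 + b * x 6) - sigma * x 2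
    rw [show x 2 = 0 from h, mul_zero, sub_zero]
    exact mul_nonneg (mul_nonneg (hx 0) hβ) hP
  · show 0 ≤ (1 - p) * sigma * x 2 - gA t * x 3
    rw [show x 3 = 0 from h, mul_zero, sub_zero]
    exact mul_nonneg (mul_nonneg (by linarith) hσ) (hx 2)
  · show 0 ≤ p * sigma * x 2 - (gM t + aS t) * x 4
    rw [show x 4 = 0 from h, mul_zero, sub_zero]
    exact mul_nonneg (mul_nonneg hp0 hσ) (hx 2)
  · show 0 ≤ aS t * x 4 - (gS t + aC t) * x 5
    rw [show x 5 = 0 from h, mul_zero, sub_zero]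
    exact mul_nonneg haS (hx 4)
  · show 0 ≤ aC t * x 5 - (gC t + dD t) * x 6
    rw [show x 6 = 0 from h, mul_zero, sub_zero]
    exact mul_nonneg haC (hx 5)
  · show 0 ≤ gA t * x 3 + gM t * x 4 + gS t * x 5 + gC t * x 6
    exact add_nonneg (add_nonneg (add_nonneg (mul_nonneg hgA (hx 3)) (mul_nonneg hgM (hx 4)))
      (mul_nonneg hgS (hx 5))) (mul_nonneg hgC (hx 6))
  · show 0 ≤ dD t * x 6
    exact mul_nonneg hdD (hx 6)

lemma monoAux {φ φd : ℝ → ℝ} {aa bb : ℝ} (haa : 0 ≤ aa)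
    (hφ : ∀ t ∈ Ici (0:ℝ), HasDerivWithinAt φ (φd t) (Ici 0) t)
    (hd : ∀ x ∈ Ioo aa bb, 0 ≤ φd x) : MonotoneOn φ (Icc aa bb) := by
  have hsub : Icc aa bb ⊆ Ici (0:ℝ) := fun x hx => le_trans haa hx.1
  apply monotoneOn_of_deriv_nonneg (convex_Icc aa bb)
  · exact fun t ht => ((hφ t (hsub ht)).continuousWithinAt).mono hsub
  · rw [interior_Icc]
    intro x hx
    have hx0 : (0:ℝ) < x := lt_of_le_of_lt haa hx.1
    exact (((hφ x (le_of_lt hx0)).hasDerivAt (Ici_mem_nhds hx0)).differentiableAt).differentiableWithinAt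
  · rw [interior_Icc]
    intro x hx
    have hx0 : (0:ℝ) < x := lt_of_le_of_lt haa hx.1
    rw [((hφ x (le_of_lt hx0)).hasDerivAt (Ici_mem_nhds hx0)).deriv]
    exact hd x hx

lemma nonnegAux {g d : ℝ → ℝ}
    (hg : ∀ t ∈ Ici (0:ℝ), HasDerivWithinAt g (d t) (Ici 0) t)
    (h0 : 0 ≤ g 0) (hq : ∀ t ∈ Ici (0:ℝ), g t ≤ 0 → 0 ≤ d t) :
    ∀ t ∈ Ici (0:ℝ), 0 ≤ g t := by
  intro t₁ ht₁
  by_contra hneg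
  push_neg at hneg
  have hgc : ContinuousOn g (Ici 0) := fun s hs => (hg s hs).continuousWithinAt
  have hSne : (Icc 0 t₁ ∩ g ⁻¹' (Ici 0)).Nonempty := ⟨0, ⟨le_refl (0:ℝ), ht₁⟩, h0⟩
  have hScl : IsClosed (Icc 0 t₁ ∩ g ⁻¹' (Ici 0)) :=
    (hgc.mono Icc_subset_Ici_self).preimage_isClosed_of_isClosed isClosed_Icc isClosed_Ici
  have hSbdd : BddAbove (Icc 0 t₁ ∩ g ⁻¹' (Ici 0)) := ⟨t₁, fun x hx => hx.1.2⟩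
  set s := sSup (Icc 0 t₁ ∩ g ⁻¹' (Ici 0)) with hsdef
  have hsS : s ∈ Icc 0 t₁ ∩ g ⁻¹' (Ici 0) := hScl.csSup_mem hSne hSbdd
  have hgs : 0 ≤ g s := hsS.2
  have hs0 : 0 ≤ s := hsS.1.1
  have hst : s ≤ t₁ := hsS.1.2
  have hslt : s < t₁ := lt_of_le_of_ne hst (fun h => by rw [h] at hgs; linarith)
  have hneg' : ∀ x ∈ Ioo s t₁, g x ≤ 0 := by
    intro x hx
    by_contra hgx
    push_neg at hgx
    have hmem : x ∈ Icc 0 t₁ ∩ g ⁻¹' (Ici 0) :=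
      ⟨⟨le_trans hs0 hx.1.le, hx.2.le⟩, hgx.le⟩
    exact absurd (le_csSup hSbdd hmem) (not_le.2 hx.1)
  have hmono : MonotoneOn g (Icc s t₁) :=
    monoAux hs0 hg (fun x hx => hq x (le_trans hs0 hx.1.le) (hneg' x hx))
  have := hmono ⟨le_refl s, hst⟩ ⟨hst, le_refl t₁⟩ hst
  linarith

lemma posAux {g d : ℝ → ℝ} {K : ℝ} (hK : 0 ≤ K)
    (hg : ∀ t ∈ Ici (0:ℝ), HasDerivWithinAt g (d t) (Ici 0) t)
    (h0 : 0 < g 0) (hlow : ∀ t ∈ Ici (0:ℝ), -(K * g t) ≤ d t) :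
    ∀ t ∈ Ici (0:ℝ), 0 < g t := by
  have hφd : ∀ t ∈ Ici (0:ℝ),
      HasDerivWithinAt (fun s => g s * Real.exp (K * s))
        (d t * Real.exp (K * t) + g t * (Real.exp (K * t) * K)) (Ici 0) t := by
    intro t ht
    have hexp : HasDerivAt (fun s : ℝ => Real.exp (K * s)) (Real.exp (K * t) * K) t := by
      exact (by simpa using (Real.hasDerivAt_exp (K * t)).comp t ((hasDerivAt_id t).const_mul K) :
        HasDerivAt (Real.exp ∘ HMul.hMul K) (Real.exp (K * t) * K) t)
    exact (hg t ht).mul hexp.hasDerivWithinAt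
  have hdpos : ∀ x ∈ Ioi (0:ℝ), 0 ≤ d x * Real.exp (K * x) + g x * (Real.exp (K * x) * K) := by
    intro x hx
    have h1 : 0 ≤ (d x + K * g x) * Real.exp (K * x) :=
      mul_nonneg (by linarith [hlow x (mem_Ici.2 (le_of_lt hx))]) (Real.exp_pos _).le
    nlinarith [h1]
  intro T hT
  rcases eq_or_lt_of_le (mem_Ici.1 hT) with h | h
  · rw [← h]; exact h0
  · have hmono : MonotoneOn (fun s => g s * Real.exp (K * s)) (Icc 0 T) :=
      monoAux le_rfl hφd (fun x hx => hdpos x hx.1)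
    have hle := hmono ⟨le_refl (0:ℝ), hT⟩ ⟨hT, le_refl T⟩ hT
    simp only [mul_zero, Real.exp_zero, mul_one] at hle
    nlinarith [Real.exp_pos (K * T), hle]


set_option maxHeartbeats 4000000 in
/-- with continuous, strictly positive and bounded parameters on `[0,∞)`,
the SEIR initial value problem has exactly one solution on `[0,∞)`, and it is nonnegative. -/
theorem seir_global_existence_uniqueness_nonneg_Ici
    (a b c sigma p : ℝ) (ha : 0 < a) (hb : 0 < b) (hc : 0 < c)
    (hsigma : 0 < sigma) (hp0 : 0 < p) (hp1 : p < 1)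
    (beta nu gA gM gS gC aS aC dD : ℝ → ℝ)
    (hcont : ∀ f ∈ [beta, nu, gA, gM, gS, gC, aS, aC, dD], ContinuousOn f (Ici 0))
    (hpos : ∀ f ∈ [beta, nu, gA, gM, gS, gC, aS, aC, dD], ∀ t ∈ Ici (0:ℝ), 0 < f t)
    (hbdd : ∀ f ∈ [beta, nu, gA, gM, gS, gC, aS, aC, dD], ∃ M : ℝ, ∀ t ∈ Ici (0:ℝ), f t ≤ M)
    (x₀ : Fin 9 → ℝ) (hx₀ : ∀ i, 0 ≤ x₀ i) (hx₀1 : 0 < x₀ 0) (hx₀3 : 0 < x₀ 2) :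
    ∃ u : ℝ → Fin 9 → ℝ,
      IsSEIRSolOn a b c sigma p beta nu gA gM gS gC aS aC dD x₀ u (Ici 0) ∧
      (∀ v : ℝ → Fin 9 → ℝ,
        IsSEIRSolOn a b c sigma p beta nu gA gM gS gC aS aC dD x₀ v (Ici 0) →
        ∀ t ∈ Ici (0:ℝ), v t = u t) ∧
      (∀ t ∈ Ici (0:ℝ), 0 < u t 0) ∧ (∀ t ∈ Ici (0:ℝ), 0 < u t 2) ∧
      (∀ i ∈ ({1, 3, 4, 5, 6, 7, 8} : Set (Fin 9)), ∀ t ∈ Ici (0:ℝ), 0 ≤ u t i) := by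
  classical
  obtain ⟨Mβ, hMβ⟩ := hbdd beta (by simp)
  obtain ⟨Mν, hMν⟩ := hbdd nu (by simp)
  obtain ⟨MA, hMA⟩ := hbdd gA (by simp)
  obtain ⟨MM, hMM⟩ := hbdd gM (by simp)
  obtain ⟨MS, hMS⟩ := hbdd gS (by simp)
  obtain ⟨MC, hMC⟩ := hbdd gC (by simp)
  obtain ⟨MaS, hMaS⟩ := hbdd aS (by simp)
  obtain ⟨MaC, hMaC⟩ := hbdd aC (by simp)
  obtain ⟨MdD, hMdD⟩ := hbdd dD (by simp)
  have hpβ := hpos beta (by simp)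
  have hpν := hpos nu (by simp)
  have hpA := hpos gA (by simp)
  have hpM := hpos gM (by simp)
  have hpS := hpos gS (by simp)
  have hpC := hpos gC (by simp)
  have hpaS := hpos aS (by simp)
  have hpaC := hpos aC (by simp)
  have hpdD := hpos dD (by simp)
  have hcβ := ext0_cont (hcont beta (by simp))
  have hcν := ext0_cont (hcont nu (by simp))
  have hcA := ext0_cont (hcont gA (by simp))
  have hcM := ext0_cont (hcont gM (by simp))
  have hcS := ext0_cont (hcont gS (by simp))
  have hcC := ext0_cont (hcont gC (by simp))
  have hcaS := ext0_cont (hcont aS (by simp))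
  have hcaC := ext0_cont (hcont aC (by simp))
  have hcdD := ext0_cont (hcont dD (by simp))
  set B : ℝ := max Mβ (max Mν (max MA (max MM (max MS (max MC (max MaS (max MaC MdD)))))))
    with hBdef
  have habs : ∀ (f : ℝ → ℝ) (M : ℝ), (∀ s ∈ Ici (0:ℝ), 0 < f s) →
      (∀ s ∈ Ici (0:ℝ), f s ≤ M) → M ≤ B → ∀ t : ℝ, |ext0 f t| ≤ B := by
    intro f M h1 h2 h3 t
    rw [abs_of_pos (ext0_pos h1 t)]
    exact le_trans (ext0_le h2 t) h3
  have hMβB : Mβ ≤ B := le_max_left _ _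
  have hMνB : Mν ≤ B := le_max_of_le_right (le_max_left _ _)
  have hMAB : MA ≤ B := le_max_of_le_right (le_max_of_le_right (le_max_left _ _))
  have hMMB : MM ≤ B := le_max_of_le_right (le_max_of_le_right (le_max_of_le_right (le_max_left _ _)))
  have hMSB : MS ≤ B := le_max_of_le_right (le_max_of_le_right (le_max_of_le_right (le_max_of_le_right (le_max_left _ _))))
  have hMCB : MC ≤ B := le_max_of_le_right (le_max_of_le_right (le_max_of_le_right (le_max_of_le_right (le_max_of_le_right (le_max_left _ _)))))
  have hMaSB : MaS ≤ B := le_max_of_le_right (le_max_of_le_right (le_max_of_le_right (le_max_of_le_right (le_max_of_le_right (le_max_of_le_right (le_max_left _ _))))))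
  have hMaCB : MaC ≤ B := le_max_of_le_right (le_max_of_le_right (le_max_of_le_right (le_max_of_le_right (le_max_of_le_right (le_max_of_le_right (le_max_of_le_right (le_max_left _ _)))))))
  have hMdDB : MdD ≤ B := le_max_of_le_right (le_max_of_le_right (le_max_of_le_right (le_max_of_le_right (le_max_of_le_right (le_max_of_le_right (le_max_of_le_right (le_max_right _ _)))))))
  have hβB := habs beta Mβ hpβ hMβ hMβB
  have hνB := habs nu Mν hpν hMν hMνB
  have hAB := habs gA MA hpA hMA hMAB
  have hMB := habs gM MM hpM hMM hMMB
  have hSB := habs gS MS hpS hMS hMSB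
  have hCB := habs gC MC hpC hMC hMCB
  have haSB := habs aS MaS hpaS hMaS hMaSB
  have haCB := habs aC MaC hpaC hMaC hMaCB
  have hdDB := habs dD MdD hpdD hMdD hMdDB
  have hB0 : 0 ≤ B := (abs_nonneg _).trans (hβB 0)
  have hN0 : 0 ≤ ∑ i, x₀ i := Finset.sum_nonneg fun i _ => hx₀ i
  set R : ℝ := (∑ i, x₀ i) + 1 with hRdef
  have hR0 : 0 ≤ R := by rw [hRdef]; linarith
  set L : ℝ := 2*B*(c+1+a+b)*R + 4*B + sigma with hLdef
  have hQ0 : (0:ℝ) ≤ c+1+a+b := by linarith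
  have hL0 : 0 ≤ L := by
    have h1 : (0:ℝ) ≤ 2*B*(c+1+a+b)*R := mul_nonneg (mul_nonneg (by linarith) hQ0) hR0
    rw [hLdef]; linarith
  have hcliplem : ∀ (lo hi ρ : ℝ), 0 ≤ ρ → -ρ ≤ lo → hi ≤ ρ → lo ≤ hi → ∀ t : ℝ,
      LipschitzWith ((2*B*(c+1+a+b)*ρ + 4*B + sigma).toNNReal)
        (fun x : Fin 9 → ℝ => seirRHS a b c sigma p (ext0 beta) (ext0 nu) (ext0 gA) (ext0 gM)
          (ext0 gS) (ext0 gC) (ext0 aS) (ext0 aC) (ext0 dD) t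
          fun i => max lo (min hi (x i))) := by
    intro lo hi ρ hρ0 hlo hhi hlh t
    have hL0' : (0:ℝ) ≤ 2*B*(c+1+a+b)*ρ + 4*B + sigma := by
      have h1 : (0:ℝ) ≤ 2*B*(c+1+a+b)*ρ := mul_nonneg (mul_nonneg (by linarith) hQ0) hρ0
      linarith
    apply LipschitzWith.of_dist_le_mul
    intro x y
    rw [Real.coe_toNNReal _ hL0']
    refine (dist_pi_le_iff (mul_nonneg hL0' dist_nonneg)).2 fun i => ?_
    rw [Real.dist_eq]
    refine seir_lip_core a b c sigma p ha.le hb.le hc.le hsigma.le hp0.le hp1.le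
      (ext0 beta) (ext0 nu) (ext0 gA) (ext0 gM) (ext0 gS) (ext0 gC) (ext0 aS) (ext0 aC) (ext0 dD)
      t B ρ (dist x y) (hβB t) (hνB t) (hAB t) (hMB t) (hSB t) (hCB t) (haSB t) (haCB t) (hdDB t)
      _ _ (fun j => ?_) (fun j => ?_) (fun j => ?_) dist_nonneg i
    · obtain ⟨h1, h2⟩ := clamp_mem hlh (x j)
      rw [abs_le]; exact ⟨by linarith, by linarith⟩
    · obtain ⟨h1, h2⟩ := clamp_mem hlh (y j)
      rw [abs_le]; exact ⟨by linarith, by linarith⟩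
    · exact (clamp_sub_le lo hi (x j) (y j)).trans
        (by rw [← Real.dist_eq]; exact dist_le_pi_dist x y j)
  set F : ℝ → (Fin 9 → ℝ) → (Fin 9 → ℝ) := fun t x =>
    seirRHS a b c sigma p (ext0 beta) (ext0 nu) (ext0 gA) (ext0 gM) (ext0 gS) (ext0 gC)
      (ext0 aS) (ext0 aC) (ext0 dD) t (fun i => max 0 (min R (x i))) with hFdef
  have hFlip : ∀ t : ℝ, LipschitzWith (L.toNNReal) (F t) := by
    intro t
    have h := hcliplem 0 R R hR0 (by linarith) le_rfl hR0 t
    rw [← hLdef] at h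
    exact h
  have hFnorm : ∀ (t : ℝ) (x : Fin 9 → ℝ), ‖F t x‖ ≤ L * R := by
    intro t x
    refine (pi_norm_le_iff_of_nonneg (mul_nonneg hL0 hR0)).2 fun i => ?_
    rw [Real.norm_eq_abs]
    have hcl : ∀ j : Fin 9, |max 0 (min R (x j))| ≤ R := fun j => by
      obtain ⟨h1, h2⟩ := clamp_mem hR0 (x j)
      rw [abs_le]; exact ⟨by linarith, h2⟩
    have hcore := seir_lip_core a b c sigma p ha.le hb.le hc.le hsigma.le hp0.le hp1.le
      (ext0 beta) (ext0 nu) (ext0 gA) (ext0 gM) (ext0 gS) (ext0 gC) (ext0 aS) (ext0 aC) (ext0 dD)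
      t B R R (hβB t) (hνB t) (hAB t) (hMB t) (hSB t) (hCB t) (haSB t) (haCB t) (hdDB t)
      (fun j => max 0 (min R (x j))) (fun _ => 0)
      hcl (fun j => by simpa using hR0) (fun j => by simpa using hcl j) hR0 i
    rw [seir_zero a b c sigma p (ext0 beta) (ext0 nu) (ext0 gA) (ext0 gM) (ext0 gS) (ext0 gC)
      (ext0 aS) (ext0 aC) (ext0 dD) t i, sub_zero, ← hLdef] at hcore
    exact hcore
  have hFcont : ∀ x : Fin 9 → ℝ, Continuous fun t => F t x := by
    intro x
    show Continuous fun t => seirRHS a b c sigma p (ext0 beta) (ext0 nu) (ext0 gA) (ext0 gM)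
      (ext0 gS) (ext0 gC) (ext0 aS) (ext0 aC) (ext0 dD) t (fun i => max 0 (min R (x i)))
    set z : Fin 9 → ℝ := fun i => max 0 (min R (x i)) with hzdef
    apply continuous_pi
    intro i
    fin_cases i
    · show Continuous fun t => -(z 0) * ext0 beta t * (c * z 3 + z 4 + a * z 5 + b * z 6)
        - ext0 nu t * z 0
      exact ((continuous_const.mul hcβ).mul continuous_const).sub (hcν.mul continuous_const)
    · show Continuous fun t => ext0 nu t * z 0
      exact hcν.mul continuous_const
    · show Continuous fun t => z 0 * ext0 beta t * (c * z 3 + z 4 + a * z 5 + b * z 6)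
        - sigma * z 2
      exact ((continuous_const.mul hcβ).mul continuous_const).sub continuous_const
    · show Continuous fun t => (1 - p) * sigma * z 2 - ext0 gA t * z 3
      exact continuous_const.sub (hcA.mul continuous_const)
    · show Continuous fun t => p * sigma * z 2 - (ext0 gM t + ext0 aS t) * z 4
      exact continuous_const.sub ((hcM.add hcaS).mul continuous_const)
    · show Continuous fun t => ext0 aS t * z 4 - (ext0 gS t + ext0 aC t) * z 5
      exact (hcaS.mul continuous_const).sub ((hcS.add hcaC).mul continuous_const)
    · show Continuous fun t => ext0 aC t * z 5 - (ext0 gC t + ext0 dD t) * z 6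
      exact (hcaC.mul continuous_const).sub ((hcC.add hcdD).mul continuous_const)
    · show Continuous fun t => ext0 gA t * z 3 + ext0 gM t * z 4 + ext0 gS t * z 5
        + ext0 gC t * z 6
      exact (((hcA.mul continuous_const).add (hcM.mul continuous_const)).add
        (hcS.mul continuous_const)).add (hcC.mul continuous_const)
    · show Continuous fun t => ext0 dD t * z 6
      exact hcdD.mul continuous_const
  have hexn : ∀ n : ℕ, ∃ f : ℝ → Fin 9 → ℝ, f 0 = x₀ ∧
      ∀ t ∈ Icc (0:ℝ) (n:ℝ), HasDerivWithinAt f (F t (f t)) (Icc (0:ℝ) (n:ℝ)) t := by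
    intro n
    have h1 : (0:ℝ) ≤ L * R * n := mul_nonneg (mul_nonneg hL0 hR0) (Nat.cast_nonneg n)
    have hPL : IsPicardLindelof F (tmin := 0) (tmax := (n:ℝ))
        ⟨0, le_refl (0:ℝ), Nat.cast_nonneg n⟩ x₀
        (L * R * n).toNNReal 0 (L * R).toNNReal L.toNNReal := by
      constructor
      · exact fun t _ => (hFlip t).lipschitzOnWith
      · exact fun x _ => (hFcont x).continuousOn
      · intro t _ x _
        rw [Real.coe_toNNReal _ (mul_nonneg hL0 hR0)]
        exact hFnorm t x
      · have h2 : max ((n:ℝ) - 0) (0 - 0) = (n:ℝ) := by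
          rw [sub_zero, sub_zero]
          exact max_eq_left (Nat.cast_nonneg n)
        simp only [NNReal.coe_zero, sub_zero, Real.coe_toNNReal _ h1,
          Real.coe_toNNReal _ (mul_nonneg hL0 hR0)]
        rw [max_eq_left (Nat.cast_nonneg n)]
    exact hPL.exists_eq_forall_mem_Icc_hasDerivWithinAt₀
  choose sol hsol0 hsolD using hexn
  have agree : ∀ (m n : ℕ) (x : ℝ), x ∈ Icc (0:ℝ) (m:ℝ) → x ∈ Icc (0:ℝ) (n:ℝ) →
      sol m x = sol n x := by
    intro m n x hxm hxn
    have hT : x ∈ Icc (0:ℝ) (min (m:ℝ) (n:ℝ)) := ⟨hxm.1, le_min hxm.2 hxn.2⟩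
    have key : ∀ k : ℕ, min (m:ℝ) (n:ℝ) ≤ (k:ℝ) →
        ContinuousOn (sol k) (Icc 0 (min (m:ℝ) (n:ℝ))) ∧
        ∀ t ∈ Ico (0:ℝ) (min (m:ℝ) (n:ℝ)),
          HasDerivWithinAt (sol k) (F t (sol k t)) (Ici t) t := by
      intro k hk
      constructor
      · intro s hs
        exact ((hsolD k s ⟨hs.1, le_trans hs.2 hk⟩).continuousWithinAt).mono
          (fun y hy => ⟨hy.1, le_trans hy.2 hk⟩)
      · intro t htI
        exact (hsolD k t ⟨htI.1, le_trans htI.2.le hk⟩).mono_of_mem_nhdsWithin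
          (Icc_mem_nhdsGE_of_mem ⟨htI.1, lt_of_lt_of_le htI.2 hk⟩)
    have h1 := key m (min_le_left _ _)
    have h2 := key n (min_le_right _ _)
    exact ODE_solution_unique_of_mem_Icc_right (v := F) (s := fun _ => univ)
      (K := L.toNNReal) (fun t _ => (hFlip t).lipschitzOnWith)
      h1.1 h1.2 (fun t _ => mem_univ _)
      h2.1 h2.2 (fun t _ => mem_univ _)
      (by rw [hsol0 m, hsol0 n]) hT
  set u : ℝ → Fin 9 → ℝ := fun t => sol (⌊t⌋₊ + 1) t with hudef
  have hu0 : u 0 = x₀ := by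
    show sol (⌊(0:ℝ)⌋₊ + 1) 0 = x₀
    rw [Nat.floor_zero]
    exact hsol0 1
  have hmemIcc : ∀ t : ℝ, 0 ≤ t → t ∈ Icc (0:ℝ) ((⌊t⌋₊ + 1 : ℕ) : ℝ) := by
    intro t ht
    refine ⟨ht, ?_⟩
    push_cast
    exact (Nat.lt_floor_add_one t).le
  have hu : ∀ t ∈ Ici (0:ℝ), HasDerivWithinAt u (F t (u t)) (Ici 0) t := by
    intro t ht
    set n : ℕ := ⌊t⌋₊ + 1 with hndef
    have htn : t < (n:ℝ) := by rw [hndef]; push_cast; exact Nat.lt_floor_add_one t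
    have hd := hsolD n t ⟨ht, htn.le⟩
    have hmem : Icc (0:ℝ) (n:ℝ) ∈ nhdsWithin t (Ici (0:ℝ)) :=
      mem_nhdsWithin.2 ⟨Iio (n:ℝ), isOpen_Iio, htn, fun y hy => ⟨hy.2, hy.1.le⟩⟩
    have hd' := hd.mono_of_mem_nhdsWithin hmem
    have heq : ∀ y ∈ Iio (n:ℝ) ∩ Ici (0:ℝ), u y = sol n y := by
      intro y hy
      exact agree (⌊y⌋₊ + 1) n y (hmemIcc y hy.2) ⟨hy.2, hy.1.le⟩
    have hueq : u t = sol n t := heq t ⟨htn, ht⟩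
    rw [← hueq] at hd'
    apply hd'.congr_of_eventuallyEq ?_ hueq
    filter_upwards [mem_nhdsWithin.2 ⟨Iio (n:ℝ), isOpen_Iio, htn,
      fun y hy => hy⟩] with y hy
    exact heq y hy
  have hnn : ∀ (i : Fin 9), ∀ t ∈ Ici (0:ℝ), 0 ≤ u t i := by
    intro i
    refine nonnegAux (g := fun s => u s i) (d := fun s => F s (u s) i)
      (fun t ht => hasDerivWithinAt_pi.1 (hu t ht) i) ?_ ?_
    · show 0 ≤ u 0 i
      rw [hu0]; exact hx₀ i
    · intro t ht hle
      refine seir_quasipos a b c sigma p ha.le hb.le hc.le hsigma.le hp0.le hp1.le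
        (ext0 beta) (ext0 nu) (ext0 gA) (ext0 gM) (ext0 gS) (ext0 gC) (ext0 aS) (ext0 aC)
        (ext0 dD) t (ext0_pos hpβ t).le (ext0_pos hpν t).le (ext0_pos hpA t).le
        (ext0_pos hpM t).le (ext0_pos hpS t).le (ext0_pos hpC t).le (ext0_pos hpaS t).le
        (ext0_pos hpaC t).le (ext0_pos hpdD t).le
        (fun j => max 0 (min R (u t j))) (fun j => (clamp_mem hR0 (u t j)).1) i ?_
      show max 0 (min R (u t i)) = 0
      exact clamp_eq_lo hle hR0
  have hdsum0 : ∀ s ∈ Ici (0:ℝ), HasDerivWithinAt (fun y => ∑ i, u y i) 0 (Ici 0) s := by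
    intro s hs
    have h1 : HasDerivWithinAt (fun y => ∑ i, u y i) (∑ i, F s (u s) i) (Ici 0) s :=
      HasDerivWithinAt.fun_sum (fun i _ => hasDerivWithinAt_pi.1 (hu s hs) i)
    have h0 : (∑ i, F s (u s) i) = 0 :=
      seir_sum_zero a b c sigma p (ext0 beta) (ext0 nu) (ext0 gA) (ext0 gM) (ext0 gS)
        (ext0 gC) (ext0 aS) (ext0 aC) (ext0 dD) s (fun i => max 0 (min R (u s i)))
    rwa [h0] at h1
  have hmass : ∀ t ∈ Ici (0:ℝ), ∑ i, u t i = ∑ i, x₀ i := by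
    intro T hT
    have hcs : ContinuousOn (fun s => ∑ i, u s i) (Icc 0 T) :=
      fun s hs => ((hdsum0 s hs.1).continuousWithinAt).mono Icc_subset_Ici_self
    have hconst := constant_of_has_deriv_right_zero hcs
      (fun x hx => (hdsum0 x hx.1).mono (Ici_subset_Ici.2 hx.1)) T ⟨hT, le_refl T⟩
    rw [hconst, hu0]
  have hub : ∀ t ∈ Ici (0:ℝ), ∀ i, u t i ≤ R := by
    intro t ht i
    have h1 : u t i ≤ ∑ j, u t j :=
      Finset.single_le_sum (fun j _ => hnn j t ht) (Finset.mem_univ i)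
    rw [hmass t ht] at h1
    rw [hRdef]
    linarith
  have hclamp : ∀ t ∈ Ici (0:ℝ), (fun i => max 0 (min R (u t i))) = u t := by
    intro t ht
    funext i
    exact clamp_eq (hnn i t ht) (hub t ht i)
  have hu' : ∀ t ∈ Ici (0:ℝ), HasDerivWithinAt u
      (seirRHS a b c sigma p beta nu gA gM gS gC aS aC dD t (u t)) (Ici 0) t := by
    intro t ht
    have h1 := hu t ht
    have hFu : F t (u t) = seirRHS a b c sigma p beta nu gA gM gS gC aS aC dD t (u t) := by
      show seirRHS a b c sigma p (ext0 beta) (ext0 nu) (ext0 gA) (ext0 gM) (ext0 gS) (ext0 gC)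
        (ext0 aS) (ext0 aC) (ext0 dD) t (fun i => max 0 (min R (u t i))) = _
      rw [hclamp t ht]
      exact seirRHS_ext0_eq a b c sigma p beta nu gA gM gS gC aS aC dD ht (u t)
    rwa [hFu] at h1
  refine ⟨u, ⟨hu0, fun i t ht => hasDerivWithinAt_pi.1 (hu' t ht) i⟩, ?_, ?_, ?_, ?_⟩
  · -- uniqueness
    intro v hv t₁ ht₁
    have hvd : ∀ s ∈ Ici (0:ℝ), HasDerivWithinAt v
        (seirRHS a b c sigma p beta nu gA gM gS gC aS aC dD s (v s)) (Ici 0) s :=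
      fun s hs => hasDerivWithinAt_pi.2 (fun i => hv.2 i s hs)
    have hvc : ContinuousOn v (Icc 0 t₁) :=
      fun s hs => ((hvd s hs.1).continuousWithinAt).mono Icc_subset_Ici_self
    have huc : ContinuousOn u (Icc 0 t₁) :=
      fun s hs => ((hu s hs.1).continuousWithinAt).mono Icc_subset_Ici_self
    obtain ⟨ρ₁, hρ₁⟩ := isCompact_Icc.exists_bound_of_continuousOn hvc
    obtain ⟨ρ₂, hρ₂⟩ := isCompact_Icc.exists_bound_of_continuousOn huc
    set ρ : ℝ := max 1 (max ρ₁ ρ₂) with hρdef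
    have hρ0 : (0:ℝ) ≤ ρ := le_trans zero_le_one (le_max_left _ _)
    have hvρ : ∀ s ∈ Icc (0:ℝ) t₁, ∀ i, |v s i| ≤ ρ := by
      intro s hs i
      calc |v s i| = ‖v s i‖ := (Real.norm_eq_abs _).symm
        _ ≤ ‖v s‖ := norm_le_pi_norm (v s) i
        _ ≤ ρ₁ := hρ₁ s hs
        _ ≤ ρ := le_max_of_le_right (le_max_left _ _)
    have huρ : ∀ s ∈ Icc (0:ℝ) t₁, ∀ i, |u s i| ≤ ρ := by
      intro s hs i
      calc |u s i| = ‖u s i‖ := (Real.norm_eq_abs _).symm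
        _ ≤ ‖u s‖ := norm_le_pi_norm (u s) i
        _ ≤ ρ₂ := hρ₂ s hs
        _ ≤ ρ := le_max_of_le_right (le_max_right _ _)
    set G : ℝ → (Fin 9 → ℝ) → (Fin 9 → ℝ) := fun s x =>
      seirRHS a b c sigma p (ext0 beta) (ext0 nu) (ext0 gA) (ext0 gM) (ext0 gS) (ext0 gC)
        (ext0 aS) (ext0 aC) (ext0 dD) s (fun i => max (-ρ) (min ρ (x i))) with hGdef
    have hGlip : ∀ s : ℝ, LipschitzWith ((2*B*(c+1+a+b)*ρ + 4*B + sigma).toNNReal) (G s) :=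
      fun s => hcliplem (-ρ) ρ ρ hρ0 le_rfl le_rfl (by linarith) s
    have hGeq : ∀ (s : ℝ), 0 ≤ s → ∀ z : Fin 9 → ℝ, (∀ i, |z i| ≤ ρ) →
        G s z = seirRHS a b c sigma p beta nu gA gM gS gC aS aC dD s z := by
      intro s hs z hz
      show seirRHS a b c sigma p (ext0 beta) (ext0 nu) (ext0 gA) (ext0 gM) (ext0 gS) (ext0 gC)
        (ext0 aS) (ext0 aC) (ext0 dD) s (fun i => max (-ρ) (min ρ (z i))) = _
      have hzz : (fun i => max (-ρ) (min ρ (z i))) = z := by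
        funext i
        obtain ⟨h1, h2⟩ := abs_le.1 (hz i)
        exact clamp_eq h1 h2
      rw [hzz]
      exact seirRHS_ext0_eq a b c sigma p beta nu gA gM gS gC aS aC dD hs z
    have hv' : ∀ s ∈ Ico (0:ℝ) t₁, HasDerivWithinAt v (G s (v s)) (Ici s) s := by
      intro s hs
      have h2 := (hvd s hs.1).mono (Ici_subset_Ici.2 hs.1)
      rwa [← hGeq s hs.1 (v s) (fun i => hvρ s ⟨hs.1, hs.2.le⟩ i)] at h2
    have hu'' : ∀ s ∈ Ico (0:ℝ) t₁, HasDerivWithinAt u (G s (u s)) (Ici s) s := by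
      intro s hs
      have h2 := (hu' s hs.1).mono (Ici_subset_Ici.2 hs.1)
      rwa [← hGeq s hs.1 (u s) (fun i => huρ s ⟨hs.1, hs.2.le⟩ i)] at h2
    exact ODE_solution_unique_of_mem_Icc_right (v := G) (s := fun _ => univ)
      (fun s _ => (hGlip s).lipschitzOnWith)
      hvc hv' (fun t _ => mem_univ _) huc hu'' (fun t _ => mem_univ _)
      (by rw [hv.1, hu0]) ⟨ht₁, le_refl t₁⟩
  · -- positivity of coordinate 0
    have hK0 : (0:ℝ) ≤ B * ((c+1+a+b) * R) + B :=
      add_nonneg (mul_nonneg hB0 (mul_nonneg hQ0 hR0)) hB0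
    refine posAux (K := B * ((c+1+a+b) * R) + B) hK0 (g := fun s => u s 0)
      (d := fun s => seirRHS a b c sigma p beta nu gA gM gS gC aS aC dD s (u s) 0)
      (fun t ht => hasDerivWithinAt_pi.1 (hu' t ht) 0) (by show 0 < u 0 0; rw [hu0]; exact hx₀1) ?_
    intro t ht
    show -((B * ((c+1+a+b) * R) + B) * u t 0) ≤
      -(u t 0) * beta t * (c * u t 3 + u t 4 + a * u t 5 + b * u t 6) - nu t * u t 0
    have hβ1 : 0 ≤ beta t := (hpβ t ht).le
    have hβ2 : beta t ≤ B := le_trans (hMβ t ht) hMβB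
    have hν1 : 0 ≤ nu t := (hpν t ht).le
    have hν2 : nu t ≤ B := le_trans (hMν t ht) hMνB
    have h3 := hnn 3 t ht
    have h4 := hnn 4 t ht
    have h5 := hnn 5 t ht
    have h6 := hnn 6 t ht
    have h3' := hub t ht 3
    have h4' := hub t ht 4
    have h5' := hub t ht 5
    have h6' := hub t ht 6
    have h0' := hnn 0 t ht
    have hP1 : 0 ≤ c * u t 3 + u t 4 + a * u t 5 + b * u t 6 :=
      add_nonneg (add_nonneg (add_nonneg (mul_nonneg hc.le h3) h4) (mul_nonneg ha.le h5))
        (mul_nonneg hb.le h6)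
    have hP2 : c * u t 3 + u t 4 + a * u t 5 + b * u t 6 ≤ (c+1+a+b) * R := by
      nlinarith [mul_le_mul_of_nonneg_left h3' hc.le, mul_le_mul_of_nonneg_left h5' ha.le,
        mul_le_mul_of_nonneg_left h6' hb.le]
    have hsum : beta t * (c * u t 3 + u t 4 + a * u t 5 + b * u t 6) + nu t
        ≤ B * ((c+1+a+b) * R) + B := by
      have hmm := mul_le_mul hβ2 hP2 hP1 hB0
      linarith
    have hmul := mul_le_mul_of_nonneg_right hsum h0'
    nlinarith [hmul]
  · -- positivity of coordinate 2
    refine posAux (K := sigma) hsigma.le (g := fun s => u s 2)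
      (d := fun s => seirRHS a b c sigma p beta nu gA gM gS gC aS aC dD s (u s) 2)
      (fun t ht => hasDerivWithinAt_pi.1 (hu' t ht) 2) (by show 0 < u 0 2; rw [hu0]; exact hx₀3) ?_
    intro t ht
    show -(sigma * u t 2) ≤
      u t 0 * beta t * (c * u t 3 + u t 4 + a * u t 5 + b * u t 6) - sigma * u t 2
    have hP1 : 0 ≤ c * u t 3 + u t 4 + a * u t 5 + b * u t 6 :=
      add_nonneg (add_nonneg (add_nonneg (mul_nonneg hc.le (hnn 3 t ht)) (hnn 4 t ht))
        (mul_nonneg ha.le (hnn 5 t ht))) (mul_nonneg hb.le (hnn 6 t ht))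
    have h1 : 0 ≤ u t 0 * beta t * (c * u t 3 + u t 4 + a * u t 5 + b * u t 6) :=
      mul_nonneg (mul_nonneg (hnn 0 t ht) (hpβ t ht).le) hP1
    linarith
  · intro i _ t ht
    exact hnn i t ht
end

section
/- Let λ > 0 and let β, β̂ : [0,T] → ℝ be continuous with β(t) ≥ λ and β̂(t) ≥ λ for all t. If a single C¹ function u : [0,T] → ℝ⁹ is simultaneously a solution of the SEIR-like system with transmission parameter β and a solution with transmission parameter β̂ (with the same other parameter functions and the same initial condition x₀), then β(t) = β̂(t) for all t ∈ [0,T]. In other words, the parameter-to-solution map β ↦ u is injective. -/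
/-!
Comparing the two expressions for `x₁'` gives `(β - β̂) x₁ (c x₄ + x₅ + a x₆ + b x₇) = 0`, so it
suffices to show that `x₁` and the infectious load `c x₄ + x₅ + a x₆ + b x₇` are positive on
`(0, T]`; continuity then carries `β = β̂` over to `t = 0`.

`x₁` solves the scalar linear equation `x₁' = k x₁`, so `x₁²` cannot reach zero. With `x₁ > 0`
frozen into the coefficients, the infected compartments `y = (x₃, …, x₇)` solve a linear system
`y' = M(t) y` whose matrix has nonnegative off-diagonal entries; for such a system the squared
negative part `F = ∑ min(yᵢ, 0)²` satisfies `F' ≤ K F` and `F(0) = 0`, hence `y ≥ 0`. Then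
`x₃' + σ x₃ ≥ 0` keeps `x₃` positive, and `x₄' + K x₄ = (1 - p) σ x₃ + (K - γ_A) x₄ > 0` for
`K ≥ γ_A` makes `e^{K t} x₄` strictly increasing, so `x₄ > 0` for `t > 0`.
-/

open Set Filter MeasureTheory

open Real Matrix

theorem hasDerivAt_min_zero_sq (x : ℝ) :
    HasDerivAt (fun y : ℝ => min y 0 ^ 2) (2 * min x 0) x := by
  rw [hasDerivAt_iff_isLittleO]
  -- the first-order remainder is at most `(y - x)²`
  refine Asymptotics.IsBigO.trans_isLittleO (g := fun y => ‖y - x‖ ^ 2) ?_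
    (Asymptotics.isLittleO_pow_sub_sub x one_lt_two)
  refine Asymptotics.IsBigO.of_bound 1 (Eventually.of_forall fun y => ?_)
  simp only [smul_eq_mul, Real.norm_eq_abs, sq_abs, one_mul, abs_pow]
  rw [abs_le]
  constructor <;>
  rcases le_total y 0 with hy | hy <;> rcases le_total x 0 with hx | hx <;>
    simp only [min_eq_left, min_eq_right, hx, hy] <;> nlinarith

section LinearComparison

variable {f f' : ℝ → ℝ} {a b K : ℝ}

theorem hasDerivWithinAt_exp_mul_mul {s : Set ℝ} {t d : ℝ} (hf : HasDerivWithinAt f d s t) :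
    HasDerivWithinAt (fun t => exp (K * t) * f t) (exp (K * t) * (d + K * f t)) s t := by
  have hexp := ((hasDerivAt_id' t).const_mul K).exp.hasDerivWithinAt (s := s)
  exact (hexp.fun_mul hf).congr_deriv (by ring)

theorem monotoneOn_exp_mul_mul (hf : ∀ t ∈ Icc a b, HasDerivWithinAt f (f' t) (Icc a b) t)
    (h : ∀ t ∈ Ioo a b, 0 ≤ f' t + K * f t) :
    MonotoneOn (fun t => exp (K * t) * f t) (Icc a b) := by
  have hd := fun t ht => hasDerivWithinAt_exp_mul_mul (K := K) (hf t ht)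
  refine monotoneOn_of_hasDerivWithinAt_nonneg (convex_Icc a b)
    (fun t ht => (hd t ht).continuousWithinAt) (fun t ht => ?_) (fun t ht => ?_)
    (f' := fun t => exp (K * t) * (f' t + K * f t))
  · rw [interior_Icc] at ht ⊢
    exact (hd t (Ioo_subset_Icc_self ht)).mono Ioo_subset_Icc_self
  · rw [interior_Icc] at ht
    exact mul_nonneg (exp_pos _).le (h t ht)

theorem strictMonoOn_exp_mul_mul (hf : ∀ t ∈ Icc a b, HasDerivWithinAt f (f' t) (Icc a b) t)
    (h : ∀ t ∈ Ioo a b, 0 < f' t + K * f t) :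
    StrictMonoOn (fun t => exp (K * t) * f t) (Icc a b) := by
  have hd := fun t ht => hasDerivWithinAt_exp_mul_mul (K := K) (hf t ht)
  refine strictMonoOn_of_hasDerivWithinAt_pos (convex_Icc a b)
    (fun t ht => (hd t ht).continuousWithinAt) (fun t ht => ?_) (fun t ht => ?_)
    (f' := fun t => exp (K * t) * (f' t + K * f t))
  · rw [interior_Icc] at ht ⊢
    exact (hd t (Ioo_subset_Icc_self ht)).mono Ioo_subset_Icc_self
  · rw [interior_Icc] at ht
    exact mul_pos (exp_pos _) (h t ht)

theorem pos_of_hasDerivWithinAt_linear {k : ℝ → ℝ} (hk : ContinuousOn k (Icc a b))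
    (hf : ∀ t ∈ Icc a b, HasDerivWithinAt f (k t * f t) (Icc a b) t) (ha : 0 < f a) :
    ∀ t ∈ Icc a b, 0 < f t := by
  obtain ⟨B, hB⟩ := isCompact_Icc.exists_bound_of_continuousOn hk
  have hsq : ∀ t ∈ Icc a b, HasDerivWithinAt (fun s => f s ^ 2) (2 * k t * f t ^ 2) (Icc a b) t :=
    fun t ht => ((hf t ht).fun_pow 2).congr_deriv (by ring)
  have hmono := monotoneOn_exp_mul_mul (K := 2 * B) hsq fun t ht => by
    have := (abs_le.1 ((Real.norm_eq_abs _).symm.trans_le (hB t (Ioo_subset_Icc_self ht)))).1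
    nlinarith [sq_nonneg (f t)]
  have hne : ∀ t ∈ Icc a b, f t ≠ 0 := by
    intro t ht h0
    have := hmono (left_mem_Icc.2 (ht.1.trans ht.2)) ht ht.1
    simp only [h0, ne_eq, OfNat.ofNat_ne_zero, not_false_eq_true, zero_pow, mul_zero] at this
    exact (mul_pos (exp_pos _) (pow_pos ha 2)).not_ge this
  intro t ht
  by_contra! hft
  obtain ⟨s, hs, hs0⟩ := intermediate_value_Icc' ht.1
    (fun s hs =>
      ((hf s ⟨hs.1, hs.2.trans ht.2⟩).mono (Icc_subset_Icc_right ht.2)).continuousWithinAt)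
    ⟨hft, ha.le⟩
  exact hne s ⟨hs.1, hs.2.trans ht.2⟩ hs0

theorem sum_min_zero_mul_mulVec_le {ι : Type*} [Fintype ι] {M : Matrix ι ι ℝ} {B : ℝ}
    (hoff : ∀ i j, i ≠ j → 0 ≤ M i j) (hB : ∀ i j, |M i j| ≤ B) (y : ι → ℝ) :
    ∑ i, min (y i) 0 * (M *ᵥ y) i ≤ B * Fintype.card ι * ∑ i, min (y i) 0 ^ 2 := by
  set m := fun i => min (y i) 0
  -- off the diagonal `M i j ≥ 0` and `m i ≤ 0`, so `y j` may be replaced by the smaller `m j`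
  have hcoop : ∀ i j, M i j * (m i * y j) ≤ M i j * (m i * m j) := by
    intro i j
    rcases eq_or_ne i j with rfl | hij
    · rcases le_total (y i) 0 with h | h <;> simp [m, h]
    · exact mul_le_mul_of_nonneg_left
        (mul_le_mul_of_nonpos_left (min_le_left _ _) (min_le_right _ _)) (hoff i j hij)
  have hbound : ∀ i j, M i j * (m i * m j) ≤ B * ((m i ^ 2 + m j ^ 2) / 2) := by
    intro i j
    have hamgm := two_mul_le_add_sq |m i| |m j|
    rw [sq_abs, sq_abs] at hamgm
    calc M i j * (m i * m j) ≤ |M i j| * |m i * m j| := by rw [← abs_mul]; exact le_abs_self _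
      _ ≤ B * ((m i ^ 2 + m j ^ 2) / 2) :=
        mul_le_mul (hB i j) (by rw [abs_mul]; linarith) (abs_nonneg _)
          ((abs_nonneg _).trans (hB i j))
  calc ∑ i, m i * (M *ᵥ y) i = ∑ i, ∑ j, M i j * (m i * y j) := by
        simp only [Matrix.mulVec, dotProduct, Finset.mul_sum]
        exact Finset.sum_congr rfl fun i _ => Finset.sum_congr rfl fun j _ => by ring
    _ ≤ ∑ i, ∑ j, B * ((m i ^ 2 + m j ^ 2) / 2) :=
        Finset.sum_le_sum fun i _ => Finset.sum_le_sum fun j _ => (hcoop i j).trans (hbound i j)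
    _ = B * Fintype.card ι * ∑ i, m i ^ 2 := by
        simp only [← Finset.mul_sum, add_div, Finset.sum_add_distrib, Finset.sum_const,
          Finset.card_univ, nsmul_eq_mul, ← Finset.sum_div]
        ring

theorem nonneg_of_hasDerivWithinAt_mulVec {ι : Type*} [Fintype ι] {y : ℝ → ι → ℝ}
    {M : ℝ → Matrix ι ι ℝ} (hM : ∀ i j, ContinuousOn (fun t => M t i j) (Icc a b))
    (hoff : ∀ t ∈ Icc a b, ∀ i j, i ≠ j → 0 ≤ M t i j)
    (hy : ∀ i, ∀ t ∈ Icc a b, HasDerivWithinAt (fun s => y s i) ((M t *ᵥ y t) i) (Icc a b) t)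
    (hya : 0 ≤ y a) : ∀ t ∈ Icc a b, 0 ≤ y t := by
  obtain ⟨B, hB⟩ := isCompact_Icc.exists_bound_of_continuousOn (f := fun t i j => M t i j)
    (continuousOn_pi.2 fun i => continuousOn_pi.2 (hM i))
  have hMB : ∀ t ∈ Icc a b, ∀ i j, |M t i j| ≤ B := fun t ht i j =>
    ((norm_le_pi_norm (M t i) j).trans (norm_le_pi_norm (fun i j => M t i j) i)).trans (hB t ht)
  set F := fun t => ∑ i, min (y t i) 0 ^ 2
  have hF : ∀ t ∈ Icc a b, HasDerivWithinAt (fun t => -F t)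
      (-∑ i, 2 * min (y t i) 0 * (M t *ᵥ y t) i) (Icc a b) t := fun t ht =>
    (HasDerivWithinAt.fun_sum fun i _ =>
      (hasDerivAt_min_zero_sq _).comp_hasDerivWithinAt t (hy i t ht)).neg
  -- Grönwall: `F' ≤ 2 B n F`, so `e^{-2 B n t} F` is antitone, and it vanishes at `t = a`
  have hmono := monotoneOn_exp_mul_mul (K := -(2 * B * Fintype.card ι)) hF fun t ht => by
    have := sum_min_zero_mul_mulVec_le (hoff t (Ioo_subset_Icc_self ht))
      (hMB t (Ioo_subset_Icc_self ht)) (y t)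
    simp only [mul_assoc, ← Finset.mul_sum, F] at this ⊢
    linarith
  have hFa : F a = 0 := Finset.sum_eq_zero fun i _ => by simpa using hya i
  intro t ht i
  have hFt : F t ≤ 0 := by
    have := hmono (left_mem_Icc.2 (ht.1.trans ht.2)) ht ht.1
    simp only [hFa, neg_zero, mul_zero] at this
    exact neg_nonneg.1 (nonneg_of_mul_nonneg_right this (exp_pos _))
  have hmi := (Finset.sum_eq_zero_iff_of_nonneg (fun i _ => sq_nonneg _)).1
    (le_antisymm hFt (Finset.sum_nonneg fun i _ => sq_nonneg _)) i (Finset.mem_univ i)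
  exact min_eq_right_iff.1 (pow_eq_zero_iff two_ne_zero |>.1 hmi)

end LinearComparison

def infectedPart (x : Fin 9 → ℝ) : Fin 5 → ℝ := ![x 2, x 3, x 4, x 5, x 6]

/-- With the susceptible value `S = x₁` frozen into the coefficients, the infected compartments
`x₃, …, x₇` solve the linear system `y' = M y` for this matrix. -/
def infectedMatrix (a b c sigma p : ℝ) (beta gA gM gS gC aS aC dD : ℝ → ℝ) (t S : ℝ) :
    Matrix (Fin 5) (Fin 5) ℝ :=
  !![-sigma, S * beta t * c, S * beta t, S * beta t * a, S * beta t * b;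
     (1 - p) * sigma, -gA t, 0, 0, 0;
     p * sigma, 0, -(gM t + aS t), 0, 0;
     0, 0, aS t, -(gS t + aC t), 0;
     0, 0, 0, aC t, -(gC t + dD t)]

def infectiousLoad (a b c : ℝ) (x : Fin 9 → ℝ) : ℝ := c * x 3 + x 4 + a * x 5 + b * x 6

theorem infectiousLoad_nonneg {a b c : ℝ} {x : Fin 9 → ℝ} (ha : 0 ≤ a) (hb : 0 ≤ b)
    (hc : 0 ≤ c) (hx : 0 ≤ infectedPart x) : 0 ≤ infectiousLoad a b c x :=
  add_nonneg (add_nonneg (add_nonneg (mul_nonneg hc (hx 1)) (hx 2)) (mul_nonneg ha (hx 3)))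
    (mul_nonneg hb (hx 4))

theorem infectiousLoad_pos {a b c : ℝ} {x : Fin 9 → ℝ} (ha : 0 ≤ a) (hb : 0 ≤ b)
    (hc : 0 < c) (hx : 0 ≤ infectedPart x) (hx₃ : 0 < x 3) : 0 < infectiousLoad a b c x :=
  add_pos_of_pos_of_nonneg (add_pos_of_pos_of_nonneg (add_pos_of_pos_of_nonneg (mul_pos hc hx₃)
    (hx 2)) (mul_nonneg ha (hx 3))) (mul_nonneg hb (hx 4))

namespace IsSEIRSolOn

variable {a b c sigma p T : ℝ} {beta nu gA gM gS gC aS aC dD : ℝ → ℝ} {x₀ : Fin 9 → ℝ}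
  {u : ℝ → Fin 9 → ℝ} {J : Set ℝ}

theorem continuousOn_s12 (hu : IsSEIRSolOn a b c sigma p beta nu gA gM gS gC aS aC dD x₀ u J)
    (i : Fin 9) : ContinuousOn (fun s => u s i) J :=
  fun t ht => (hu.2 i t ht).continuousWithinAt

theorem hasDerivWithinAt_infectedPart
    (hu : IsSEIRSolOn a b c sigma p beta nu gA gM gS gC aS aC dD x₀ u J) (i : Fin 5) :
    ∀ t ∈ J, HasDerivWithinAt (fun s => infectedPart (u s) i)
      ((infectedMatrix a b c sigma p beta gA gM gS gC aS aC dD t (u t 0) *ᵥ infectedPart (u t)) i)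
      J t := by
  intro t ht
  fin_cases i <;>
  · refine (hu.2 _ t ht).congr_deriv ?_
    simp only [infectedPart, seirRHS, infectedMatrix, mulVec, dotProduct, Fin.sum_univ_five,
      of_apply, cons_val', cons_val, cons_val_zero, cons_val_one, cons_val_fin_one, Fin.isValue,
      Fin.mk_one, Fin.zero_eta, Fin.reduceFinMk]
    ring

theorem susceptible_pos
    (hu : IsSEIRSolOn a b c sigma p beta nu gA gM gS gC aS aC dD x₀ u (Icc 0 T))
    (hbeta : ContinuousOn beta (Icc 0 T)) (hnu : ContinuousOn nu (Icc 0 T)) (hx₀ : 0 < x₀ 0) :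
    ∀ t ∈ Icc 0 T, 0 < u t 0 := by
  refine pos_of_hasDerivWithinAt_linear
    (k := fun t => -(beta t * infectiousLoad a b c (u t) + nu t)) ?_
    (fun t ht => (hu.2 0 t ht).congr_deriv ?_) (hu.1 ▸ hx₀)
  · have := fun i => hu.continuousOn_s12 i
    simp only [infectiousLoad]
    fun_prop
  · simp only [seirRHS, cons_val_zero, infectiousLoad]
    ring

theorem infectedPart_nonneg
    (hu : IsSEIRSolOn a b c sigma p beta nu gA gM gS gC aS aC dD x₀ u (Icc 0 T))
    (ha : 0 ≤ a) (hb : 0 ≤ b) (hc : 0 ≤ c) (hsigma : 0 ≤ sigma) (hp0 : 0 ≤ p) (hp1 : p ≤ 1)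
    (hbeta : ContinuousOn beta (Icc 0 T))
    (hcont : ∀ f ∈ [gA, gM, gS, gC, aS, aC, dD], ContinuousOn f (Icc 0 T))
    (hbeta₀ : ∀ t ∈ Icc 0 T, 0 ≤ beta t) (haS : ∀ t ∈ Icc 0 T, 0 ≤ aS t)
    (haC : ∀ t ∈ Icc 0 T, 0 ≤ aC t) (hS : ∀ t ∈ Icc 0 T, 0 ≤ u t 0) (hx₀ : 0 ≤ x₀) :
    ∀ t ∈ Icc 0 T, 0 ≤ infectedPart (u t) := by
  refine nonneg_of_hasDerivWithinAt_mulVec (fun i j => ?_) (fun t ht i j hij => ?_)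
    hu.hasDerivWithinAt_infectedPart (hu.1 ▸ fun i => ?_)
  · have hS := hu.continuousOn_s12 0
    simp only [List.mem_cons, List.not_mem_nil, or_false, forall_eq_or_imp, forall_eq] at hcont
    obtain ⟨hgA, hgM, hgS, hgC, hcaS, hcaC, hdD⟩ := hcont
    fin_cases i <;> fin_cases j <;>
      simp only [infectedMatrix, of_apply, cons_val', cons_val, cons_val_zero, cons_val_one,
        cons_val_fin_one, Fin.isValue, Fin.mk_one, Fin.zero_eta, Fin.reduceFinMk] <;> fun_prop
  · have hSt := hS t ht
    have hbetat := hbeta₀ t ht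
    have haSt := haS t ht
    have haCt := haC t ht
    have hp1' : 0 ≤ 1 - p := sub_nonneg.2 hp1
    fin_cases i <;> fin_cases j <;>
      simp only [infectedMatrix, of_apply, cons_val', cons_val, cons_val_zero, cons_val_one,
        cons_val_fin_one, Fin.isValue, Fin.mk_one, Fin.zero_eta, Fin.reduceFinMk, ne_eq,
        not_true_eq_false] at hij ⊢ <;> bound
  · fin_cases i <;> exact hx₀ _

theorem exposed_pos
    (hu : IsSEIRSolOn a b c sigma p beta nu gA gM gS gC aS aC dD x₀ u (Icc 0 T))
    (hinflow : ∀ t ∈ Icc 0 T, 0 ≤ u t 0 * beta t * infectiousLoad a b c (u t))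
    (hx₀ : 0 < x₀ 2) : ∀ t ∈ Icc 0 T, 0 < u t 2 := by
  have hmono := monotoneOn_exp_mul_mul (K := sigma) (hu.2 2) fun t ht => by
    have := hinflow t (Ioo_subset_Icc_self ht)
    simpa only [seirRHS, infectiousLoad, cons_val, sub_add_cancel] using this
  intro t ht
  have := hmono (left_mem_Icc.2 (ht.1.trans ht.2)) ht ht.1
  simp only [hu.1, mul_zero, exp_zero, one_mul] at this
  exact pos_of_mul_pos_right (hx₀.trans_le this) (exp_pos _).le

theorem asymptomatic_pos
    (hu : IsSEIRSolOn a b c sigma p beta nu gA gM gS gC aS aC dD x₀ u (Icc 0 T))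
    (hsigma : 0 < sigma) (hp1 : p < 1) (hgA : ContinuousOn gA (Icc 0 T))
    (hE : ∀ t ∈ Icc 0 T, 0 < u t 2) (hA : ∀ t ∈ Icc 0 T, 0 ≤ u t 3) (hx₀ : 0 ≤ x₀ 3) :
    ∀ t ∈ Ioc 0 T, 0 < u t 3 := by
  obtain ⟨K, hK⟩ := isCompact_Icc.exists_bound_of_continuousOn hgA
  have hmono := strictMonoOn_exp_mul_mul (K := K) (hu.2 3) fun t ht => by
    have ht' := Ioo_subset_Icc_self ht
    have := (abs_le.1 (hK t ht')).2
    simp only [seirRHS, cons_val]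
    nlinarith [hE t ht', hA t ht', mul_pos (sub_pos.2 hp1) hsigma]
  intro t ht
  have := hmono (left_mem_Icc.2 (ht.1.le.trans ht.2)) (Ioc_subset_Icc_self ht) ht.1
  simp only [hu.1, mul_zero, exp_zero, one_mul] at this
  exact pos_of_mul_pos_right (hx₀.trans_lt this) (exp_pos _).le

theorem beta_eq_of_mul_ne_zero {betah : ℝ → ℝ}
    (hu : IsSEIRSolOn a b c sigma p beta nu gA gM gS gC aS aC dD x₀ u J)
    (hu' : IsSEIRSolOn a b c sigma p betah nu gA gM gS gC aS aC dD x₀ u J) {t : ℝ} (ht : t ∈ J)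
    (hJ : UniqueDiffWithinAt ℝ J t) (hne : u t 0 * infectiousLoad a b c (u t) ≠ 0) :
    beta t = betah t := by
  have := hJ.eq_deriv _ (hu.2 0 t ht) (hu'.2 0 t ht)
  simp only [seirRHS, Matrix.cons_val_zero] at this
  refine mul_right_cancel₀ hne ?_
  simp only [infectiousLoad]
  linear_combination -this

end IsSEIRSolOn

theorem seir_parameter_injective_general
    (T a b c sigma p : ℝ) (hT : 0 < T) (ha : 0 < a) (hb : 0 < b) (hc : 0 < c)
    (hsigma : 0 < sigma) (hp0 : 0 < p) (hp1 : p < 1)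
    (nu gA gM gS gC aS aC dD : ℝ → ℝ)
    (hcont : ∀ f ∈ [nu, gA, gM, gS, gC, aS, aC, dD], ContinuousOn f (Icc 0 T))
    (hpos : ∀ f ∈ [nu, gA, gM, gS, gC, aS, aC, dD], ∀ t ∈ Icc (0:ℝ) T, 0 < f t)
    (x₀ : Fin 9 → ℝ) (hx₀ : ∀ i, 0 ≤ x₀ i) (hx₀1 : 0 < x₀ 0) (hx₀3 : 0 < x₀ 2)
    (lam : ℝ) (hlam : 0 < lam) (beta betah : ℝ → ℝ)
    (hbeta : ContinuousOn beta (Icc 0 T)) (hbetah : ContinuousOn betah (Icc 0 T))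
    (hbetage : ∀ t ∈ Icc (0:ℝ) T, lam ≤ beta t)
    (u : ℝ → Fin 9 → ℝ)
    (hu : IsSEIRSolOn a b c sigma p beta nu gA gM gS gC aS aC dD x₀ u (Icc 0 T))
    (hu' : IsSEIRSolOn a b c sigma p betah nu gA gM gS gC aS aC dD x₀ u (Icc 0 T)) :
    ∀ t ∈ Icc (0:ℝ) T, beta t = betah t := by
  have hbeta₀ : ∀ t ∈ Icc 0 T, 0 ≤ beta t := fun t ht => hlam.le.trans (hbetage t ht)
  have hS := hu.susceptible_pos hbeta (hcont nu (by simp)) hx₀1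
  have hI := hu.infectedPart_nonneg ha.le hb.le hc.le hsigma.le hp0.le hp1.le
    hbeta (fun f hf => hcont f (.tail _ hf)) hbeta₀ (fun t ht => (hpos aS (by simp) t ht).le)
    (fun t ht => (hpos aC (by simp) t ht).le) (fun t ht => (hS t ht).le) hx₀
  have hE := hu.exposed_pos (fun t ht => mul_nonneg (mul_nonneg (hS t ht).le (hbeta₀ t ht))
    (infectiousLoad_nonneg ha.le hb.le hc.le (hI t ht))) hx₀3
  have hA := hu.asymptomatic_pos hsigma hp1 (hcont gA (by simp)) hE (fun t ht => hI t ht 1) (hx₀ 3)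
  refine EqOn.of_subset_closure (s := Ioc 0 T) (fun t ht => ?_) hbeta hbetah Ioc_subset_Icc_self
    (closure_Ioc hT.ne).ge
  have ht' := Ioc_subset_Icc_self ht
  refine hu.beta_eq_of_mul_ne_zero hu' ht' (uniqueDiffOn_Icc hT t ht') ?_
  exact (mul_pos (hS t ht') (infectiousLoad_pos ha.le hb.le hc (hI t ht') (hA t ht))).ne'

/-- the parameter-to-solution map is injective: if the same function `u` solves
the system for two transmission parameters `β, β̂ ≥ λ > 0`, then `β = β̂` on `[0,T]`. -/
theorem seir_parameter_injective
    (T a b c sigma p : ℝ) (hT : 0 < T) (ha : 0 < a) (hb : 0 < b) (hc : 0 < c)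
    (hsigma : 0 < sigma) (hp0 : 0 < p) (hp1 : p < 1)
    (nu gA gM gS gC aS aC dD : ℝ → ℝ)
    (hcont : ∀ f ∈ [nu, gA, gM, gS, gC, aS, aC, dD], ContinuousOn f (Icc 0 T))
    (hpos : ∀ f ∈ [nu, gA, gM, gS, gC, aS, aC, dD], ∀ t ∈ Icc (0:ℝ) T, 0 < f t)
    (x₀ : Fin 9 → ℝ) (hx₀ : ∀ i, 0 ≤ x₀ i) (hx₀1 : 0 < x₀ 0) (hx₀3 : 0 < x₀ 2)
    (lam : ℝ) (hlam : 0 < lam) (beta betah : ℝ → ℝ)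
    (hbeta : ContinuousOn beta (Icc 0 T)) (hbetah : ContinuousOn betah (Icc 0 T))
    (hbetage : ∀ t ∈ Icc (0:ℝ) T, lam ≤ beta t) (hbetahge : ∀ t ∈ Icc (0:ℝ) T, lam ≤ betah t)
    (u : ℝ → Fin 9 → ℝ)
    (hu : IsSEIRSolOn a b c sigma p beta nu gA gM gS gC aS aC dD x₀ u (Icc 0 T))
    (hu' : IsSEIRSolOn a b c sigma p betah nu gA gM gS gC aS aC dD x₀ u (Icc 0 T)) :
    ∀ t ∈ Icc (0:ℝ) T, beta t = betah t :=
  seir_parameter_injective_general T a b c sigma p hT ha hb hc hsigma hp0 hp1 nu gA gM gS gC aS aC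
    dD hcont hpos x₀ hx₀ hx₀1 hx₀3 lam hlam beta betah hbeta hbetah hbetage u hu hu'
end
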